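/- arXiv:1405.2805 — 7 statements merged into one kernel-verified Lean document; each statement's English description precedes it below -/
import Mathlib

section
/- Let p = (p_1,…,p_n) be a sequence of positive integers, let k = min_i p_i, and let A, B ⊆ S_p be cross-intersecting families. Then |A|·|B| ≤ |S_p|²/k². -/
set_option maxHeartbeats 1000000

open Finset

/-- Families `A`, `B` of vectors in `S_p = [p 0] × ⋯ × [p (n-1)]` (modelled as
`∀ i, Fin (p i)`) are `r`-cross-intersecting: every `x ∈ A` and `y ∈ B` agree in
at least `r` coordinates. -/
def CrossInt {n : ℕ} {p : Fin n → ℕ} (r : ℕ)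
    (A B : Finset (∀ i, Fin (p i))) : Prop :=
  ∀ x ∈ A, ∀ y ∈ B, r ≤ (univ.filter (fun i => x i = y i)).card


lemma card_le_prodInt {n : ℕ} (p : Fin n → ℕ) (A : Finset (∀ i, Fin (p i))) :
    A.card ≤ ∏ i, p i := by
  calc A.card ≤ Fintype.card (∀ i, Fin (p i)) := Finset.card_le_univ A
    _ = ∏ i, p i := by simp [Fintype.card_pi]

lemma lemA (κ N m u v X Y : ℤ) (hκ : 0 ≤ κ) (hm : 0 ≤ m) (hu : 0 ≤ u) (hv : 0 ≤ v)
    (huN : u ≤ N) (hvN : v ≤ N) (hX0 : 0 ≤ X) (hY0 : 0 ≤ Y)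
    (hXu : X ≤ m * u) (hYv : Y ≤ m * v)
    (h : κ ^ 2 * (u * v) ≤ (N - u) * (N - v)) :
    κ ^ 2 * (X * Y) ≤ (m * N - X) * (m * N - Y) := by
  have hmu : 0 ≤ m * u := mul_nonneg hm hu
  have hmuN : m * u ≤ m * N := mul_le_mul_of_nonneg_left huN hm
  have hmvN : m * v ≤ m * N := mul_le_mul_of_nonneg_left hvN hm
  have h1 : X * Y ≤ (m * u) * (m * v) := mul_le_mul hXu hYv hY0 hmu
  have h2 : (m * (N - u)) * (m * (N - v)) ≤ (m * N - X) * (m * N - Y) := by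
    apply mul_le_mul (by nlinarith) (by nlinarith) (by nlinarith) (by nlinarith)
  nlinarith [mul_le_mul_of_nonneg_left h1 (sq_nonneg κ), mul_le_mul_of_nonneg_left h (sq_nonneg m)]

lemma lemB (L M N u v X Y : ℤ) (hL : 1 ≤ L) (hM : 0 ≤ M) (hML : L ≤ M ^ 2)
    (hN : 1 ≤ N) (hu : 0 ≤ u) (huN : u ≤ N) (hv : 0 ≤ v) (hvN : v ≤ N)
    (hX0 : 0 ≤ X) (hY0 : 0 ≤ Y)
    (hs : (N - u) * (N - v) ≤ L * (u * v))
    (hX : X * (N + (L - 1) * v) ≤ u * (N + (L - 1) * v) + M * (N * (N - v)))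
    (hY : Y * (N + (L - 1) * u) ≤ v * (N + (L - 1) * u) + M * (N * (N - u))) :
    L * (X * Y) ≤ ((M + 1) * N - X) * ((M + 1) * N - Y) := by
  have hDv : (0:ℤ) < N + (L - 1) * v := by nlinarith
  have hDu : (0:ℤ) < N + (L - 1) * u := by nlinarith
  have hG1 : 0 ≤ (N - u) * (N + (L - 1) * v) + M * L * N * v := by
    have t1 : 0 ≤ (N - u) * (N + (L - 1) * v) := mul_nonneg (by linarith) hDv.le
    have t2 : 0 ≤ M * L * N * v := mul_nonneg (mul_nonneg (mul_nonneg hM (by linarith)) (by linarith)) hv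
    linarith
  have hG2 : 0 ≤ (N - v) * (N + (L - 1) * u) + M * L * N * u := by
    have t1 : 0 ≤ (N - v) * (N + (L - 1) * u) := mul_nonneg (by linarith) hDu.le
    have t2 : 0 ≤ M * L * N * u := mul_nonneg (mul_nonneg (mul_nonneg hM (by linarith)) (by linarith)) hu
    linarith
  have hstep2 : L * ((u * (N + (L - 1) * v) + M * (N * (N - v))) * (v * (N + (L - 1) * u) + M * (N * (N - u)))) ≤
      ((N - u) * (N + (L - 1) * v) + M * L * N * v) * ((N - v) * (N + (L - 1) * u) + M * L * N * u) := by
    have h1 : u * v ≤ N ^ 2 := by nlinarith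
    have t1 : 0 ≤ L * (M ^ 2 - L) * N ^ 2 :=
      mul_nonneg (mul_nonneg (by linarith) (by linarith)) (sq_nonneg N)
    have t2 : 0 ≤ L * (N ^ 2 - u * v) := mul_nonneg (by linarith) (by linarith)
    have t3 : 0 ≤ (N - u) * (N - v) + L * (N ^ 2 - u * v) := by
      have : 0 ≤ (N - u) * (N - v) := mul_nonneg (by linarith) (by linarith)
      linarith
    have hC : 0 ≤ L * (M ^ 2 - L) * N ^ 2 + (L - 1) * (L * (N ^ 2 - u * v) + (N - u) * (N - v)) := by
      have t4 : 0 ≤ (L - 1) * (L * (N ^ 2 - u * v) + (N - u) * (N - v)) := by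
        apply mul_nonneg (by linarith)
        have : 0 ≤ (N - u) * (N - v) := mul_nonneg (by linarith) (by linarith)
        linarith
      linarith
    have hσ : 0 ≤ L * (u * v) - (N - u) * (N - v) := by linarith
    have key : ((N - u) * (N + (L - 1) * v) + M * L * N * v) * ((N - v) * (N + (L - 1) * u) + M * L * N * u)
        - L * ((u * (N + (L - 1) * v) + M * (N * (N - v))) * (v * (N + (L - 1) * u) + M * (N * (N - u))))
        = (L * (u * v) - (N - u) * (N - v)) *
          (L * (M ^ 2 - L) * N ^ 2 + (L - 1) * (L * (N ^ 2 - u * v) + (N - u) * (N - v))) := by ring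
    have := mul_nonneg hσ hC
    linarith [key]
  have hXDv0 : 0 ≤ X * (N + (L - 1) * v) := mul_nonneg hX0 hDv.le
  have hYDu0 : 0 ≤ Y * (N + (L - 1) * u) := mul_nonneg hY0 hDu.le
  have hstep1 : (X * (N + (L - 1) * v)) * (Y * (N + (L - 1) * u)) ≤
      (u * (N + (L - 1) * v) + M * (N * (N - v))) * (v * (N + (L - 1) * u) + M * (N * (N - u))) :=
    mul_le_mul hX hY hYDu0 (le_trans hXDv0 hX)
  have hG1le : (N - u) * (N + (L - 1) * v) + M * L * N * v ≤ ((M + 1) * N - X) * (N + (L - 1) * v) := by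
    have e : ((M + 1) * N - X) * (N + (L - 1) * v) =
        (N - u) * (N + (L - 1) * v) + M * L * N * v +
        (u * (N + (L - 1) * v) + M * (N * (N - v)) - X * (N + (L - 1) * v)) := by ring
    linarith [hX, e]
  have hG2le : (N - v) * (N + (L - 1) * u) + M * L * N * u ≤ ((M + 1) * N - Y) * (N + (L - 1) * u) := by
    have e : ((M + 1) * N - Y) * (N + (L - 1) * u) =
        (N - v) * (N + (L - 1) * u) + M * L * N * u +
        (v * (N + (L - 1) * u) + M * (N * (N - u)) - Y * (N + (L - 1) * u)) := by ring
    linarith [hY, e]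
  have hprod : ((N - u) * (N + (L - 1) * v) + M * L * N * v) * ((N - v) * (N + (L - 1) * u) + M * L * N * u) ≤
      (((M + 1) * N - X) * (N + (L - 1) * v)) * (((M + 1) * N - Y) * (N + (L - 1) * u)) :=
    mul_le_mul hG1le hG2le hG2 (le_trans hG1 hG1le)
  have hfinal : (L * (X * Y)) * ((N + (L - 1) * v) * (N + (L - 1) * u)) ≤
      (((M + 1) * N - X) * ((M + 1) * N - Y)) * ((N + (L - 1) * v) * (N + (L - 1) * u)) := by
    calc (L * (X * Y)) * ((N + (L - 1) * v) * (N + (L - 1) * u))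
        = L * ((X * (N + (L - 1) * v)) * (Y * (N + (L - 1) * u))) := by ring
      _ ≤ L * ((u * (N + (L - 1) * v) + M * (N * (N - v))) * (v * (N + (L - 1) * u) + M * (N * (N - u)))) :=
          mul_le_mul_of_nonneg_left hstep1 (by linarith)
      _ ≤ ((N - u) * (N + (L - 1) * v) + M * L * N * v) * ((N - v) * (N + (L - 1) * u) + M * L * N * u) := hstep2
      _ ≤ (((M + 1) * N - X) * (N + (L - 1) * v)) * (((M + 1) * N - Y) * (N + (L - 1) * u)) := hprod
      _ = (((M + 1) * N - X) * ((M + 1) * N - Y)) * ((N + (L - 1) * v) * (N + (L - 1) * u)) := by ring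
  exact le_of_mul_le_mul_right hfinal (mul_pos hDv hDu)

lemma lemC (k a b N : ℝ) (hk : 1 ≤ k) (ha : 0 ≤ a) (hb : 0 ≤ b) (haN : a ≤ N) (hbN : b ≤ N)
    (h : (k - 1) ^ 2 * (a * b) ≤ (N - a) * (N - b)) : k ^ 2 * (a * b) ≤ N ^ 2 := by
  have hN : 0 ≤ N := le_trans ha haN
  set x := Real.sqrt (a * b) with hxdef
  have hx0 : 0 ≤ x := Real.sqrt_nonneg _
  have hx2 : x ^ 2 = a * b := Real.sq_sqrt (mul_nonneg ha hb)
  have hxs : x ≤ (a + b) / 2 := by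
    rw [hxdef]
    calc Real.sqrt (a * b) ≤ Real.sqrt (((a + b) / 2) ^ 2) :=
          Real.sqrt_le_sqrt (by nlinarith [sq_nonneg (a - b)])
      _ = (a + b) / 2 := Real.sqrt_sq (by linarith)
  have hxN : x ≤ N := by
    rw [hxdef]
    calc Real.sqrt (a * b) ≤ Real.sqrt (N ^ 2) := Real.sqrt_le_sqrt (by nlinarith)
      _ = N := Real.sqrt_sq hN
  have h5 : ((k - 1) * x) ^ 2 ≤ (N - x) ^ 2 := by nlinarith
  have h6 : (k - 1) * x ≤ N - x := le_of_pow_le_pow_left₀ two_ne_zero (by linarith) h5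
  have h7 : k * x ≤ N := by linarith
  have h8 : (k * x) ^ 2 ≤ N ^ 2 := by nlinarith [mul_nonneg (by linarith : (0:ℝ) ≤ k) hx0]
  nlinarith [h8, hx2]


lemma auxInd : ∀ (n : ℕ) (p : Fin n → ℕ), (∀ i, 1 ≤ p i) → ∀ (k : ℕ), 1 ≤ k → (∀ i, k ≤ p i) →
    ∀ (A B : Finset (∀ i, Fin (p i))), CrossInt 1 A B →
    ((k : ℤ) - 1) ^ 2 * ((A.card : ℤ) * (B.card : ℤ)) ≤
      ((∏ i, (p i : ℤ)) - A.card) * ((∏ i, (p i : ℤ)) - B.card) := by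
  intro n
  induction n with
  | zero =>
    intro p hp k hk1 hkle A B hAB
    have hA : A.card ≤ 1 := by
      have := Finset.card_le_univ A
      simpa using this
    have hB : B.card ≤ 1 := by
      have := Finset.card_le_univ B
      simpa using this
    have hA' : (A.card : ℤ) ≤ 1 := by exact_mod_cast hA
    have hB' : (B.card : ℤ) ≤ 1 := by exact_mod_cast hB
    simp only [univ_eq_empty, prod_empty]
    rcases A.eq_empty_or_nonempty with h | ⟨x, hx⟩
    · rw [h]; simp; nlinarith
    rcases B.eq_empty_or_nonempty with h | ⟨y, hy⟩
    · rw [h]; simp; nlinarith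
    · exfalso
      have h1 := hAB x hx y hy
      simp at h1
  | succ n ih =>
    intro p hp k hk1 hkle A B hAB
    classical
    -- slices
    set As : Fin (p 0) → Finset (∀ i : Fin n, Fin (p i.succ)) :=
      fun a => univ.filter (fun f => Fin.cons a f ∈ A) with hAs
    set Bs : Fin (p 0) → Finset (∀ i : Fin n, Fin (p i.succ)) :=
      fun a => univ.filter (fun f => Fin.cons a f ∈ B) with hBs
    -- card decomposition
    have cardSlice : ∀ (C : Finset (∀ i, Fin (p i))),
        C.card = ∑ a : Fin (p 0), (univ.filter (fun f : ∀ i : Fin n, Fin (p i.succ) => Fin.cons a f ∈ C)).card := by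
      intro C
      rw [Finset.card_eq_sum_card_fiberwise (f := fun x => x 0) (t := univ) (fun x _ => mem_univ _)]
      refine Finset.sum_congr rfl (fun a _ => ?_)
      refine Finset.card_bij' (fun x _ => Fin.tail x) (fun f _ => Fin.cons a f) ?_ ?_ ?_ ?_
      · intro x hx
        obtain ⟨hxC, hx0⟩ := Finset.mem_filter.1 hx
        subst hx0
        refine Finset.mem_filter.2 ⟨mem_univ _, ?_⟩
        rw [Fin.cons_self_tail]; exact hxC
      · intro f hf
        exact Finset.mem_filter.2 ⟨(Finset.mem_filter.1 hf).2, Fin.cons_zero _ _⟩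
      · intro x hx
        obtain ⟨hxC, hx0⟩ := Finset.mem_filter.1 hx
        subst hx0
        exact Fin.cons_self_tail x
      · intro f hf
        exact Fin.tail_cons (α := fun i => Fin (p i)) a f
    have cardA : (A.card : ℤ) = ∑ a : Fin (p 0), ((As a).card : ℤ) := by
      rw [cardSlice A]; push_cast; rfl
    have cardB : (B.card : ℤ) = ∑ a : Fin (p 0), ((Bs a).card : ℤ) := by
      rw [cardSlice B]; push_cast; rfl
    -- IH for slices
    have hIH : ∀ a b : Fin (p 0), a ≠ b →
        ((k : ℤ) - 1) ^ 2 * (((As a).card : ℤ) * ((Bs b).card : ℤ)) ≤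
          ((∏ i : Fin n, (p i.succ : ℤ)) - (As a).card) * ((∏ i : Fin n, (p i.succ : ℤ)) - (Bs b).card) := by
      intro a b hab
      refine ih (fun i => p i.succ) (fun i => hp _) k hk1 (fun i => hkle _) (As a) (Bs b) ?_
      intro f hf g hg
      have hfA : Fin.cons a f ∈ A := (Finset.mem_filter.1 hf).2
      have hgB : Fin.cons b g ∈ B := (Finset.mem_filter.1 hg).2
      have h1 := hAB _ hfA _ hgB
      obtain ⟨i, hi⟩ := Finset.card_pos.1 (lt_of_lt_of_le zero_lt_one h1)
      have hi' : (Fin.cons a f : ∀ i, Fin (p i)) i = (Fin.cons b g : ∀ i, Fin (p i)) i := (Finset.mem_filter.1 hi).2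
      refine Finset.card_pos.2 ?_
      rcases Fin.eq_zero_or_eq_succ i with rfl | ⟨j, rfl⟩
      · exfalso; apply hab; simpa using hi'
      · refine ⟨j, Finset.mem_filter.2 ⟨mem_univ _, ?_⟩⟩
        simpa using hi'
    -- numeric setup
    set N : ℤ := ∏ i : Fin n, (p i.succ : ℤ) with hN
    have hN1 : 1 ≤ N := by
      rw [hN]
      have h0 : 0 < ∏ i : Fin n, (p i.succ : ℤ) :=
        Finset.prod_pos (fun i _ => by exact_mod_cast hp i.succ)
      linarith
    have hprodsucc : (∏ i : Fin (n+1), (p i : ℤ)) = (p 0 : ℤ) * N := by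
      rw [hN, Fin.prod_univ_succ]
    have hSliceLe : ∀ a, ((As a).card : ℤ) ≤ N := by
      intro a
      rw [hN]
      have h1 : (As a).card ≤ ∏ i : Fin n, p i.succ := by
        calc (As a).card ≤ Fintype.card (∀ i : Fin n, Fin (p i.succ)) := Finset.card_le_univ _
          _ = ∏ i : Fin n, p i.succ := by simp [Fintype.card_pi]
      calc ((As a).card : ℤ) ≤ ((∏ i : Fin n, p i.succ : ℕ) : ℤ) := by exact_mod_cast h1
        _ = ∏ i : Fin n, (p i.succ : ℤ) := by push_cast; rfl
    have hSliceLeB : ∀ a, ((Bs a).card : ℤ) ≤ N := by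
      intro a
      rw [hN]
      have h1 : (Bs a).card ≤ ∏ i : Fin n, p i.succ := by
        calc (Bs a).card ≤ Fintype.card (∀ i : Fin n, Fin (p i.succ)) := Finset.card_le_univ _
          _ = ∏ i : Fin n, p i.succ := by simp [Fintype.card_pi]
      calc ((Bs a).card : ℤ) ≤ ((∏ i : Fin n, p i.succ : ℕ) : ℤ) := by exact_mod_cast h1
        _ = ∏ i : Fin n, (p i.succ : ℤ) := by push_cast; rfl
    -- main numeric assembly
    have hkZ : (1:ℤ) ≤ (k:ℤ) := by exact_mod_cast hk1
    have hXP : (A.card : ℤ) ≤ (p 0 : ℤ) * N := by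
      rw [← hprodsucc]
      have h1 : A.card ≤ ∏ i, p i := by
        calc A.card ≤ Fintype.card (∀ i, Fin (p i)) := Finset.card_le_univ A
          _ = ∏ i, p i := by simp [Fintype.card_pi]
      calc (A.card : ℤ) ≤ ((∏ i, p i : ℕ) : ℤ) := by exact_mod_cast h1
        _ = ∏ i, (p i : ℤ) := by push_cast; rfl
    have hYP : (B.card : ℤ) ≤ (p 0 : ℤ) * N := by
      rw [← hprodsucc]
      have h1 : B.card ≤ ∏ i, p i := by
        calc B.card ≤ Fintype.card (∀ i, Fin (p i)) := Finset.card_le_univ B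
          _ = ∏ i, p i := by simp [Fintype.card_pi]
      calc (B.card : ℤ) ≤ ((∏ i, p i : ℕ) : ℤ) := by exact_mod_cast h1
        _ = ∏ i, (p i : ℤ) := by push_cast; rfl
    rw [hprodsucc]
    by_cases hk2 : k = 1
    · subst hk2
      norm_num
      exact mul_nonneg (by linarith) (by linarith)
    have hk2' : (2:ℤ) ≤ (k:ℤ) := by
      have : 2 ≤ k := by omega
      exact_mod_cast this
    have hm1 : 0 < p 0 := hp 0
    have hmZ : (1:ℤ) ≤ (p 0 : ℤ) := by exact_mod_cast hm1
    have hkm : (k:ℤ) ≤ (p 0 : ℤ) := by exact_mod_cast hkle 0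
    obtain ⟨ι, -, hmaxA⟩ := Finset.exists_max_image (univ : Finset (Fin (p 0)))
      (fun a => ((As a).card : ℤ)) ⟨⟨0, hm1⟩, mem_univ _⟩
    obtain ⟨ι', -, hmaxB⟩ := Finset.exists_max_image (univ : Finset (Fin (p 0)))
      (fun a => ((Bs a).card : ℤ)) ⟨⟨0, hm1⟩, mem_univ _⟩
    have hXle : (A.card : ℤ) ≤ (p 0 : ℤ) * ((As ι).card : ℤ) := by
      rw [cardA]
      have := Finset.sum_le_card_nsmul univ (fun a => ((As a).card : ℤ)) ((As ι).card : ℤ)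
        (fun a _ => hmaxA a (mem_univ a))
      simpa [card_univ, nsmul_eq_mul] using this
    have hYle : (B.card : ℤ) ≤ (p 0 : ℤ) * ((Bs ι').card : ℤ) := by
      rw [cardB]
      have := Finset.sum_le_card_nsmul univ (fun a => ((Bs a).card : ℤ)) ((Bs ι').card : ℤ)
        (fun a _ => hmaxB a (mem_univ a))
      simpa [card_univ, nsmul_eq_mul] using this
    by_cases hii : ι = ι'
    · -- same argmax slot
      subst hii
      set u : ℤ := ((As ι).card : ℤ) with hu
      set v : ℤ := ((Bs ι).card : ℤ) with hv
      by_cases hs : (N - u) * (N - v) ≤ ((k:ℤ) - 1) ^ 2 * (u * v)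
      · -- sigma >= 0 branch : lemB
        set L : ℤ := ((k:ℤ) - 1) ^ 2 with hL
        have hL1 : 1 ≤ L := by nlinarith
        have hML : L ≤ ((p 0 : ℤ) - 1) ^ 2 := by nlinarith
        -- slice bound sums
        have hXbd : (A.card : ℤ) * (N + (L - 1) * v) ≤ u * (N + (L - 1) * v) + ((p 0 : ℤ) - 1) * (N * (N - v)) := by
          have hterm : ∀ a ∈ univ.erase ι, ((As a).card : ℤ) * (N + (L - 1) * v) ≤ N * (N - v) := by
            intro a ha
            have hne : a ≠ ι := (Finset.mem_erase.1 ha).1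
            have h1 := hIH a ι hne
            nlinarith [h1]
          have hsum := Finset.sum_le_card_nsmul (univ.erase ι)
            (fun a => ((As a).card : ℤ) * (N + (L - 1) * v)) (N * (N - v)) hterm
          have hcard : (univ.erase ι).card = p 0 - 1 := by
            rw [Finset.card_erase_of_mem (mem_univ _), card_univ]; simp
          rw [hcard, nsmul_eq_mul, Nat.cast_sub hm1] at hsum
          have hsplit : (A.card : ℤ) = u + ∑ a ∈ univ.erase ι, ((As a).card : ℤ) := by
            rw [cardA, hu, ← Finset.add_sum_erase _ _ (mem_univ ι)]
          have hdistrib : (∑ a ∈ univ.erase ι, ((As a).card : ℤ)) * (N + (L - 1) * v)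
              = ∑ a ∈ univ.erase ι, ((As a).card : ℤ) * (N + (L - 1) * v) := Finset.sum_mul _ _ _
          have h2 : (A.card : ℤ) * (N + (L - 1) * v)
              = u * (N + (L - 1) * v) + (∑ a ∈ univ.erase ι, ((As a).card : ℤ)) * (N + (L - 1) * v) := by
            rw [hsplit]; ring
          rw [hdistrib] at h2
          push_cast at hsum
          linarith [hsum, h2]
        have hYbd : (B.card : ℤ) * (N + (L - 1) * u) ≤ v * (N + (L - 1) * u) + ((p 0 : ℤ) - 1) * (N * (N - u)) := by
          have hterm : ∀ a ∈ univ.erase ι, ((Bs a).card : ℤ) * (N + (L - 1) * u) ≤ N * (N - u) := by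
            intro a ha
            have hne : a ≠ ι := (Finset.mem_erase.1 ha).1
            have h1 := hIH ι a hne.symm
            nlinarith [h1]
          have hsum := Finset.sum_le_card_nsmul (univ.erase ι)
            (fun a => ((Bs a).card : ℤ) * (N + (L - 1) * u)) (N * (N - u)) hterm
          have hcard : (univ.erase ι).card = p 0 - 1 := by
            rw [Finset.card_erase_of_mem (mem_univ _), card_univ]; simp
          rw [hcard, nsmul_eq_mul, Nat.cast_sub hm1] at hsum
          have hsplit : (B.card : ℤ) = v + ∑ a ∈ univ.erase ι, ((Bs a).card : ℤ) := by
            rw [cardB, hv, ← Finset.add_sum_erase _ _ (mem_univ ι)]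
          have hdistrib : (∑ a ∈ univ.erase ι, ((Bs a).card : ℤ)) * (N + (L - 1) * u)
              = ∑ a ∈ univ.erase ι, ((Bs a).card : ℤ) * (N + (L - 1) * u) := Finset.sum_mul _ _ _
          have h2 : (B.card : ℤ) * (N + (L - 1) * u)
              = v * (N + (L - 1) * u) + (∑ a ∈ univ.erase ι, ((Bs a).card : ℤ)) * (N + (L - 1) * u) := by
            rw [hsplit]; ring
          rw [hdistrib] at h2
          push_cast at hsum
          linarith [hsum, h2]
        have hres := lemB L ((p 0 : ℤ) - 1) N u v (A.card : ℤ) (B.card : ℤ)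
          hL1 (by linarith) hML hN1 (Int.natCast_nonneg _) (hSliceLe ι) (Int.natCast_nonneg _)
          (hSliceLeB ι) (Int.natCast_nonneg _) (Int.natCast_nonneg _) hs hXbd hYbd
        have he : ((p 0 : ℤ) - 1 + 1) = (p 0 : ℤ) := by ring
        rw [he] at hres
        exact hres
      · -- sigma <= 0 branch : lemA with (u,v)
        push_neg at hs
        exact lemA ((k:ℤ) - 1) N (p 0 : ℤ) u v (A.card : ℤ) (B.card : ℤ)
          (by linarith) (by linarith) (Int.natCast_nonneg _) (Int.natCast_nonneg _)
          (hSliceLe ι) (hSliceLeB ι) (Int.natCast_nonneg _) (Int.natCast_nonneg _)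
          hXle hYle (le_of_lt hs)
    · -- distinct argmax slots : lemA with pair constraint
      exact lemA ((k:ℤ) - 1) N (p 0 : ℤ) ((As ι).card : ℤ) ((Bs ι').card : ℤ)
        (A.card : ℤ) (B.card : ℤ)
        (by linarith) (by linarith) (Int.natCast_nonneg _) (Int.natCast_nonneg _)
        (hSliceLe ι) (hSliceLeB ι') (Int.natCast_nonneg _) (Int.natCast_nonneg _)
        hXle hYle (hIH ι ι' hii)

/-- If `p = (p_1, …, p_n)` is a sequence of positive integers, `k = min_i p_i`,
and `A, B ⊆ S_p` are cross-intersecting, then `|A|·|B| ≤ |S_p|² / k²`,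
stated equivalently as `k² · |A|·|B| ≤ |S_p|²`. -/
theorem crossIntersecting_card_mul_le {n : ℕ} (p : Fin n → ℕ)
    (hp : ∀ i, 1 ≤ p i) (k : ℕ) (hk : ∃ i, p i = k) (hk' : ∀ i, k ≤ p i)
    (A B : Finset (∀ i, Fin (p i))) (hAB : CrossInt 1 A B) :
    k ^ 2 * (A.card * B.card) ≤ (∏ i, p i) ^ 2 := by
  obtain ⟨i0, hi0⟩ := hk
  have hk1 : 1 ≤ k := hi0 ▸ hp i0
  have haux := auxInd n p hp k hk1 hk' A B hAB
  have hAle : A.card ≤ ∏ i, p i := card_le_prodInt p A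
  have hBle : B.card ≤ ∏ i, p i := card_le_prodInt p B
  have hR : ((k:ℝ) - 1) ^ 2 * ((A.card : ℝ) * (B.card : ℝ)) ≤
      ((∏ i, (p i : ℝ)) - A.card) * ((∏ i, (p i : ℝ)) - B.card) := by
    exact_mod_cast haux
  have hfin := lemC (k : ℝ) (A.card : ℝ) (B.card : ℝ) (∏ i, (p i : ℝ))
    (by exact_mod_cast hk1) (by positivity) (by positivity)
    (by exact_mod_cast hAle) (by exact_mod_cast hBle) hR
  exact_mod_cast hfin
end

section
/- Let 1 ≤ r ≤ n, let p be a size vector of length n, and let (A, B) be a maximal pair of r-cross-intersecting families in S_p. Then B = {y ∈ S_p : y is r-intersecting with every x ∈ A} and A = {x ∈ S_p : x is r-intersecting with every y ∈ B}; in particular, each of A and B determines the other, and A and B have the same set of relevant coordinates. -/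
open Finset

/-- `(A, B)` is a maximal `r`-cross-intersecting pair: it is
`r`-cross-intersecting and maximizes `|A|·|B|`. -/
def MaxPair {n : ℕ} {p : Fin n → ℕ} (r : ℕ)
    (A B : Finset (∀ i, Fin (p i))) : Prop :=
  CrossInt r A B ∧ ∀ A' B' : Finset (∀ i, Fin (p i)),
    CrossInt r A' B' → A'.card * B'.card ≤ A.card * B.card

/-- Coordinate `i` is relevant for `A`: some two vectors differing only in
coordinate `i` are such that one belongs to `A` and the other one does not. -/
def Relevant {n : ℕ} {p : Fin n → ℕ} (A : Finset (∀ i, Fin (p i)))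
    (i : Fin n) : Prop :=
  ∃ x y : ∀ j, Fin (p j), (∀ j, j ≠ i → x j = y j) ∧ x ∈ A ∧ y ∉ A

/-- Key transfer lemma: if `B` is exactly the set of vectors `r`-intersecting
every member of `A`, and coordinate `i` is irrelevant for `A`, then `i` is
irrelevant for `B`. -/
lemma key_irrel {n : ℕ} {p : Fin n → ℕ} (r : ℕ)
    (A B : Finset (∀ i, Fin (p i))) (i : Fin n)
    (hB : ∀ y, y ∈ B ↔ ∀ x ∈ A, r ≤ (univ.filter (fun j => x j = y j)).card)
    (hAi : ¬ Relevant A i) : ¬ Relevant B i := by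
  rintro ⟨x, y, hxy, hxB, hyB⟩
  have hA' : ∀ u v : ∀ j, Fin (p j), (∀ j, j ≠ i → u j = v j) → u ∈ A → v ∈ A := by
    intro u v h hu
    by_contra hv
    exact hAi ⟨u, v, h, hu, hv⟩
  by_cases hxyi : x i = y i
  · apply hyB
    have : x = y := funext fun j => by
      by_cases hj : j = i
      · subst hj; exact hxyi
      · exact hxy j hj
    exact this ▸ hxB
  · rw [hB] at hyB
    push_neg at hyB
    obtain ⟨a, ha, hlt⟩ := hyB
    set a' := Function.update a i (y i) with ha'def
    have ha' : a' ∈ A :=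
      hA' a a' (fun j hj => (Function.update_of_ne hj _ _).symm) ha
    have hxB' := (hB x).mp hxB a' ha'
    have hsub : univ.filter (fun j => a' j = x j) ⊆
        univ.filter (fun j => a j = y j) := by
      intro j hj
      simp only [mem_filter, mem_univ, true_and] at hj ⊢
      by_cases hji : j = i
      · subst hji
        rw [ha'def, Function.update_self] at hj
        exact absurd hj.symm hxyi
      · rw [ha'def, Function.update_of_ne hji] at hj
        exact hj.trans (hxy j hji)
    exact absurd (le_trans hxB' (card_le_card hsub)) (not_le.mpr hlt)

/-- Theorem 4 (first part): for a maximal `r`-cross-intersecting pair `(A, B)`,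
`B` is the set of vectors `r`-intersecting every member of `A`, and vice versa;
in particular each family determines the other, and they have the same relevant
coordinates. -/
theorem maxPair_determines {n : ℕ} (r : ℕ) (hr : 1 ≤ r) (hrn : r ≤ n)
    (p : Fin n → ℕ) (hp : ∀ i, 2 ≤ p i)
    (A B : Finset (∀ i, Fin (p i))) (hAB : MaxPair r A B) :
    B = univ.filter
        (fun y => ∀ x ∈ A, r ≤ (univ.filter (fun i => x i = y i)).card) ∧
    A = univ.filter
        (fun x => ∀ y ∈ B, r ≤ (univ.filter (fun i => x i = y i)).card) ∧
    ∀ i, Relevant A i ↔ Relevant B i := by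
  obtain ⟨h1, h2⟩ := hAB
  -- A and B are nonempty
  have x0 : ∀ i, Fin (p i) := fun i => ⟨0, by have := hp i; omega⟩
  have hsing : CrossInt r {x0} {x0} := by
    intro x hx y hy
    simp only [mem_singleton] at hx hy
    rw [hx, hy]
    have heq : (univ.filter (fun i => x0 i = x0 i)) = univ :=
      filter_true_of_mem (fun _ _ => rfl)
    rw [heq, card_univ, Fintype.card_fin]
    exact hrn
  have hpos : 1 ≤ A.card * B.card := by
    have := h2 {x0} {x0} hsing
    simpa using this
  have hApos : 0 < A.card := by
    rcases Nat.eq_zero_or_pos A.card with h | h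
    · rw [h] at hpos; omega
    · exact h
  have hBpos : 0 < B.card := by
    rcases Nat.eq_zero_or_pos B.card with h | h
    · rw [h, Nat.mul_zero] at hpos; omega
    · exact h
  -- B equals its closure
  have hBeq : B = univ.filter
      (fun y => ∀ x ∈ A, r ≤ (univ.filter (fun i => x i = y i)).card) := by
    set B' : Finset (∀ i, Fin (p i)) := univ.filter
      (fun y => ∀ x ∈ A, r ≤ (univ.filter (fun i => x i = y i)).card) with hB'
    have hsub : B ⊆ B' := by
      intro y hy
      simp only [hB', mem_filter, mem_univ, true_and]
      intro x hx
      exact h1 x hx y hy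
    have hcross : CrossInt r A B' := by
      intro x hx y hy
      simp only [hB', mem_filter, mem_univ, true_and] at hy
      exact hy x hx
    have hle : B'.card ≤ B.card :=
      Nat.le_of_mul_le_mul_left (h2 A B' hcross) hApos
    exact eq_of_subset_of_card_le hsub hle
  -- A equals its closure
  have hAeq : A = univ.filter
      (fun x => ∀ y ∈ B, r ≤ (univ.filter (fun i => x i = y i)).card) := by
    set A' : Finset (∀ i, Fin (p i)) := univ.filter
      (fun x => ∀ y ∈ B, r ≤ (univ.filter (fun i => x i = y i)).card) with hA'
    have hsub : A ⊆ A' := by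
      intro x hx
      simp only [hA', mem_filter, mem_univ, true_and]
      intro y hy
      exact h1 x hx y hy
    have hcross : CrossInt r A' B := by
      intro x hx y hy
      simp only [hA', mem_filter, mem_univ, true_and] at hx
      exact hx y hy
    have hle : A'.card ≤ A.card :=
      Nat.le_of_mul_le_mul_right (h2 A' B hcross) hBpos
    exact eq_of_subset_of_card_le hsub hle
  refine ⟨hBeq, hAeq, fun i => ?_⟩
  have hBmem : ∀ y, y ∈ B ↔
      ∀ x ∈ A, r ≤ (univ.filter (fun j => x j = y j)).card := by
    intro y
    rw [hBeq]
    simp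
  have hAmem : ∀ y, y ∈ A ↔
      ∀ x ∈ B, r ≤ (univ.filter (fun j => x j = y j)).card := by
    intro y
    rw [hAeq]
    simp only [mem_filter, mem_univ, true_and]
    constructor
    · intro h x hx
      have := h x hx
      simpa [eq_comm] using this
    · intro h x hx
      have := h x hx
      simpa [eq_comm] using this
  constructor
  · intro hA
    by_contra hB
    exact (key_irrel r B A i hAmem hB) hA
  · intro hB
    by_contra hA
    exact (key_irrel r A B i hBmem hA) hB
end

section
/- Let 1 ≤ r ≤ n, let p = (p_1,…,p_n) be a size vector, and let (A, B) be a maximal pair of r-cross-intersecting families in S_p. If A is the Hamming ball of radius l around a vector x_0 ∈ S_p in a set of coordinates T ⊆ [n], then |T| ≥ l + r, B is the Hamming ball of radius |T| − l − r around x_0 in the same set of coordinates T, p_i ≤ p_j holds for every i ∈ T and j ∈ [n]\T, and the radii of the two balls differ by at most 1, i.e. | |T| − 2l − r | ≤ 1. -/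
open Finset

/-- The Hamming ball of radius `k` around `x₀` in the coordinates `T`. -/
def hBall {n : ℕ} {p : Fin n → ℕ} (T : Finset (Fin n))
    (x₀ : ∀ i, Fin (p i)) (k : ℕ) : Finset (∀ i, Fin (p i)) :=
  univ.filter (fun x => (T.filter (fun i => x i ≠ x₀ i)).card ≤ k)

namespace MaxPairBallAux
variable {n : ℕ} (p : Fin n → ℕ)

/-- weighted elementary symmetric sum with weights `p i - 1`. -/
def esym (T : Finset (Fin n)) (k : ℕ) : ℕ :=
  ∑ S ∈ T.powersetCard k, ∏ i ∈ S, (p i - 1)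

/-- partial sums -/
def FF (T : Finset (Fin n)) (k : ℕ) : ℕ :=
  ∑ j ∈ Finset.range (k+1), esym p T j

lemma esym_zero (T : Finset (Fin n)) : esym p T 0 = 1 := by
  simp [esym]

lemma esym_empty_succ (k : ℕ) : esym p (∅ : Finset (Fin n)) (k+1) = 0 := by
  simp [esym]

lemma esym_pos (hp : ∀ i, 2 ≤ p i) {T : Finset (Fin n)} {k : ℕ} (h : k ≤ T.card) :
    1 ≤ esym p T k := by
  obtain ⟨S, hS, hcard⟩ := Finset.exists_subset_card_eq h
  have hmem : S ∈ T.powersetCard k := Finset.mem_powersetCard.2 ⟨hS, hcard⟩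
  have h1 : 1 ≤ ∏ i ∈ S, (p i - 1) := by
    apply Finset.one_le_prod'
    intro i _
    have := hp i; omega
  calc 1 ≤ ∏ i ∈ S, (p i - 1) := h1
    _ ≤ esym p T k := by
      unfold esym
      exact Finset.single_le_sum (f := fun S => ∏ i ∈ S, (p i - 1)) (fun _ _ => Nat.zero_le _) hmem

lemma esym_insert {a : Fin n} {T : Finset (Fin n)} (ha : a ∉ T) (k : ℕ) :
    esym p (insert a T) (k+1) = esym p T (k+1) + (p a - 1) * esym p T k := by
  unfold esym
  rw [Finset.powersetCard_succ_insert ha, Finset.sum_union, Finset.sum_image, Finset.mul_sum]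
  · congr 1
    apply Finset.sum_congr rfl
    intro S hS
    have hST : S ⊆ T := (Finset.mem_powersetCard.1 hS).1
    have haS : a ∉ S := fun h => ha (hST h)
    rw [Finset.prod_insert haS]
  · intro S hS S' hS' hEq
    have hST : S ⊆ T := (Finset.mem_powersetCard.1 hS).1
    have hST' : S' ⊆ T := (Finset.mem_powersetCard.1 hS').1
    have haS : a ∉ S := fun h => ha (hST h)
    have haS' : a ∉ S' := fun h => ha (hST' h)
    have := congrArg (·.erase a) hEq
    simpa [Finset.erase_insert haS, Finset.erase_insert haS'] using this
  · rw [Finset.disjoint_right]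
    intro S hS hS'
    obtain ⟨S', hmS', rfl⟩ := Finset.mem_image.1 hS
    have hST : insert a S' ⊆ T := (Finset.mem_powersetCard.1 hS').1
    exact ha (hST (Finset.mem_insert_self a S'))

lemma newton (T : Finset (Fin n)) :
    ∀ i j : ℕ, i ≤ j → esym p T i * esym p T (j+1) ≤ esym p T (i+1) * esym p T j := by
  classical
  induction T using Finset.induction_on with
  | empty =>
      intro i j hij
      cases j with
      | zero =>
          interval_cases i
          simp [mul_comm]
      | succ jj =>
          rw [esym_empty_succ]
          simp
  | insert a T ha ih =>
      have ts : ∀ i j : ℕ, i ≤ j →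
          esym p T i * esym p T (j+2) ≤ esym p T (i+2) * esym p T j := by
        intro i j hij
        rcases eq_or_lt_of_le hij with rfl | hlt
        · rw [mul_comm]
        · calc esym p T i * esym p T (j+1+1) ≤ esym p T (i+1) * esym p T (j+1) :=
                ih i (j+1) (by omega)
            _ ≤ esym p T (i+2) * esym p T j := ih (i+1) j (by omega)
      intro i j hij
      cases i with
      | zero =>
          cases j with
          | zero => rw [mul_comm]
          | succ jj =>
              rw [esym_zero, one_mul]
              rw [esym_insert p ha, esym_insert p ha, esym_insert p ha, esym_zero]
              have h1 : esym p T (jj+2) ≤ esym p T 1 * esym p T (jj+1) := by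
                have := ih 0 (jj+1) (by omega)
                rwa [esym_zero, one_mul] at this
              have h1q : (p a - 1) * esym p T (jj+1) ≤ (p a - 1) * esym p T (jj+1) := le_refl _
              nlinarith [h1, h1q, Nat.zero_le ((p a - 1) * (esym p T 1 * esym p T jj)),
                Nat.zero_le ((p a - 1) * ((p a - 1) * esym p T jj))]
      | succ ii =>
          cases j with
          | zero => omega
          | succ jj =>
              have hiijj : ii ≤ jj := by omega
              rw [esym_insert p ha (ii+1), esym_insert p ha ii, esym_insert p ha (jj+1),
                esym_insert p ha jj]
              have h1 : esym p T (ii+1) * esym p T (jj+2) ≤ esym p T (ii+2) * esym p T (jj+1) :=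
                ih (ii+1) (jj+1) (by omega)
              have h2 : esym p T ii * esym p T (jj+2) ≤ esym p T (ii+2) * esym p T jj :=
                ts ii jj hiijj
              have h3 : esym p T ii * esym p T (jj+1) ≤ esym p T (ii+1) * esym p T jj :=
                ih ii jj hiijj
              have h2q := Nat.mul_le_mul (le_refl (p a - 1)) h2
              have h3q := Nat.mul_le_mul (le_refl ((p a - 1) * (p a - 1))) h3
              nlinarith [h1, h2q, h3q]

lemma chain (T : Finset (Fin n)) :
    ∀ (s i j : ℕ), i ≤ j → esym p T i * esym p T (j+s) ≤ esym p T (i+s) * esym p T j := by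
  intro s
  induction s with
  | zero => intro i j hij; simp
  | succ ss ihs =>
      intro i j hij
      rcases eq_or_lt_of_le hij with rfl | hlt
      · rw [mul_comm]
      · calc esym p T i * esym p T (j+ss+1)
            ≤ esym p T (i+1) * esym p T (j+ss) := newton p T i (j+ss) (by omega)
          _ ≤ esym p T (i+1+ss) * esym p T j := ihs (i+1) j (by omega)
          _ = esym p T (i+(ss+1)) * esym p T j := by ring_nf

lemma FF_succ (T : Finset (Fin n)) (k : ℕ) :
    FF p T (k+1) = FF p T k + esym p T (k+1) := by
  unfold FF
  rw [Finset.sum_range_succ]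

lemma FF_pos (T : Finset (Fin n)) (k : ℕ) : 1 ≤ FF p T k := by
  unfold FF
  calc 1 = esym p T 0 := (esym_zero p T).symm
    _ ≤ _ := Finset.single_le_sum (f := fun j => esym p T j)
        (fun _ _ => Nat.zero_le _) (Finset.mem_range.2 (by omega))

/-- the key strict log-concavity inequality for partial sums. -/
lemma keyF (hp : ∀ i, 2 ≤ p i) (T : Finset (Fin n)) (a c : ℕ) (h : a + 1 ≤ T.card) :
    FF p T a * FF p T (a+2+c) < FF p T (a+1) * FF p T (a+1+c) := by
  have hsplit : FF p T (a+1+c) =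
      FF p T c + ∑ t ∈ Finset.range (a+1), esym p T (c+1+t) := by
    unfold FF
    have : a+1+c+1 = (c+1) + (a+1) := by omega
    rw [this, Finset.sum_range_add]
  have hmain : FF p T a * esym p T (a+2+c) ≤
      esym p T (a+1) * ∑ t ∈ Finset.range (a+1), esym p T (c+1+t) := by
    unfold FF
    rw [Finset.sum_mul, Finset.mul_sum]
    apply Finset.sum_le_sum
    intro t ht
    have htle : t ≤ a + 1 := by
      have := Finset.mem_range.1 ht; omega
    have := chain p T (c+1) t (a+1) htle
    calc esym p T t * esym p T (a+2+c)
        = esym p T t * esym p T (a+1+(c+1)) := by ring_nf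
      _ ≤ esym p T (t+(c+1)) * esym p T (a+1) := this
      _ = esym p T (a+1) * esym p T (c+1+t) := by rw [mul_comm]; ring_nf
  have he : 1 ≤ esym p T (a+1) := esym_pos p hp h
  have hFc : 1 ≤ FF p T c := FF_pos p T c
  have hstrict : FF p T a * esym p T (a+2+c) < esym p T (a+1) * FF p T (a+1+c) := by
    rw [hsplit, Nat.mul_add]
    have : 1 ≤ esym p T (a+1) * FF p T c := Nat.one_le_iff_ne_zero.2 (by positivity)
    omega
  have hexp : FF p T (a+2+c) = FF p T (a+1+c) + esym p T (a+2+c) := by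
    have : a+2+c = (a+1+c)+1 := by omega
    rw [this, FF_succ]
  have hexp2 : FF p T (a+1) = FF p T a + esym p T (a+1) := FF_succ p T a
  calc FF p T a * FF p T (a+2+c)
      = FF p T a * FF p T (a+1+c) + FF p T a * esym p T (a+2+c) := by rw [hexp]; ring
    _ < FF p T a * FF p T (a+1+c) + esym p T (a+1) * FF p T (a+1+c) := by omega
    _ = FF p T (a+1) * FF p T (a+1+c) := by rw [hexp2]; ring

lemma FF_insert_succ {a : Fin n} {S : Finset (Fin n)} (ha : a ∉ S) (k : ℕ) :
    FF p (insert a S) (k+1) = FF p S (k+1) + (p a - 1) * FF p S k := by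
  induction k with
  | zero =>
      unfold FF
      simp [Finset.sum_range_succ, esym_zero, esym_insert p ha 0, esym_zero]
      ring
  | succ kk ih =>
      rw [FF_succ, ih, esym_insert p ha (kk+1), FF_succ p S (kk+1), FF_succ p S kk]
      ring

lemma swapFactor (hp : ∀ i, 2 ≤ p i) {i j : Fin n} {S : Finset (Fin n)}
    (hiS : i ∉ S) (hjS : j ∉ S) (hij : p j < p i) {k : ℕ} (hk : k ≤ S.card) :
    p j * FF p (insert i S) k < p i * FF p (insert j S) k := by
  cases k with
  | zero =>
      have h1 : FF p (insert i S) 0 = 1 := by unfold FF; simp [esym_zero]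
      have h2 : FF p (insert j S) 0 = 1 := by unfold FF; simp [esym_zero]
      rw [h1, h2]; simpa using hij
  | succ kk =>
      rw [FF_insert_succ p hiS, FF_insert_succ p hjS]
      have he : 1 ≤ esym p S (kk+1) := esym_pos p hp hk
      have hG : FF p S (kk+1) = FF p S kk + esym p S (kk+1) := FF_succ p S kk
      have hpj : 2 ≤ p j := hp j
      obtain ⟨qj, hqj⟩ : ∃ qj, p j = qj + 2 := ⟨p j - 2, by omega⟩
      obtain ⟨d, hd⟩ : ∃ d, p i = p j + d + 1 := ⟨p i - p j - 1, by omega⟩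
      rw [hG, hd, hqj]
      have h1 : qj + 2 + d + 1 - 1 = qj + d + 2 := by omega
      have h2 : qj + 2 - 1 = qj + 1 := by omega
      rw [h1, h2]
      nlinarith [he, Nat.zero_le (FF p S kk), Nat.zero_le qj, Nat.zero_le d]

/-- cardinality of a Hamming ball -/
lemma card_hBall (T : Finset (Fin n)) (x₀ : ∀ i, Fin (p i)) (k : ℕ) :
    (hBall T x₀ k).card = (∏ i ∈ Tᶜ, p i) * FF p T k := by
  classical
  set D : Finset (Fin n) → Finset (∀ i, Fin (p i)) := fun S =>
    Fintype.piFinset (fun i => if i ∈ S then ({x₀ i}ᶜ : Finset (Fin (p i)))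
      else if i ∈ T then {x₀ i} else Finset.univ) with hD
  have hmemD : ∀ S, S ⊆ T → ∀ x : ∀ i, Fin (p i),
      (x ∈ D S ↔ T.filter (fun i => x i ≠ x₀ i) = S) := by
    intro S hST x
    rw [hD]
    simp only [Fintype.mem_piFinset]
    constructor
    · intro h
      ext i
      simp only [Finset.mem_filter]
      have hi := h i
      by_cases hiS : i ∈ S
      · simp only [hiS, if_true, Finset.mem_compl, Finset.mem_singleton] at hi
        exact ⟨fun _ => hiS, fun _ => ⟨hST hiS, hi⟩⟩
      · constructor
        · rintro ⟨hiT, hne⟩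
          simp only [hiS, if_false, hiT, if_true, Finset.mem_singleton] at hi
          exact absurd hi hne
        · intro h'; exact absurd h' hiS
    · intro h i
      by_cases hiS : i ∈ S
      · have hmem : i ∈ T.filter (fun i => x i ≠ x₀ i) := h ▸ hiS
        simp only [Finset.mem_filter] at hmem
        simp only [hiS, if_true, Finset.mem_compl, Finset.mem_singleton]
        exact hmem.2
      · by_cases hiT : i ∈ T
        · have hmem : i ∉ T.filter (fun i => x i ≠ x₀ i) := by rw [h]; exact hiS
          simp only [Finset.mem_filter, not_and, not_not] at hmem
          simp only [hiS, if_false, hiT, if_true, Finset.mem_singleton]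
          exact hmem hiT
        · simp [hiS, hiT]
  have hcardD : ∀ S, S ⊆ T → (D S).card = (∏ i ∈ Tᶜ, p i) * ∏ i ∈ S, (p i - 1) := by
    intro S hST
    rw [hD]
    rw [Fintype.card_piFinset]
    have hcards : ∀ i : Fin n,
        (if i ∈ S then ({x₀ i}ᶜ : Finset (Fin (p i))) else if i ∈ T then {x₀ i}
          else Finset.univ).card
        = if i ∈ S then p i - 1 else if i ∈ T then 1 else p i := by
      intro i
      split
      · rw [Finset.card_compl, Finset.card_singleton, Fintype.card_fin]
      · split
        · exact Finset.card_singleton _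
        · rw [Finset.card_univ, Fintype.card_fin]
    simp_rw [hcards]
    rw [← Finset.prod_mul_prod_compl T
      (fun i => if i ∈ S then p i - 1 else if i ∈ T then 1 else p i)]
    have hTc : (∏ i ∈ Tᶜ, if i ∈ S then p i - 1 else if i ∈ T then 1 else p i)
        = ∏ i ∈ Tᶜ, p i := by
      apply Finset.prod_congr rfl
      intro i hi
      rw [Finset.mem_compl] at hi
      have hiS : i ∉ S := fun h => hi (hST h)
      simp [hiS, hi]
    have hT : (∏ i ∈ T, if i ∈ S then p i - 1 else if i ∈ T then 1 else p i)
        = ∏ i ∈ S, (p i - 1) := by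
      rw [← Finset.prod_sdiff hST]
      have h1 : (∏ i ∈ T \ S, if i ∈ S then p i - 1 else if i ∈ T then 1 else p i) = 1 := by
        apply Finset.prod_eq_one
        intro i hi
        rw [Finset.mem_sdiff] at hi
        simp [hi.1, hi.2]
      have h2 : (∏ i ∈ S, if i ∈ S then p i - 1 else if i ∈ T then 1 else p i)
          = ∏ i ∈ S, (p i - 1) := by
        apply Finset.prod_congr rfl
        intro i hi
        simp [hi]
      rw [h1, h2, one_mul]
    rw [hTc, hT, mul_comm]
  set I : Finset (Finset (Fin n)) := (Finset.range (k+1)).biUnion (fun j => T.powersetCard j)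
    with hI
  have hmemI : ∀ S, S ∈ I ↔ S ⊆ T ∧ S.card ≤ k := by
    intro S
    rw [hI]
    simp only [Finset.mem_biUnion, Finset.mem_range, Finset.mem_powersetCard]
    constructor
    · rintro ⟨j, hj, hST, hc⟩; exact ⟨hST, by omega⟩
    · rintro ⟨hST, hc⟩; exact ⟨S.card, by omega, hST, rfl⟩
  have hball : hBall T x₀ k = I.biUnion D := by
    ext x
    simp only [hBall, Finset.mem_filter, Finset.mem_univ, true_and, Finset.mem_biUnion]
    constructor
    · intro hx
      refine ⟨T.filter (fun i => x i ≠ x₀ i), ?_, ?_⟩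
      · rw [hmemI]
        exact ⟨Finset.filter_subset _ _, hx⟩
      · rw [hmemD _ (Finset.filter_subset _ _) x]
    · rintro ⟨S, hSI, hxD⟩
      rw [hmemI] at hSI
      rw [hmemD _ hSI.1 x] at hxD
      rw [hxD]
      exact hSI.2
  have hdisj : ∀ S ∈ I, ∀ S' ∈ I, S ≠ S' → Disjoint (D S) (D S') := by
    intro S hS S' hS' hne
    rw [Finset.disjoint_left]
    intro x hx hx'
    rw [hmemI] at hS hS'
    rw [hmemD _ hS.1 x] at hx
    rw [hmemD _ hS'.1 x] at hx'
    exact hne (hx ▸ hx')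
  rw [hball, Finset.card_biUnion hdisj]
  have hsum : ∑ S ∈ I, (D S).card = ∑ S ∈ I, (∏ i ∈ Tᶜ, p i) * ∏ i ∈ S, (p i - 1) := by
    apply Finset.sum_congr rfl
    intro S hS
    rw [hmemI] at hS
    exact hcardD S hS.1
  rw [hsum, ← Finset.mul_sum]
  congr 1
  rw [hI]
  rw [Finset.sum_biUnion]
  · rfl
  · intro a ha b hb hab
    simp only [Function.onFun]
    rw [Finset.disjoint_left]
    intro S hSa hSb
    rw [Finset.mem_powersetCard] at hSa hSb
    exact hab (hSa.2 ▸ hSb.2)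

/-- balls with radii summing to at most `|T| - r` are cross-intersecting -/
lemma crossInt_hBall (r : ℕ) (T : Finset (Fin n)) (x₀ : ∀ i, Fin (p i)) {a b : ℕ}
    (h : a + b + r ≤ T.card) : CrossInt r (hBall T x₀ a) (hBall T x₀ b) := by
  intro x hx y hy
  simp only [hBall, Finset.mem_filter, Finset.mem_univ, true_and] at hx hy
  have hsub : T \ (T.filter (fun i => x i ≠ x₀ i) ∪ T.filter (fun i => y i ≠ x₀ i))
      ⊆ Finset.univ.filter (fun i => x i = y i) := by
    intro i hi
    simp only [Finset.mem_sdiff, Finset.mem_union, Finset.mem_filter, not_or, not_and,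
      not_not] at hi
    simp only [Finset.mem_filter, Finset.mem_univ, true_and]
    rw [hi.2.1 hi.1, hi.2.2 hi.1]
  have hc1 := Finset.card_le_card hsub
  have hc2 : T.card ≤ (T \ (T.filter (fun i => x i ≠ x₀ i) ∪ T.filter (fun i => y i ≠ x₀ i))).card
      + (T.filter (fun i => x i ≠ x₀ i) ∪ T.filter (fun i => y i ≠ x₀ i)).card :=
    Finset.card_le_card_sdiff_add_card
  have hc3 : (T.filter (fun i => x i ≠ x₀ i) ∪ T.filter (fun i => y i ≠ x₀ i)).card
      ≤ a + b := by
    calc _ ≤ (T.filter (fun i => x i ≠ x₀ i)).card + (T.filter (fun i => y i ≠ x₀ i)).card :=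
          Finset.card_union_le _ _
      _ ≤ a + b := by omega
  omega

end MaxPairBallAux


open MaxPairBallAux

/-- Theorem 4 (second part): if `(A, B)` is a maximal `r`-cross-intersecting
pair and `A` is the Hamming ball of radius `l` around `x₀` in coordinates `T`,
then `|T| ≥ l + r`, `B` is the Hamming ball of radius `|T| - l - r` around `x₀`
in coordinates `T`, `p_i ≤ p_j` for `i ∈ T`, `j ∉ T`, and the radii differ by
at most `1`, i.e. `||T| - 2l - r| ≤ 1`. -/
theorem maxPair_ball {n : ℕ} (r : ℕ) (hr : 1 ≤ r) (hrn : r ≤ n)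
    (p : Fin n → ℕ) (hp : ∀ i, 2 ≤ p i)
    (A B : Finset (∀ i, Fin (p i))) (hAB : MaxPair r A B)
    (T : Finset (Fin n)) (x₀ : ∀ i, Fin (p i)) (l : ℕ)
    (hA : A = hBall T x₀ l) :
    l + r ≤ T.card ∧
    B = hBall T x₀ (T.card - l - r) ∧
    (∀ i ∈ T, ∀ j, j ∉ T → p i ≤ p j) ∧
    |(T.card : ℤ) - 2 * l - r| ≤ 1 := by
  classical
  obtain ⟨hcross, hmax⟩ := hAB
  have hx₀A : x₀ ∈ A := by
    rw [hA]
    simp [hBall]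
  have hApos : 0 < A.card := Finset.card_pos.2 ⟨x₀, hx₀A⟩
  have hselfcross : CrossInt r ({x₀} : Finset (∀ i, Fin (p i))) {x₀} := by
    intro x hx y hy
    simp only [Finset.mem_singleton] at hx hy
    rw [hx, hy]
    have huniv : (Finset.univ.filter fun i : Fin n => x₀ i = x₀ i) = Finset.univ := by simp
    rw [huniv, Finset.card_univ, Fintype.card_fin]
    exact hrn
  have hBpos : 0 < B.card := by
    by_contra h
    have hB0 : B.card = 0 := by omega
    have h11 := hmax {x₀} {x₀} hselfcross
    rw [hB0, Nat.mul_zero, Finset.card_singleton] at h11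
    omega
  -- easy direction: far vectors intersect everything in the ball
  have heasy : ∀ y : (∀ i, Fin (p i)), l + r ≤ (T.filter (fun i => y i = x₀ i)).card →
      ∀ x : (∀ i, Fin (p i)), (T.filter (fun i => x i ≠ x₀ i)).card ≤ l →
      r ≤ (Finset.univ.filter (fun i => x i = y i)).card := by
    intro y hy x hx
    have hsub : (T.filter (fun i => y i = x₀ i)) \ (T.filter (fun i => x i ≠ x₀ i))
        ⊆ Finset.univ.filter (fun i => x i = y i) := by
      intro i hi
      simp only [Finset.mem_sdiff, Finset.mem_filter, not_and, not_not, ne_eq] at hi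
      simp only [Finset.mem_filter, Finset.mem_univ, true_and]
      exact (hi.2 hi.1.1).trans hi.1.2.symm
    have hc1 := Finset.card_le_card hsub
    have hc2 : (T.filter (fun i => y i = x₀ i)).card
        ≤ ((T.filter (fun i => y i = x₀ i)) \ (T.filter (fun i => x i ≠ x₀ i))).card
          + (T.filter (fun i => x i ≠ x₀ i)).card :=
      Finset.card_le_card_sdiff_add_card
    omega
  -- adversary: close vectors are killed by some ball element
  have hadv : ∀ y : (∀ i, Fin (p i)), (T.filter (fun i => y i = x₀ i)).card < l + r →
      ∃ x ∈ A, (Finset.univ.filter (fun i => x i = y i)).card < r := by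
    intro y hy
    set M := T.filter (fun i => y i = x₀ i) with hM
    obtain ⟨U, hUM, hUcard⟩ := Finset.exists_subset_card_eq (Nat.min_le_left M.card l)
    have hpi0 : ∀ i : Fin n, 0 < p i := fun i => by have := hp i; omega
    have hpi1 : ∀ i : Fin n, 1 < p i := fun i => by have := hp i; omega
    set oth : ∀ i : Fin n, Fin (p i) → Fin (p i) := fun i v =>
      if v.val = 0 then ⟨1, hpi1 i⟩ else ⟨0, hpi0 i⟩ with hoth
    have hothne : ∀ (i : Fin n) (v : Fin (p i)), oth i v ≠ v := by
      intro i v h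
      simp only [hoth] at h
      by_cases h0 : v.val = 0
      · rw [if_pos h0] at h
        have := congrArg Fin.val h
        simp only at this
        omega
      · rw [if_neg h0] at h
        have := congrArg Fin.val h
        simp only at this
        omega
    have hUT : U ⊆ T := hUM.trans (Finset.filter_subset _ _)
    set x : ∀ i, Fin (p i) := fun i =>
      if i ∈ U then oth i (x₀ i) else if i ∈ T then x₀ i else oth i (y i) with hxdef
    have hxU : ∀ i ∈ U, x i = oth i (x₀ i) := by
      intro i hi; rw [hxdef]; simp only; rw [if_pos hi]
    have hxT : ∀ i ∈ T, i ∉ U → x i = x₀ i := by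
      intro i hiT hiU; rw [hxdef]; simp only; rw [if_neg hiU, if_pos hiT]
    have hxO : ∀ i, i ∉ T → x i = oth i (y i) := by
      intro i hiT; rw [hxdef]; simp only
      rw [if_neg (fun h => hiT (hUT h)), if_neg hiT]
    have hxfil : T.filter (fun i => x i ≠ x₀ i) = U := by
      ext i
      simp only [Finset.mem_filter, ne_eq]
      constructor
      · rintro ⟨hiT, hne⟩
        by_contra hiU
        exact hne (hxT i hiT hiU)
      · intro hiU
        refine ⟨hUT hiU, ?_⟩
        rw [hxU i hiU]
        exact hothne i (x₀ i)
    have hxA : x ∈ A := by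
      rw [hA]
      simp only [hBall, Finset.mem_filter, Finset.mem_univ, true_and]
      rw [hxfil, hUcard]
      omega
    refine ⟨x, hxA, ?_⟩
    have hagree : Finset.univ.filter (fun i => x i = y i) = M \ U := by
      ext i
      simp only [Finset.mem_filter, Finset.mem_univ, true_and, Finset.mem_sdiff]
      by_cases hiU : i ∈ U
      · have hiM : i ∈ M := hUM hiU
        have hiy : y i = x₀ i := by
          rw [hM, Finset.mem_filter] at hiM
          exact hiM.2
        constructor
        · intro h
          exfalso
          rw [hxU i hiU, hiy] at h
          exact hothne i (x₀ i) h
        · rintro ⟨_, h⟩; exact absurd hiU h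
      · by_cases hiT : i ∈ T
        · rw [hxT i hiT hiU]
          constructor
          · intro h
            refine ⟨?_, hiU⟩
            rw [hM, Finset.mem_filter]
            exact ⟨hiT, h.symm⟩
          · rintro ⟨hiM, _⟩
            rw [hM, Finset.mem_filter] at hiM
            exact hiM.2.symm
        · rw [hxO i hiT]
          constructor
          · intro h; exact absurd h (hothne i (y i))
          · rintro ⟨hiM, _⟩
            exfalso
            rw [hM, Finset.mem_filter] at hiM
            exact hiT hiM.1
    rw [hagree, Finset.card_sdiff_of_subset hUM, hUcard]
    omega
  -- B equals the maximal partner family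
  set Bmax : Finset (∀ i, Fin (p i)) :=
    Finset.univ.filter (fun y => l + r ≤ (T.filter (fun i => y i = x₀ i)).card) with hBmaxdef
  have hBsub : B ⊆ Bmax := by
    intro y hyB
    rw [hBmaxdef]
    simp only [Finset.mem_filter, Finset.mem_univ, true_and]
    by_contra hcon
    push_neg at hcon
    obtain ⟨x, hxA, hlt⟩ := hadv y hcon
    exact absurd (hcross x hxA y hyB) (by omega)
  have hcrossABmax : CrossInt r A Bmax := by
    intro x hxA y hyB
    rw [hBmaxdef] at hyB
    simp only [Finset.mem_filter, Finset.mem_univ, true_and] at hyB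
    have hxball : (T.filter (fun i => x i ≠ x₀ i)).card ≤ l := by
      rw [hA] at hxA
      simpa [hBall] using hxA
    exact heasy y hyB x hxball
  have hBeq : B = Bmax := by
    have hle := hmax A Bmax hcrossABmax
    exact Finset.eq_of_subset_of_card_le hBsub
      (Nat.le_of_mul_le_mul_left hle hApos)
  -- l + r ≤ |T|
  obtain ⟨y₀, hy₀⟩ := Finset.card_pos.1 hBpos
  have hy₀m : l + r ≤ (T.filter (fun i => y₀ i = x₀ i)).card := by
    have := hBsub hy₀
    rw [hBmaxdef] at this
    simpa using this
  have hlr : l + r ≤ T.card :=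
    le_trans hy₀m (Finset.card_le_card (Finset.filter_subset _ _))
  set b := T.card - l - r with hbdef
  have hbsum : l + r + b = T.card := by omega
  -- B is the ball of radius b
  have hBball : B = hBall T x₀ b := by
    rw [hBeq]
    ext y
    rw [hBmaxdef]
    simp only [hBall, Finset.mem_filter, Finset.mem_univ, true_and, ne_eq]
    have hsum := Finset.card_filter_add_card_filter_not
      (s := T) (p := fun i => y i = x₀ i)
    omega
  -- now the quantitative part
  set P := ∏ i ∈ Tᶜ, p i with hPdef
  have hP : 1 ≤ P := Finset.one_le_prod' (fun i _ => by have := hp i; omega)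
  have hcardA : A.card = P * FF p T l := by rw [hA]; exact card_hBall (p := p) T x₀ l
  have hcardB : B.card = P * FF p T b := by rw [hBball]; exact card_hBall (p := p) T x₀ b
  -- radius gap at most one, case b large
  have h4a : ¬ (l + 2 ≤ b) := by
    intro hcase
    obtain ⟨c, hc⟩ : ∃ c, b = l + 2 + c := ⟨b - l - 2, by omega⟩
    have hkey := keyF p hp T l c (by omega)
    have hcross' := crossInt_hBall (p := p) r T x₀ (a := l + 1) (b := l + 1 + c) (by omega)
    have hle := hmax _ _ hcross'
    rw [card_hBall, card_hBall, hcardA, hcardB, hc] at hle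
    have h1 : P * FF p T (l+1) * (P * FF p T (l+1+c))
        = P * P * (FF p T (l+1) * FF p T (l+1+c)) := by ring
    have h2 : P * FF p T l * (P * FF p T (l+2+c))
        = P * P * (FF p T l * FF p T (l+2+c)) := by ring
    rw [h1, h2] at hle
    have := Nat.le_of_mul_le_mul_left hle (by positivity)
    omega
  -- radius gap at most one, case l large
  have h4b : ¬ (b + 2 ≤ l) := by
    intro hcase
    obtain ⟨c, hc⟩ : ∃ c, l = b + 2 + c := ⟨l - b - 2, by omega⟩
    have hkey := keyF p hp T b c (by omega)
    have hcross' := crossInt_hBall (p := p) r T x₀ (a := b + 1 + c) (b := b + 1) (by omega)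
    have hle := hmax _ _ hcross'
    rw [card_hBall, card_hBall, hcardA, hcardB, hc] at hle
    have h1 : P * FF p T (b+1+c) * (P * FF p T (b+1))
        = P * P * (FF p T (b+1) * FF p T (b+1+c)) := by ring
    have h2 : P * FF p T (b+2+c) * (P * FF p T b)
        = P * P * (FF p T b * FF p T (b+2+c)) := by ring
    rw [h1, h2] at hle
    have := Nat.le_of_mul_le_mul_left hle (by positivity)
    omega
  -- the size condition on p
  have h3 : ∀ i ∈ T, ∀ j, j ∉ T → p i ≤ p j := by
    intro i hiT j hjT
    by_contra hcon
    push_neg at hcon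
    set S := T.erase i with hSdef
    have hiS : i ∉ S := Finset.notMem_erase i T
    have hjS : j ∉ S := fun h => hjT (Finset.erase_subset _ _ h)
    have hTi : insert i S = T := Finset.insert_erase hiT
    set T' := insert j S with hT'def
    have hij : i ≠ j := fun h => hjT (h ▸ hiT)
    have hScard : S.card = T.card - 1 := Finset.card_erase_of_mem hiT
    have hT'card : T'.card = T.card := by
      rw [hT'def, Finset.card_insert_of_notMem hjS, hScard]
      omega
    have hfl : p j * FF p T l < p i * FF p T' l := by
      have := swapFactor p hp hiS hjS hcon (k := l) (by omega)
      rwa [hTi] at this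
    have hfb : p j * FF p T b < p i * FF p T' b := by
      have := swapFactor p hp hiS hjS hcon (k := b) (by omega)
      rwa [hTi] at this
    set R := ∏ k ∈ Tᶜ.erase j, p k with hRdef
    have hR : 1 ≤ R := Finset.one_le_prod' (fun k _ => by have := hp k; omega)
    have hjTc : j ∈ Tᶜ := Finset.mem_compl.2 hjT
    have hPR : P = p j * R := by
      rw [hPdef, hRdef, Finset.mul_prod_erase Tᶜ p hjTc]
    have hcompl : T'ᶜ = insert i (Tᶜ.erase j) := by
      ext k
      simp only [hT'def, hSdef, Finset.mem_compl, Finset.mem_insert, Finset.mem_erase]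
      by_cases hk : k = i
      · subst hk
        simp [hiT, hij]
      · by_cases hk2 : k = j
        · subst hk2
          simp [hjT, hij, Ne.symm hij]
        · by_cases hk3 : k ∈ T <;> simp [hk, hk2, hk3]
    have hiTc : i ∉ Tᶜ.erase j := fun h =>
      (Finset.mem_compl.1 (Finset.mem_of_mem_erase h)) hiT
    have hP'R : (∏ k ∈ T'ᶜ, p k) = p i * R := by
      rw [hcompl, Finset.prod_insert hiTc, hRdef]
    have hcross' := crossInt_hBall (p := p) r T' x₀ (a := l) (b := b)
      (by rw [hT'card]; omega)
    have hle := hmax _ _ hcross'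
    rw [card_hBall, card_hBall, hcardA, hcardB, hP'R, hPR] at hle
    have hstrict : (p j * FF p T l) * (p j * FF p T b)
        < (p i * FF p T' l) * (p i * FF p T' b) :=
      mul_lt_mul'' hfl hfb (Nat.zero_le _) (Nat.zero_le _)
    have h1 : p i * R * FF p T' l * (p i * R * FF p T' b)
        = R * R * ((p i * FF p T' l) * (p i * FF p T' b)) := by ring
    have h2 : p j * R * FF p T l * (p j * R * FF p T b)
        = R * R * ((p j * FF p T l) * (p j * FF p T b)) := by ring
    rw [h1, h2] at hle
    have := Nat.le_of_mul_le_mul_left hle (by positivity)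
    omega
  refine ⟨hlr, hBball, h3, ?_⟩
  rw [abs_le]
  constructor <;> [skip; skip] <;> omega
end

section
/- Let p = (p_1,…,p_n) be a size vector, let T ⊆ [n], let x ∈ S_p, and for 0 ≤ l ≤ |T| let B_l denote the Hamming ball of radius l around x in coordinates T. Then the sequence (|B_l|) is strictly log-concave: for every l with 1 ≤ l < |T|, we have |B_l|² > |B_{l−1}|·|B_{l+1}|. -/
open Finset

set_option linter.unusedSectionVars false

section esymAux
variable {ι : Type*} [DecidableEq ι]

/-- Sum over `k`-subsets of `T` of the product of `q` (elementary symmetric sums). -/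
def esymAux (T : Finset ι) (q : ι → ℕ) (k : ℕ) : ℕ :=
  ∑ S ∈ T.powersetCard k, ∏ i ∈ S, q i

lemma esymAux_zero (T : Finset ι) (q : ι → ℕ) : esymAux T q 0 = 1 := by simp [esymAux]

lemma esymAux_empty (q : ι → ℕ) (k : ℕ) : esymAux (∅ : Finset ι) q (k+1) = 0 := by
  simp [esymAux]

lemma esymAux_insert {i : ι} {T : Finset ι} (hi : i ∉ T) (q : ι → ℕ) (k : ℕ) :
    esymAux (insert i T) q (k+1) = esymAux T q (k+1) + q i * esymAux T q k := by
  rw [esymAux, powersetCard_succ_insert hi, sum_union, esymAux, esymAux, Finset.mul_sum,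
    sum_image]
  · congr 1
    refine sum_congr rfl fun S hS => ?_
    rw [mem_powersetCard] at hS
    rw [prod_insert (fun h => hi (hS.1 h))]
  · intro S hS S' hS' h
    rw [mem_coe, mem_powersetCard] at hS hS'
    have : ∀ a : Finset ι, a ⊆ T → erase (insert i a) i = a := fun a ha => by
      rw [erase_insert (fun h => hi (ha h))]
    rw [← this S hS.1, ← this S' hS'.1, h]
  · rw [disjoint_right]
    intro S hS hS'
    simp only [mem_image] at hS
    obtain ⟨a, ha, rfl⟩ := hS
    rw [mem_powersetCard] at hS'
    exact hi (hS'.1 (mem_insert_self i a))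

/-- The chained log-concavity inequality for elementary symmetric sums. -/
lemma esymAux_key (T : Finset ι) (q : ι → ℕ) :
    ∀ k m : ℕ, k ≤ m →
      esymAux T q k * esymAux T q (m+1) ≤ esymAux T q (k+1) * esymAux T q m := by
  induction T using Finset.induction_on with
  | empty => intro k m _; simp [esymAux_empty]
  | insert i T hi hIH =>
    intro k m hkm
    rcases eq_or_lt_of_le hkm with rfl | hlt
    · exact le_of_eq (mul_comm _ _)
    match k, m, hlt with
    | 0, m+1, _ =>
      have h1 := hIH 0 (m+1) (Nat.zero_le _)
      rw [esymAux_zero] at h1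
      rw [esymAux_zero, esymAux_insert hi, esymAux_insert hi, esymAux_insert hi, esymAux_zero]
      nlinarith [h1, Nat.zero_le (q i * esymAux T q m), Nat.zero_le (q i)]
    | k+1, m+1, hlt =>
      have hkm' : k + 1 ≤ m := Nat.lt_succ_iff.mp hlt
      obtain ⟨d, rfl⟩ : ∃ d, m = k + 1 + d := ⟨m - (k+1), by omega⟩
      rw [esymAux_insert hi, esymAux_insert hi, esymAux_insert hi, esymAux_insert hi]
      have h1 := hIH (k+1) (k+1+d+1) (by omega)
      have h2 := hIH k (k+1+d) (by omega)
      have h3a := hIH k (k+1+d+1) (by omega)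
      have h3b := hIH (k+1) (k+1+d) (by omega)
      have ht := le_trans h3a h3b
      nlinarith [h1, mul_le_mul_right ht (q i), mul_le_mul_right h2 (q i * q i),
        Nat.zero_le (q i)]

lemma one_le_esymAux {T : Finset ι} {q : ι → ℕ} {k : ℕ}
    (hq : ∀ i ∈ T, 1 ≤ q i) (hk : k ≤ T.card) : 1 ≤ esymAux T q k := by
  obtain ⟨S, hST, hcard⟩ := Finset.exists_subset_card_eq hk
  have hmem : S ∈ T.powersetCard k := mem_powersetCard.mpr ⟨hST, hcard⟩
  calc 1 ≤ ∏ i ∈ S, q i := Finset.one_le_prod' (fun i hi => hq i (hST hi))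
    _ ≤ esymAux T q k := by
        rw [esymAux]
        exact Finset.single_le_sum (f := fun S => ∏ i ∈ S, q i)
          (fun _ _ => Nat.zero_le _) hmem

end esymAux

lemma hBall_fiber_card {n : ℕ} (p : Fin n → ℕ) (T : Finset (Fin n)) (x : ∀ i, Fin (p i))
    (S : Finset (Fin n)) (hS : S ⊆ T) :
    (univ.filter (fun y : ∀ i, Fin (p i) => T.filter (fun i => y i ≠ x i) = S)).card
      = (∏ i ∈ S, (p i - 1)) * ∏ i ∈ Tᶜ, p i := by
  classical
  have hset : univ.filter (fun y : ∀ i, Fin (p i) => T.filter (fun i => y i ≠ x i) = S)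
      = Fintype.piFinset (fun i =>
          if i ∈ S then univ.filter (· ≠ x i) else if i ∈ T then {x i} else univ) := by
    ext y
    simp only [mem_filter, mem_univ, true_and, Fintype.mem_piFinset]
    constructor
    · intro h i
      by_cases hiS : i ∈ S
      · have : i ∈ T.filter (fun i => y i ≠ x i) := h ▸ hiS
        simp only [mem_filter] at this
        simp [hiS, this.2]
      · by_cases hiT : i ∈ T
        · have : i ∉ T.filter (fun i => y i ≠ x i) := h ▸ hiS
          simp only [mem_filter, hiT, true_and, not_not] at this
          simp [hiS, hiT, this]
        · simp [hiS, hiT]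
    · intro h
      ext i
      simp only [mem_filter]
      constructor
      · rintro ⟨hiT, hne⟩
        by_contra hiS
        have := h i
        simp [hiS, hiT] at this
        exact hne this
      · intro hiS
        have := h i
        simp [hiS] at this
        exact ⟨hS hiS, this⟩
  rw [hset, Fintype.card_piFinset]
  rw [← Finset.prod_mul_prod_compl T]
  rw [← Finset.prod_sdiff hS]
  have e1 : ∀ i ∈ S, ((if i ∈ S then univ.filter (· ≠ x i) else if i ∈ T then {x i} else univ)).card = p i - 1 := by
    intro i hiS
    simp only [if_pos hiS]
    rw [Finset.filter_ne', Finset.card_erase_of_mem (mem_univ _), card_univ, Fintype.card_fin]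
  have e2 : ∀ i ∈ T \ S, ((if i ∈ S then univ.filter (· ≠ x i) else if i ∈ T then {x i} else univ)).card = 1 := by
    intro i hi
    rw [mem_sdiff] at hi
    simp [hi.1, hi.2]
  have e3 : ∀ i ∈ Tᶜ, ((if i ∈ S then univ.filter (· ≠ x i) else if i ∈ T then {x i} else univ)).card = p i := by
    intro i hi
    rw [mem_compl] at hi
    have hiS : i ∉ S := fun h => hi (hS h)
    simp [hi, hiS]
  rw [prod_congr rfl e1, prod_congr rfl e2, prod_congr rfl e3, prod_const_one, one_mul]

lemma hBall_card_eq {n : ℕ} (p : Fin n → ℕ) (T : Finset (Fin n)) (x : ∀ i, Fin (p i))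
    (l : ℕ) :
    (hBall T x l).card
      = (∏ i ∈ Tᶜ, p i) * ∑ k ∈ Finset.range (l+1), esymAux T (fun i => p i - 1) k := by
  classical
  have hstep := Finset.card_eq_sum_card_fiberwise
    (f := fun y : ∀ i, Fin (p i) => T.filter (fun i => y i ≠ x i))
    (s := hBall T x l) (t := T.powerset.filter (fun S => S.card ≤ l))
    (by
      intro y hy
      simp only [hBall, mem_coe, mem_filter, mem_univ, true_and] at hy
      simp only [mem_coe, mem_filter, mem_powerset]
      exact ⟨filter_subset _ _, hy⟩)
  have hfib : ∀ S ∈ T.powerset.filter (fun S => S.card ≤ l),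
      ((hBall T x l).filter (fun y => T.filter (fun i => y i ≠ x i) = S)).card
        = (∏ i ∈ S, (p i - 1)) * ∏ i ∈ Tᶜ, p i := by
    intro S hSm
    simp only [mem_filter, mem_powerset] at hSm
    rw [← hBall_fiber_card p T x S hSm.1]
    congr 1
    ext y
    simp only [hBall, mem_filter, mem_univ, true_and, and_iff_right_iff_imp]
    intro h
    rw [h]; exact hSm.2
  rw [hstep, sum_congr rfl hfib]
  have hsplit : T.powerset.filter (fun S => S.card ≤ l)
      = (Finset.range (l+1)).biUnion (fun k => T.powersetCard k) := by
    ext S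
    simp only [mem_filter, mem_powerset, mem_biUnion, Finset.mem_range, mem_powersetCard]
    constructor
    · intro h; exact ⟨S.card, Nat.lt_succ_of_le h.2, h.1, rfl⟩
    · intro h
      obtain ⟨k, hk, h1, h2⟩ := h
      exact ⟨h1, h2 ▸ Nat.lt_succ_iff.mp hk⟩
  have hdisj : ((Finset.range (l+1) : Finset ℕ) : Set ℕ).PairwiseDisjoint
      (fun k => T.powersetCard k) := by
    intro a _ b _ hab
    rw [Function.onFun, Finset.disjoint_left]
    intro S hSa hSb
    rw [mem_powersetCard] at hSa hSb
    exact hab (hSa.2 ▸ hSb.2)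
  rw [hsplit, sum_biUnion hdisj, Finset.mul_sum]
  refine Finset.sum_congr rfl fun k _ => ?_
  rw [← Finset.sum_mul, esymAux, mul_comm]

/-- The sizes of Hamming balls of increasing radii around a fixed vector in a
fixed set of coordinates form a strictly log-concave sequence:
`|B_l|² > |B_{l-1}|·|B_{l+1}|` for `1 ≤ l < |T|`. -/
theorem hBall_card_strict_log_concave {n : ℕ} (p : Fin n → ℕ)
    (hp : ∀ i, 2 ≤ p i) (T : Finset (Fin n)) (x : ∀ i, Fin (p i))
    (l : ℕ) (hl1 : 1 ≤ l) (hl2 : l < T.card) :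
    (hBall T x (l - 1)).card * (hBall T x (l + 1)).card <
      (hBall T x l).card ^ 2 := by
  classical
  set q : Fin n → ℕ := fun i => p i - 1 with hq
  set C : ℕ := ∏ i ∈ Tᶜ, p i with hC
  have hCpos : 0 < C := Finset.prod_pos (fun i _ => by have := hp i; omega)
  set a : ℕ → ℕ := esymAux T q with ha
  rw [hBall_card_eq, hBall_card_eq, hBall_card_eq]
  have hll : l - 1 + 1 = l := by omega
  rw [hll]
  -- the key numeric inequality on partial sums
  have hterm : ∀ k ∈ Finset.range l, a k * a (l+1) ≤ a (k+1) * a l := by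
    intro k hk
    rw [Finset.mem_range] at hk
    exact esymAux_key T q k l (le_of_lt hk)
  have hsum1 : (∑ k ∈ Finset.range l, a k) * a (l+1)
      ≤ ∑ k ∈ Finset.range l, a (k+1) * a l := by
    rw [Finset.sum_mul]
    exact Finset.sum_le_sum hterm
  have hal : 1 ≤ a l :=
    one_le_esymAux (fun i hi => by have := hp i; simp only [hq]; omega) (le_of_lt hl2)
  have hsum2 : (∑ k ∈ Finset.range (l+1), a k) * a l
      = (∑ k ∈ Finset.range l, a (k+1) * a l) + a 0 * a l := by
    rw [Finset.sum_mul, Finset.sum_range_succ']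
  have hkey : (∑ k ∈ Finset.range l, a k) * a (l+1)
      < (∑ k ∈ Finset.range (l+1), a k) * a l := by
    rw [hsum2]
    have hpos : 0 < a 0 * a l := by
      rw [ha, esymAux_zero, one_mul]
      exact hal
    exact Nat.lt_of_le_of_lt hsum1 (Nat.lt_add_of_pos_right hpos)
  have hml : (∑ k ∈ Finset.range (l+1), a k)
      = (∑ k ∈ Finset.range l, a k) + a l := Finset.sum_range_succ a l
  have hml1 : (∑ k ∈ Finset.range (l+1+1), a k)
      = (∑ k ∈ Finset.range (l+1), a k) + a (l+1) := Finset.sum_range_succ a (l+1)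
  set M0 : ℕ := ∑ k ∈ Finset.range l, a k with hM0
  set M1 : ℕ := ∑ k ∈ Finset.range (l+1), a k with hM1
  have hMlt : M0 * (M1 + a (l+1)) < M1 ^ 2 := by
    have h1 : M1 = M0 + a l := hml
    nlinarith [hkey, h1]
  rw [hml1]
  calc C * M0 * (C * (M1 + a (l+1))) = C * C * (M0 * (M1 + a (l+1))) := by ring
    _ < C * C * M1 ^ 2 :=
        mul_lt_mul_of_pos_left hMlt (Nat.mul_pos hCpos hCpos)
    _ = (C * M1) ^ 2 := by ring
end

section
/- Let 1 ≤ r ≤ n, let p = (p_1,…,p_n) be a size vector, and let (A, B) be a maximal pair of r-cross-intersecting families in S_p. If a coordinate i ∈ [n] is relevant for A or for B, then there exists a value l ∈ [p_i] such that |{x ∈ A : x_i ≠ l}| ≤ |A|/p_i and |{y ∈ B : y_i ≠ l}| ≤ |B|/p_i. -/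
open Finset

namespace Lemma9Aux

variable {n : ℕ} {p : Fin n → ℕ}

/-- number of coordinates where `x` and `y` agree -/
def agr (x y : ∀ j, Fin (p j)) : ℕ := (univ.filter (fun j => x j = y j)).card

/-- number of coordinates other than `i` where `x` and `y` agree -/
def agrO (i : Fin n) (x y : ∀ j, Fin (p j)) : ℕ :=
  (univ.filter (fun j => j ≠ i ∧ x j = y j)).card

lemma agr_comm (x y : ∀ j, Fin (p j)) : agr x y = agr y x := by
  unfold agr; congr 1; apply filter_congr; intro j _; simp [eq_comm]

lemma agrO_le_agr (i : Fin n) (x y : ∀ j, Fin (p j)) : agrO i x y ≤ agr x y := by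
  apply card_le_card; intro j hj
  simp only [mem_filter] at *; exact ⟨hj.1, hj.2.2⟩

lemma agr_le_agrO_succ (i : Fin n) (x y : ∀ j, Fin (p j)) :
    agr x y ≤ agrO i x y + 1 := by
  classical
  have hs : (univ.filter (fun j => x j = y j)) ⊆
      insert i (univ.filter (fun j => j ≠ i ∧ x j = y j)) := by
    intro j hj
    simp only [mem_filter, mem_insert] at *
    by_cases h : j = i
    · exact Or.inl h
    · exact Or.inr ⟨hj.1, h, hj.2⟩
  calc agr x y ≤ (insert i (univ.filter (fun j => j ≠ i ∧ x j = y j))).card :=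
        card_le_card hs
    _ ≤ agrO i x y + 1 := card_insert_le _ _

lemma agr_eq_agrO_of_ne {i : Fin n} {x y : ∀ j, Fin (p j)} (h : x i ≠ y i) :
    agr x y = agrO i x y := by
  unfold agr agrO; congr 1; apply filter_congr; intro j _
  by_cases hj : j = i
  · subst hj; simp [h]
  · simp [hj]

lemma agrO_congr {i : Fin n} {x x' y y' : ∀ j, Fin (p j)}
    (hx : ∀ j, j ≠ i → x' j = x j) (hy : ∀ j, j ≠ i → y' j = y j) :
    agrO i x' y' = agrO i x y := by
  unfold agrO; congr 1; apply filter_congr; intro j _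
  by_cases hj : j = i
  · simp [hj]
  · simp only [hj, ne_eq, not_false_eq_true, true_and]
    rw [hx j hj, hy j hj]

/-- the full fiber through `x` in direction `i` -/
def Fib (i : Fin n) (x : ∀ j, Fin (p j)) : Finset (∀ j, Fin (p j)) :=
  (univ : Finset (Fin (p i))).image (fun t => Function.update x i t)

lemma mem_Fib {i : Fin n} {x z : ∀ j, Fin (p j)} :
    z ∈ Fib i x ↔ ∀ j, j ≠ i → z j = x j := by
  constructor
  · intro hz j hj
    simp only [Fib, mem_image] at hz
    obtain ⟨t, -, rfl⟩ := hz
    exact Function.update_of_ne hj _ _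
  · intro h
    simp only [Fib, mem_image]
    refine ⟨z i, mem_univ _, ?_⟩
    funext j
    by_cases hj : j = i
    · subst hj; simp
    · rw [Function.update_of_ne hj]
      exact (h j hj).symm

lemma self_mem_Fib {i : Fin n} (x : ∀ j, Fin (p j)) : x ∈ Fib i x :=
  mem_Fib.2 (fun _ _ => rfl)

lemma update_mem_Fib {i : Fin n} (x : ∀ j, Fin (p j)) (t : Fin (p i)) :
    Function.update x i t ∈ Fib i x :=
  mem_image_of_mem _ (mem_univ t)

lemma card_Fib (i : Fin n) (x : ∀ j, Fin (p j)) : (Fib i x).card = p i := by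
  rw [Fib, card_image_of_injective, card_univ, Fintype.card_fin]
  intro a b hab
  have := congrFun hab i
  simpa using this

lemma agrO_of_mem_Fib {i : Fin n} {x y u v : ∀ j, Fin (p j)}
    (hu : u ∈ Fib i x) (hv : v ∈ Fib i y) : agrO i u v = agrO i x y :=
  agrO_congr (mem_Fib.1 hu) (mem_Fib.1 hv)

lemma exists_ne_val {P : ℕ} (hP : 2 ≤ P) (t : Fin P) : ∃ s : Fin P, s ≠ t := by
  have : 1 < Fintype.card (Fin P) := by simpa using (show 1 < P by omega)
  exact Fintype.exists_ne_of_one_lt_card this t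


lemma crossInt_iff {r : ℕ} {A B : Finset (∀ j, Fin (p j))} :
    CrossInt r A B ↔ ∀ x ∈ A, ∀ y ∈ B, r ≤ agr x y := Iff.rfl

lemma crossInt_swap {r : ℕ} {A B : Finset (∀ j, Fin (p j))} (h : CrossInt r A B) :
    CrossInt r B A := by
  intro y hy x hx
  have h1 : r ≤ agr x y := h x hx y hy
  have h2 : r ≤ agr y x := by rwa [agr_comm] at h1
  exact h2

lemma maxPair_swap {r : ℕ} {A B : Finset (∀ j, Fin (p j))} (h : MaxPair r A B) :
    MaxPair r B A := by
  refine ⟨crossInt_swap h.1, fun A' B' hC => ?_⟩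
  rw [mul_comm]
  have := h.2 B' A' (crossInt_swap hC)
  rwa [mul_comm (#A)] at this

section Structure

variable {r : ℕ} {A B : Finset (∀ j, Fin (p j))} {i : Fin n}

/-- the set of "lonely" elements of `A`: their fiber meets `A` only in them -/
def Lon (i : Fin n) (A : Finset (∀ j, Fin (p j))) : Finset (∀ j, Fin (p j)) :=
  A.filter (fun x => ∀ t, t ≠ x i → Function.update x i t ∉ A)

/-- the set of elements of `A` whose whole fiber is inside `A` -/
def Ful (i : Fin n) (A : Finset (∀ j, Fin (p j))) : Finset (∀ j, Fin (p j)) :=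
  A.filter (fun x => ∀ t, Function.update x i t ∈ A)

lemma Lon_subset : Lon i A ⊆ A := filter_subset _ _
lemma Ful_subset : Ful i A ⊆ A := filter_subset _ _

lemma not_lon_and_ful (hP : 2 ≤ p i) (hL : x ∈ Lon i A) (hF : x ∈ Ful i A) : False := by
  simp only [Lon, Ful, mem_filter] at hL hF
  obtain ⟨s, hs⟩ := exists_ne_val hP (x i)
  exact hL.2 s hs (hF.2 s)

lemma eq_of_mem_Fib_lonely (hx : x ∈ Lon i A) (hz : z ∈ A) (hf : z ∈ Fib i x) :
    z = x := by
  simp only [Lon, mem_filter] at hx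
  have hoff := mem_Fib.1 hf
  by_cases h : z i = x i
  · funext j
    by_cases hj : j = i
    · subst hj; exact h
    · exact hoff j hj
  · exfalso
    apply hx.2 (z i) h
    have : Function.update x i (z i) = z := by
      funext j
      by_cases hj : j = i
      · subst hj; simp
      · rw [Function.update_of_ne hj]; exact (hoff j hj).symm
    rwa [this]

lemma fib_disjoint (hx : x ∈ Lon i A) (hy : y ∈ Lon i A) (hne : x ≠ y) :
    Disjoint (Fib i x) (Fib i y) := by
  classical
  rw [Finset.disjoint_left]
  intro z hzx hzy
  apply hne
  have h1 := mem_Fib.1 hzx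
  have h2 := mem_Fib.1 hzy
  have : x ∈ Fib i y := mem_Fib.2 (fun j hj => ((h1 j hj).symm.trans (h2 j hj)))
  exact (eq_of_mem_Fib_lonely hy (Lon_subset hx) this)

lemma card_biUnion_fib {S : Finset (∀ j, Fin (p j))} (hS : S ⊆ Lon i A) :
    (S.biUnion (Fib i)).card = p i * S.card := by
  classical
  rw [card_biUnion (fun x hx y hy hne => fib_disjoint (hS hx) (hS hy) hne)]
  rw [Finset.sum_congr rfl (fun x _ => card_Fib i x), Finset.sum_const, smul_eq_mul,
    mul_comm]

lemma ful_disjoint_expansion (hP : 2 ≤ p i) {S : Finset (∀ j, Fin (p j))}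
    (hS : S ⊆ Lon i A) : Disjoint (Ful i A) (S.biUnion (Fib i)) := by
  classical
  rw [Finset.disjoint_left]
  intro z hzF hzU
  simp only [mem_biUnion] at hzU
  obtain ⟨x, hxS, hzx⟩ := hzU
  have := eq_of_mem_Fib_lonely (hS hxS) (Ful_subset hzF) hzx
  subst this
  exact not_lon_and_ful hP (hS hxS) hzF

lemma agrO_ge_of (hC : CrossInt r A B) (hx : x ∈ A) (hy : y ∈ B)
    (hP : 2 ≤ p i)
    (h : (∀ t, Function.update x i t ∈ A) ∨ (∀ t, Function.update y i t ∈ B) ∨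
      x i ≠ y i) : r ≤ agrO i x y := by
  rcases h with hF | hF | hne
  · obtain ⟨s, hs⟩ := exists_ne_val hP (y i)
    have hx' : Function.update x i s ∈ A := hF s
    have h1 : r ≤ agr (Function.update x i s) y := hC _ hx' _ hy
    have hne' : (Function.update x i s) i ≠ y i := by simpa using hs
    rw [agr_eq_agrO_of_ne hne'] at h1
    rwa [agrO_congr (fun j hj => Function.update_of_ne hj _ _) (fun _ _ => rfl)] at h1
  · obtain ⟨s, hs⟩ := exists_ne_val hP (x i)
    have hy' : Function.update y i s ∈ B := hF s
    have h1 : r ≤ agr x (Function.update y i s) := hC _ hx _ hy'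
    have hne' : x i ≠ (Function.update y i s) i := by
      simp only [Function.update_self]
      exact fun hc => hs (hc.symm)
    rw [agr_eq_agrO_of_ne hne'] at h1
    rwa [agrO_congr (fun _ _ => rfl) (fun j hj => Function.update_of_ne hj _ _)] at h1
  · have h1 : r ≤ agr x y := hC _ hx _ hy
    rwa [agr_eq_agrO_of_ne hne] at h1

/-- THE master competitor bound: pick fiber-expansions of a set of lonely
elements of `A` and of `B` with crosswise distinct `i`-values, together with
the full parts. -/
lemma master (hmax : MaxPair r A B) (hP : 2 ≤ p i)
    {SA SB : Finset (∀ j, Fin (p j))} (hSA : SA ⊆ Lon i A) (hSB : SB ⊆ Lon i B)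
    (hval : ∀ x ∈ SA, ∀ y ∈ SB, x i ≠ y i) :
    ((Ful i A).card + p i * SA.card) * ((Ful i B).card + p i * SB.card) ≤
      A.card * B.card := by
  classical
  set A' := Ful i A ∪ SA.biUnion (Fib i) with hA'
  set B' := Ful i B ∪ SB.biUnion (Fib i) with hB'
  have hcardA : A'.card = (Ful i A).card + p i * SA.card := by
    rw [hA', card_union_of_disjoint (ful_disjoint_expansion hP hSA), card_biUnion_fib hSA]
  have hcardB : B'.card = (Ful i B).card + p i * SB.card := by
    rw [hB', card_union_of_disjoint (ful_disjoint_expansion hP hSB), card_biUnion_fib hSB]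
  have hkey : ∀ u ∈ A', ∃ x ∈ A, u ∈ Fib i x ∧
      ((∀ t, Function.update x i t ∈ A) ∨ x ∈ SA) := by
    intro u hu
    rw [hA', mem_union] at hu
    rcases hu with hu | hu
    · simp only [Ful, mem_filter] at hu
      exact ⟨u, hu.1, self_mem_Fib u, Or.inl hu.2⟩
    · simp only [mem_biUnion] at hu
      obtain ⟨x, hxS, hux⟩ := hu
      exact ⟨x, Lon_subset (hSA hxS), hux, Or.inr hxS⟩
  have hkeyB : ∀ v ∈ B', ∃ y ∈ B, v ∈ Fib i y ∧
      ((∀ t, Function.update y i t ∈ B) ∨ y ∈ SB) := by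
    intro v hv
    rw [hB', mem_union] at hv
    rcases hv with hv | hv
    · simp only [Ful, mem_filter] at hv
      exact ⟨v, hv.1, self_mem_Fib v, Or.inl hv.2⟩
    · simp only [mem_biUnion] at hv
      obtain ⟨y, hyS, hvy⟩ := hv
      exact ⟨y, Lon_subset (hSB hyS), hvy, Or.inr hyS⟩
  have hcross : CrossInt r A' B' := by
    intro u hu v hv
    obtain ⟨x, hxA, hux, hxc⟩ := hkey u hu
    obtain ⟨y, hyB, hvy, hyc⟩ := hkeyB v hv
    have hdisj : (∀ t, Function.update x i t ∈ A) ∨ (∀ t, Function.update y i t ∈ B) ∨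
        x i ≠ y i := by
      rcases hxc with hx | hx
      · exact Or.inl hx
      rcases hyc with hy | hy
      · exact Or.inr (Or.inl hy)
      · exact Or.inr (Or.inr (hval x hx y hy))
    have h1 : r ≤ agrO i x y := agrO_ge_of hmax.1 hxA hyB hP hdisj
    have h2 : agrO i u v = agrO i x y := agrO_of_mem_Fib hux hvy
    calc r ≤ agrO i u v := by rw [h2]; exact h1
      _ ≤ agr u v := agrO_le_agr i u v
  have := hmax.2 A' B' hcross
  rwa [hcardA, hcardB] at this

/-- both families of a maximal pair are nonempty (needs `r ≤ n`). -/
lemma cards_pos (hmax : MaxPair r A B) (hrn : r ≤ n) (hp : ∀ j, 2 ≤ p j) :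
    0 < A.card ∧ 0 < B.card := by
  classical
  set x0 : ∀ j, Fin (p j) := fun j => ⟨0, lt_of_lt_of_le (by norm_num) (hp j)⟩ with hx0
  have hC : CrossInt r {x0} {x0} := by
    intro x hx y hy
    simp only [mem_singleton] at hx hy
    subst hx; subst hy
    have : (univ.filter (fun j => x0 j = x0 j)) = univ := by
      apply filter_true_of_mem; intro j _; rfl
    rw [this, card_univ, Fintype.card_fin]
    exact hrn
  have := hmax.2 {x0} {x0} hC
  simp only [card_singleton, one_mul] at this
  constructor
  · by_contra h
    push_neg at h
    interval_cases hA : A.card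
    · simp at this
  · by_contra h
    push_neg at h
    interval_cases hB : B.card
    · simp at this

/-- if some vector of `A` misses a fiber-mate but agrees with all of `B`
off coordinate `i`, we could grow `A`: contradiction with maximality. -/
lemma no_grow (hmax : MaxPair r A B) (hBpos : 0 < B.card) (hx : x ∈ A)
    (hmiss : ∃ s, Function.update x i s ∉ A)
    (hagr : ∀ y ∈ B, r ≤ agrO i x y) : False := by
  classical
  set A' := A ∪ Fib i x with hA'
  have hcross : CrossInt r A' B := by
    intro u hu y hy
    rw [hA', mem_union] at hu
    rcases hu with hu | hu
    · exact hmax.1 u hu y hy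
    · have h1 : agrO i u y = agrO i x y :=
        agrO_of_mem_Fib hu (self_mem_Fib y)
      calc r ≤ agrO i u y := by rw [h1]; exact hagr y hy
        _ ≤ agr u y := agrO_le_agr i u y
  obtain ⟨s, hs⟩ := hmiss
  have hss : A ⊂ A' := by
    rw [hA']
    refine Finset.ssubset_iff_of_subset subset_union_left |>.2 ?_
    exact ⟨Function.update x i s, mem_union_right _ (update_mem_Fib x s), hs⟩
  have hlt : A.card < A'.card := card_lt_card hss
  have := hmax.2 A' B hcross
  nlinarith

/-- every element of `A` is full or lonely. -/
lemma full_or_lonely (hmax : MaxPair r A B) (hP : 2 ≤ p i) (hBpos : 0 < B.card)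
    (hx : x ∈ A) : x ∈ Ful i A ∨ x ∈ Lon i A := by
  classical
  by_contra hcon
  push_neg at hcon
  simp only [Ful, Lon, mem_filter, hx, true_and, not_forall] at hcon
  obtain ⟨⟨s, hs⟩, ⟨t, ht, htA⟩⟩ := hcon
  rw [not_not] at htA
  apply no_grow hmax hBpos hx ⟨s, hs⟩
  intro y hy
  by_cases hxy : x i = y i
  · have h2 : r ≤ agr (Function.update x i t) y := hmax.1 _ htA _ hy
    have hne : (Function.update x i t) i ≠ y i := by
      simp only [Function.update_self]
      rw [← hxy]; exact ht
    rw [agr_eq_agrO_of_ne hne] at h2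
    rwa [agrO_congr (fun j hj => Function.update_of_ne hj _ _) (fun _ _ => rfl)] at h2
  · have h1 : r ≤ agr x y := hmax.1 _ hx _ hy
    rwa [agr_eq_agrO_of_ne hxy] at h1

/-- a lonely element of `A` forces a lonely element of `B`. -/
lemma lon_transfer (hmax : MaxPair r A B) (hP : 2 ≤ p i)
    (hApos : 0 < A.card) (hBpos : 0 < B.card)
    (hLA : (Lon i A).Nonempty) : (Lon i B).Nonempty := by
  classical
  obtain ⟨x, hx⟩ := hLA
  have hxA : x ∈ A := Lon_subset hx
  simp only [Lon, mem_filter] at hx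
  by_cases hall : ∀ y ∈ B, r ≤ agrO i x y
  · exfalso
    obtain ⟨s, hs⟩ := exists_ne_val hP (x i)
    exact no_grow hmax hBpos hxA ⟨s, hx.2 s hs⟩ hall
  · push_neg at hall
    obtain ⟨y, hy, hylt⟩ := hall
    refine ⟨y, ?_⟩
    have := full_or_lonely (maxPair_swap hmax) hP hApos hy
    rcases this with hF | hL
    · exfalso
      simp only [Ful, mem_filter] at hF
      have : r ≤ agrO i x y :=
        agrO_ge_of hmax.1 hxA hy hP (Or.inr (Or.inl hF.2))
      omega
    · exact hL

lemma card_split (hmax : MaxPair r A B) (hP : 2 ≤ p i) (hBpos : 0 < B.card) :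
    A.card = (Ful i A).card + (Lon i A).card := by
  classical
  have hU : A = Ful i A ∪ Lon i A := by
    apply Finset.Subset.antisymm
    · intro x hx
      rcases full_or_lonely hmax hP hBpos hx with h | h
      · exact mem_union_left _ h
      · exact mem_union_right _ h
    · exact union_subset Ful_subset Lon_subset
  have hD : Disjoint (Ful i A) (Lon i A) := by
    rw [Finset.disjoint_left]
    intro x hF hL
    exact not_lon_and_ful hP hL hF
  conv_lhs => rw [hU]
  exact card_union_of_disjoint hD

/-- all levels of the full part have the same size -/
lemma ful_level_card (i : Fin n) (A : Finset (∀ j, Fin (p j))) (t l : Fin (p i)) :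
    ((Ful i A).filter (fun x => x i = t)).card =
      ((Ful i A).filter (fun x => x i = l)).card := by
  classical
  apply Finset.card_bij (fun x _ => Function.update x i l)
  · intro x hx
    simp only [Ful, mem_filter] at hx ⊢
    refine ⟨⟨hx.1.2 l, ?_⟩, ?_⟩
    · intro s
      rw [Function.update_idem]
      exact hx.1.2 s
    · simp
  · intro x hx x' hx' hupd
    simp only [Ful, mem_filter] at hx hx'
    funext j
    by_cases hj : j = i
    · subst hj; rw [hx.2, hx'.2]
    · have := congrFun hupd j
      rwa [Function.update_of_ne hj, Function.update_of_ne hj] at this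
  · intro y hy
    simp only [Ful, mem_filter] at hy
    refine ⟨Function.update y i t, ?_, ?_⟩
    · simp only [Ful, mem_filter]
      refine ⟨⟨hy.1.2 t, fun s => ?_⟩, by simp⟩
      rw [Function.update_idem]
      exact hy.1.2 s
    · rw [Function.update_idem, ← hy.2, Function.update_eq_self]

lemma ful_card_eq (i : Fin n) (A : Finset (∀ j, Fin (p j))) (l : Fin (p i)) :
    (Ful i A).card = p i * ((Ful i A).filter (fun x => x i = l)).card := by
  classical
  rw [card_eq_sum_card_fiberwise (f := fun x => x i) (t := univ) (fun x _ => mem_univ _)]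
  rw [Finset.sum_congr rfl (fun t _ => ful_level_card i A t l), Finset.sum_const,
    card_univ, Fintype.card_fin, smul_eq_mul]

/-- pigeonhole: off-level part of `Lon` at the maximizing level -/
lemma pigeonhole (i : Fin n) (L : Finset (∀ j, Fin (p j))) (l : Fin (p i))
    (hl : ∀ t : Fin (p i), (L.filter (fun x => x i = t)).card ≤
      (L.filter (fun x => x i = l)).card) :
    (L.filter (fun x => x i ≠ l)).card ≤
      (p i - 1) * (L.filter (fun x => x i = l)).card := by
  classical
  rw [card_eq_sum_card_fiberwise (s := L.filter (fun x => x i ≠ l)) (f := fun x => x i) (t := univ.erase l)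
    (fun x hx => by
      simp only [mem_coe, mem_filter] at hx
      exact mem_erase.2 ⟨hx.2, mem_univ _⟩)]
  calc ∑ t ∈ univ.erase l, ((L.filter (fun x => x i ≠ l)).filter (fun x => x i = t)).card
      ≤ ∑ t ∈ univ.erase l, (L.filter (fun x => x i = l)).card := by
        apply Finset.sum_le_sum
        intro t ht
        have : ((L.filter (fun x => x i ≠ l)).filter (fun x => x i = t)) ⊆
            L.filter (fun x => x i = t) := by
          intro x hx
          simp only [mem_filter] at hx ⊢
          exact ⟨hx.1.1, hx.2⟩
        exact le_trans (card_le_card this) (hl t)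
    _ = (p i - 1) * (L.filter (fun x => x i = l)).card := by
        rw [Finset.sum_const, smul_eq_mul, card_erase_of_mem (mem_univ l), card_univ,
          Fintype.card_fin]

end Structure

set_option maxHeartbeats 1000000 in
lemma arith (q x m F y k G : ℕ)
    (hA1 : 1 ≤ x + m) (hB1 : 1 ≤ y + k)
    (hPH : k ≤ (q + 1) * y)
    (H5 : (F + (q+2)*m) * (G + (q+2)*y) ≤ (x+m+F) * (y+k+G))
    (H6 : (F + (q+2)*x) * (G + (q+2)*k) ≤ (x+m+F) * (y+k+G)) :
    (q+1)*m + q*F ≤ x ∧ (q+1)*k + q*G ≤ y := by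
  have hb : 1 ≤ y + k + G := by omega
  have ha : 1 ≤ x + m + F := by omega
  -- Step 1 : (q+1)*m ≤ x
  have hstep1 : (q+1)*m ≤ x := by
    have hb' : y + k + G ≤ G + (q+2)*y := by nlinarith
    have h1 : (F + (q+2)*m) * (y+k+G) ≤ (x+m+F) * (y+k+G) :=
      le_trans (Nat.mul_le_mul_left _ hb') H5
    have h2 : F + (q+2)*m ≤ x+m+F := Nat.le_of_mul_le_mul_right h1 (by omega)
    nlinarith
  have hm_le_x : m ≤ x := by nlinarith
  -- Step 2 : (q+1)*k ≤ y
  have hstep2 : (q+1)*k ≤ y := by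
    have ha' : x + m + F ≤ F + (q+2)*x := by nlinarith
    have h1 : (x+m+F) * (G + (q+2)*k) ≤ (x+m+F) * (y+k+G) :=
      le_trans (Nat.mul_le_mul_right _ ha') H6
    have h2 : G + (q+2)*k ≤ y+k+G := Nat.le_of_mul_le_mul_left h1 (by omega)
    nlinarith
  rcases le_or_gt ((q+1)*m + q*F) x with hC1 | hN1
  · -- from C1 derive C2 via H6
    refine ⟨hC1, ?_⟩
    have hPx : (q+1)*(x+m+F) ≤ F + (q+2)*x := by nlinarith
    have h1 : ((q+1)*(x+m+F)) * (G + (q+2)*k) ≤ (F + (q+2)*x) * (G + (q+2)*k) :=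
      Nat.mul_le_mul_right _ hPx
    have h2 : ((q+1)*(x+m+F)) * (G + (q+2)*k) ≤ (x+m+F) * (y+k+G) := le_trans h1 H6
    have h3 : (x+m+F) * ((q+1) * (G + (q+2)*k)) ≤ (x+m+F) * (y+k+G) := by
      calc (x+m+F) * ((q+1) * (G + (q+2)*k)) = ((q+1)*(x+m+F)) * (G + (q+2)*k) := by ring
        _ ≤ (x+m+F) * (y+k+G) := h2
    have h4 : (q+1) * (G + (q+2)*k) ≤ y+k+G := Nat.le_of_mul_le_mul_left h3 (by omega)
    have h5 : (q+1) * (G + (q+2)*k) = q*G + G + (q*q + 3*q + 2)*k := by ring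
    rw [h5] at h4
    nlinarith [Nat.zero_le (q*q*k), Nat.zero_le (q*k)]
  rcases le_or_gt ((q+1)*k + q*G) y with hC2 | hN2
  · -- from C2 derive C1 via H5
    refine ⟨?_, hC2⟩
    have hPy : (q+1)*(y+k+G) ≤ G + (q+2)*y := by nlinarith
    have h1 : (F + (q+2)*m) * ((q+1)*(y+k+G)) ≤ (F + (q+2)*m) * (G + (q+2)*y) :=
      Nat.mul_le_mul_left _ hPy
    have h2 : (F + (q+2)*m) * ((q+1)*(y+k+G)) ≤ (x+m+F) * (y+k+G) := le_trans h1 H5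
    have h3 : ((q+1) * (F + (q+2)*m)) * (y+k+G) ≤ (x+m+F) * (y+k+G) := by
      calc ((q+1) * (F + (q+2)*m)) * (y+k+G) = (F + (q+2)*m) * ((q+1)*(y+k+G)) := by ring
        _ ≤ (x+m+F) * (y+k+G) := h2
    have h4 : (q+1) * (F + (q+2)*m) ≤ x+m+F := Nat.le_of_mul_le_mul_right h3 (by omega)
    have h5 : (q+1) * (F + (q+2)*m) = q*F + F + (q*q + 3*q + 2)*m := by ring
    rw [h5] at h4
    nlinarith [Nat.zero_le (q*q*m), Nat.zero_le (q*m)]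
  -- contradiction branch
  exfalso
  obtain ⟨s, hs⟩ := Nat.exists_eq_add_of_le hstep1
  obtain ⟨t, ht⟩ := Nat.exists_eq_add_of_le hstep2
  subst hs; subst ht
  have hs1 : s + 1 ≤ q * F := by nlinarith
  have ht1 : t + 1 ≤ q * G := by nlinarith
  have hq1 : 1 ≤ q := by by_contra h; push_neg at h; interval_cases q <;> omega
  have hF1 : 1 ≤ F := by by_contra h; push_neg at h; interval_cases F <;> omega
  have hG1 : 1 ≤ G := by by_contra h; push_neg at h; interval_cases G <;> omega
  -- abbreviations (plain definitions)
  -- a = (q+2)*m + s + F,  b = (q+2)*k + t + G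
  have ha2 : (q+1)*m + s + m + F = (q+2)*m + s + F := by ring
  have hb2 : (q+1)*k + t + k + G = (q+2)*k + t + G := by ring
  rw [ha2, hb2] at H5 H6
  -- E5 : Q * A0 ≤ s * b  with Q = (q+2)*q*k + (q+1)*t, A0 = (q+2)*m + F
  have E5 : ((q+2)*q*k + (q+1)*t) * ((q+2)*m + F) ≤ s * ((q+2)*k + t + G) := by
    have hid : (F + (q+2)*m) * (G + (q+2)*((q+1)*k + t)) =
        ((q+2)*m + F) * ((q+2)*k + t + G) +
          ((q+2)*q*k + (q+1)*t) * ((q+2)*m + F) := by ring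
    have hid2 : ((q+2)*m + s + F) * ((q+2)*k + t + G) =
        ((q+2)*m + F) * ((q+2)*k + t + G) + s * ((q+2)*k + t + G) := by ring
    rw [hid, hid2] at H5
    omega
  have E6 : ((q+2)*q*m + (q+1)*s) * ((q+2)*k + G) ≤ t * ((q+2)*m + s + F) := by
    have hid : (F + (q+2)*((q+1)*m + s)) * (G + (q+2)*k) =
        ((q+2)*m + s + F) * ((q+2)*k + G) +
          ((q+2)*q*m + (q+1)*s) * ((q+2)*k + G) := by ring
    have hid2 : ((q+2)*m + s + F) * ((q+2)*k + t + G) =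
        ((q+2)*m + s + F) * ((q+2)*k + G) + t * ((q+2)*m + s + F) := by ring
    rw [hid, hid2] at H6
    omega
  have hs0 : 1 ≤ s := by
    rcases Nat.eq_zero_or_pos s with h0 | h0
    · exfalso
      subst h0
      simp only [Nat.zero_mul] at E5
      have h1 : ((q+2)*q*k + (q+1)*t) * ((q+2)*m + F) = 0 := Nat.le_zero.1 E5
      rcases Nat.mul_eq_zero.1 h1 with h2 | h2
      · obtain ⟨hk0, ht0'⟩ := Nat.add_eq_zero.1 h2
        have hk : k = 0 := by
          rcases Nat.mul_eq_zero.1 hk0 with h3 | h3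
          · rcases Nat.mul_eq_zero.1 h3 with h4 | h4 <;> omega
          · exact h3
        have ht' : t = 0 := by
          rcases Nat.mul_eq_zero.1 ht0' with h3 | h3 <;> omega
        rw [hk, ht'] at hB1
        simp at hB1
      · obtain ⟨-, hF0⟩ := Nat.add_eq_zero.1 h2
        omega
    · exact h0
  have ht0 : 1 ≤ t := by
    rcases Nat.eq_zero_or_pos t with h0 | h0
    · exfalso
      subst h0
      simp only [Nat.zero_mul] at E6
      have h1 : ((q+2)*q*m + (q+1)*s) * ((q+2)*k + G) = 0 := Nat.le_zero.1 E6
      rcases Nat.mul_eq_zero.1 h1 with h2 | h2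
      · obtain ⟨-, hsq⟩ := Nat.add_eq_zero.1 h2
        rcases Nat.mul_eq_zero.1 hsq with h3 | h3 <;> omega
      · obtain ⟨-, hG0⟩ := Nat.add_eq_zero.1 h2
        omega
    · exact h0
  have h5b : ((q+1)*t) * ((q+2)*m + F) ≤ s * ((q+2)*k + t + G) :=
    le_trans (Nat.mul_le_mul_right _ (Nat.le_add_left _ _)) E5
  have h6b : ((q+1)*s) * ((q+2)*k + G) ≤ t * ((q+2)*m + s + F) :=
    le_trans (Nat.mul_le_mul_right _ (Nat.le_add_left _ _)) E6
  have hbig : (((q+1)*t) * ((q+2)*m + F)) * (((q+1)*s) * ((q+2)*k + G)) ≤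
      (s * ((q+2)*k + t + G)) * (t * ((q+2)*m + s + F)) := Nat.mul_le_mul h5b h6b
  have hcancel : ((q+1) * ((q+2)*m + F)) * ((q+1) * ((q+2)*k + G)) ≤
      ((q+2)*m + s + F) * ((q+2)*k + t + G) := by
    have h1 : (s*t) * (((q+1) * ((q+2)*m + F)) * ((q+1) * ((q+2)*k + G))) ≤
        (s*t) * (((q+2)*m + s + F) * ((q+2)*k + t + G)) := by
      calc (s*t) * (((q+1) * ((q+2)*m + F)) * ((q+1) * ((q+2)*k + G)))
          = (((q+1)*t) * ((q+2)*m + F)) * (((q+1)*s) * ((q+2)*k + G)) := by ring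
        _ ≤ (s * ((q+2)*k + t + G)) * (t * ((q+2)*m + s + F)) := hbig
        _ = (s*t) * (((q+2)*m + s + F) * ((q+2)*k + t + G)) := by ring
    exact Nat.le_of_mul_le_mul_left h1 (Nat.mul_pos hs0 ht0)
  have hA' : ((q+2)*m + s + F) + 1 ≤ (q+1) * ((q+2)*m + F) := by
    have hexp : (q+1) * ((q+2)*m + F) = (q+2)*m + F + (q*(q+2))*m + q*F := by ring
    rw [hexp]
    have := Nat.zero_le ((q*(q+2))*m)
    omega
  have hB' : ((q+2)*k + t + G) + 1 ≤ (q+1) * ((q+2)*k + G) := by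
    have hexp : (q+1) * ((q+2)*k + G) = (q+2)*k + G + (q*(q+2))*k + q*G := by ring
    rw [hexp]
    have := Nat.zero_le ((q*(q+2))*k)
    omega
  have hfin : (((q+2)*m + s + F) + 1) * (((q+2)*k + t + G) + 1) ≤
      ((q+2)*m + s + F) * ((q+2)*k + t + G) :=
    le_trans (Nat.mul_le_mul hA' hB') hcancel
  have hexp : (((q+2)*m + s + F) + 1) * (((q+2)*k + t + G) + 1) =
      ((q+2)*m + s + F) * ((q+2)*k + t + G) + ((q+2)*m + s + F) +
        ((q+2)*k + t + G) + 1 := by ring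
  rw [hexp] at hfin
  omega


lemma arith' (P x m F y k G : ℕ) (hP2 : 2 ≤ P)
    (hA1 : 1 ≤ x + m) (hB1 : 1 ≤ y + k)
    (hPH : k ≤ (P - 1) * y)
    (H5 : (F + P*m) * (G + P*y) ≤ (x+m+F) * (y+k+G))
    (H6 : (F + P*x) * (G + P*k) ≤ (x+m+F) * (y+k+G)) :
    (P-1)*m + (P-2)*F ≤ x ∧ (P-1)*k + (P-2)*G ≤ y := by
  obtain ⟨q, rfl⟩ : ∃ q, P = q + 2 := ⟨P - 2, by omega⟩
  rw [show q + 2 - 1 = q + 1 from rfl, show q + 2 - 2 = q from rfl] at *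
  exact arith q x m F y k G hA1 hB1 hPH H5 H6

/-- the partition of `A` into full and lonely parts -/
lemma union_eq {r : ℕ} {A B : Finset (∀ j, Fin (p j))} {i : Fin n}
    (hmax : MaxPair r A B) (hP : 2 ≤ p i) (hBpos : 0 < B.card) :
    A = Ful i A ∪ Lon i A := by
  classical
  apply Finset.Subset.antisymm
  · intro x hx
    rcases full_or_lonely hmax hP hBpos hx with h | h
    · exact mem_union_left _ h
    · exact mem_union_right _ h
  · exact union_subset Ful_subset Lon_subset

/-- conversion of the conclusion of `arith` into the final bound for one side -/
lemma side_conversion {r : ℕ} {A B : Finset (∀ j, Fin (p j))} {i : Fin n}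
    (hmax : MaxPair r A B) (hBpos : 0 < B.card) (hP : 2 ≤ p i)
    (l : Fin (p i))
    (hGA : (p i - 1) * ((Lon i A).filter (fun z => z i ≠ l)).card
        + (p i - 2) * (Ful i A).card ≤ ((Lon i A).filter (fun z => z i = l)).card) :
    p i * (A.filter (fun z => z i ≠ l)).card ≤ A.card := by
  classical
  obtain ⟨q, hq⟩ : ∃ q, p i = q + 2 := ⟨p i - 2, (Nat.sub_add_cancel hP).symm⟩
  rw [show p i - 1 = q + 1 from by rw [hq]; rfl, show p i - 2 = q from by rw [hq]; rfl] at hGA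
  set x := ((Lon i A).filter (fun z => z i = l)).card with hx
  set m := ((Lon i A).filter (fun z => z i ≠ l)).card with hm
  set F := (Ful i A).card with hF
  set c := ((Ful i A).filter (fun z => z i = l)).card with hc
  set d := ((Ful i A).filter (fun z => z i ≠ l)).card with hd
  have hcd : c + d = F := by
    rw [hc, hd, hF]
    exact card_filter_add_card_filter_not _
  have hFc : F = (q+2) * c := by rw [hF, hc, ← hq]; exact ful_card_eq i A l
  have hdc : d = (q+1) * c := by
    have hsum : c + d = c + (q+1) * c := by
      rw [hcd, hFc]; ring
    exact Nat.add_left_cancel hsum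
  have hsplit : (A.filter (fun z => z i ≠ l)) =
      ((Ful i A).filter (fun z => z i ≠ l)) ∪ ((Lon i A).filter (fun z => z i ≠ l)) := by
    conv_lhs => rw [union_eq hmax hP hBpos]
    exact filter_union _ _ _
  have hdisj : Disjoint ((Ful i A).filter (fun z => z i ≠ l))
      ((Lon i A).filter (fun z => z i ≠ l)) := by
    rw [Finset.disjoint_left]
    intro z hzF hzL
    exact not_lon_and_ful hP (mem_of_mem_filter z hzL) (mem_of_mem_filter z hzF)
  have hcardfilter : (A.filter (fun z => z i ≠ l)).card = d + m := by
    rw [hsplit, card_union_of_disjoint hdisj, hd, hm]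
  have hcardA : A.card = F + (x + m) := by
    rw [card_split hmax hP hBpos, hF, hx, hm]
    congr 1
    exact (card_filter_add_card_filter_not _).symm
  rw [hcardfilter, hcardA, hq, hdc, hFc]
  have h1 : (q+2)*((q+1)*c + m) = (q+2)*c + ((q+1)*m + q*((q+2)*c)) + m := by ring
  rw [h1]
  have h2 : (q+1)*m + q*((q+2)*c) ≤ x := by rw [← hFc]; exact hGA
  linarith

/-- a relevant coordinate for `A` yields a lonely element of `A` -/
lemma rel_lon {r : ℕ} {A B : Finset (∀ j, Fin (p j))} {i : Fin n}
    (hmax : MaxPair r A B) (hP : 2 ≤ p i) (hBpos : 0 < B.card)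
    (hrel : Relevant A i) : (Lon i A).Nonempty := by
  classical
  obtain ⟨x, y, hxy, hxA, hyA⟩ := hrel
  refine ⟨x, ?_⟩
  rcases full_or_lonely hmax hP hBpos hxA with hF | hL
  · exfalso
    apply hyA
    have hyx : y = Function.update x i (y i) := by
      funext j
      by_cases hj : j = i
      · subst hj; simp
      · rw [Function.update_of_ne hj]; exact (hxy j hj).symm
    rw [hyx]
    exact (mem_filter.1 hF).2 (y i)
  · exact hL


end Lemma9Aux




open Lemma9Aux in
/-- Lemma 9: for a maximal `r`-cross-intersecting pair `(A, B)` and a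
coordinate `i` relevant for `A` or `B`, there is a value `l ∈ [p_i]` with
`|{x ∈ A : x_i ≠ l}| ≤ |A|/p_i` and `|{y ∈ B : y_i ≠ l}| ≤ |B|/p_i`
(stated equivalently with the divisions cleared). -/
theorem lemma9 {n : ℕ} (r : ℕ) (hr : 1 ≤ r) (hrn : r ≤ n)
    (p : Fin n → ℕ) (hp : ∀ i, 2 ≤ p i)
    (A B : Finset (∀ i, Fin (p i))) (hAB : MaxPair r A B)
    (i : Fin n) (hrel : Relevant A i ∨ Relevant B i) :
    ∃ l : Fin (p i),
      p i * (A.filter (fun x => x i ≠ l)).card ≤ A.card ∧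
      p i * (B.filter (fun y => y i ≠ l)).card ≤ B.card := by
  classical
  have hP : 2 ≤ p i := hp i
  obtain ⟨hApos, hBpos⟩ := cards_pos hAB hrn hp
  have hmax' : MaxPair r B A := maxPair_swap hAB
  have hLboth : (Lon i A).Nonempty ∧ (Lon i B).Nonempty := by
    rcases hrel with h | h
    · have h1 := rel_lon hAB hP hBpos h
      exact ⟨h1, lon_transfer hAB hP hApos hBpos h1⟩
    · have h1 := rel_lon hmax' hP hApos h
      exact ⟨lon_transfer hmax' hP hBpos hApos h1, h1⟩
  -- choose `l` maximizing the level sizes of the lonely part of `B`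
  have huniv : (univ : Finset (Fin (p i))).Nonempty :=
    ⟨⟨0, lt_of_lt_of_le (by norm_num) hP⟩, mem_univ _⟩
  obtain ⟨l, -, hl⟩ := Finset.exists_max_image (univ : Finset (Fin (p i)))
    (fun t => ((Lon i B).filter (fun z => z i = t)).card) huniv
  -- the six counts
  set x := ((Lon i A).filter (fun z => z i = l)).card with hxdef
  set m := ((Lon i A).filter (fun z => z i ≠ l)).card with hmdef
  set F := (Ful i A).card with hFdef
  set y := ((Lon i B).filter (fun z => z i = l)).card with hydef
  set k := ((Lon i B).filter (fun z => z i ≠ l)).card with hkdef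
  set G := (Ful i B).card with hGdef
  have hsplitA : A.card = x + m + F := by
    rw [card_split hAB hP hBpos, hFdef, hxdef, hmdef]
    have := card_filter_add_card_filter_not
      (s := Lon i A) (fun z => z i = l)
    linarith
  have hsplitB : B.card = y + k + G := by
    rw [card_split hmax' hP hApos, hGdef, hydef, hkdef]
    have := card_filter_add_card_filter_not
      (s := Lon i B) (fun z => z i = l)
    linarith
  have hA1 : 1 ≤ x + m := by
    have hpos := card_pos.2 hLboth.1
    have := card_filter_add_card_filter_not
      (s := Lon i A) (fun z => z i = l)
    linarith
  have hB1 : 1 ≤ y + k := by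
    have hpos := card_pos.2 hLboth.2
    have := card_filter_add_card_filter_not
      (s := Lon i B) (fun z => z i = l)
    linarith
  have hPH : k ≤ (p i - 1) * y := pigeonhole i (Lon i B) l (fun t => hl t (mem_univ t))
  -- competitor H5
  have H5 : (F + p i * m) * (G + p i * y) ≤ A.card * B.card := by
    rw [hmdef, hydef, hFdef, hGdef]
    apply master hAB hP (filter_subset _ _) (filter_subset _ _)
    intro a ha b hb
    simp only [mem_filter] at ha hb
    rw [hb.2]
    exact ha.2
  have H6 : (F + p i * x) * (G + p i * k) ≤ A.card * B.card := by
    rw [hxdef, hkdef, hFdef, hGdef]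
    apply master hAB hP (filter_subset _ _) (filter_subset _ _)
    intro a ha b hb
    simp only [mem_filter] at ha hb
    rw [ha.2]
    exact fun hc => hb.2 hc.symm
  rw [hsplitA, hsplitB] at H5 H6
  obtain ⟨hGA, hGB⟩ := arith' (p i) x m F y k G hP hA1 hB1 hPH H5 H6
  refine ⟨l, ?_, ?_⟩
  · exact side_conversion hAB hBpos hP l hGA
  · exact side_conversion hmax' hApos hP l hGB
end

section
/- Let 1 ≤ r ≤ n, let p = (p_1,…,p_n) be a size vector, let (A, B) be a maximal pair of r-cross-intersecting families in S_p, and let T be the set of coordinates that are relevant for A or for B. Then |A| ≤ |S_p| / Π_{i∈T} (p_i − 1)^{1 − 2/p_i} and |B| ≤ |S_p| / Π_{i∈T} (p_i − 1)^{1 − 2/p_i}, where the exponents 1 − 2/p_i are real numbers. -/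
open Finset

namespace Thm5Aux

open scoped Classical

variable {n : ℕ} {p : Fin n → ℕ}

noncomputable def sec (A : Finset (∀ i, Fin (p i))) (i : Fin n) (v : Fin (p i)) :
    Finset (∀ i, Fin (p i)) := A.filter (fun x => x i = v)

noncomputable def lift (A : Finset (∀ i, Fin (p i))) (i : Fin n) (v : Fin (p i)) :
    Finset (∀ i, Fin (p i)) := univ.filter (fun x => Function.update x i v ∈ A)

noncomputable def liftU (A : Finset (∀ i, Fin (p i))) (i : Fin n) (t : Fin (p i)) :
    Finset (∀ i, Fin (p i)) := univ.filter (fun x => ∃ s, s ≠ t ∧ Function.update x i s ∈ A)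

lemma card_lift (A : Finset (∀ i, Fin (p i))) (i : Fin n) (v : Fin (p i)) :
    (lift A i v).card = p i * (sec A i v).card := by
  have h : (lift A i v).card
      = ∑ w : Fin (p i), ((lift A i v).filter (fun x => x i = w)).card :=
    Finset.card_eq_sum_card_fiberwise (fun x _ => mem_univ (x i))
  have h2 : ∀ w : Fin (p i),
      ((lift A i v).filter (fun x => x i = w)).card = (sec A i v).card := by
    intro w
    apply Finset.card_bij (fun x _ => Function.update x i v)
    · intro x hx
      simp only [lift, mem_filter, mem_univ, true_and] at hx
      simp only [sec, mem_filter]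
      exact ⟨hx.1, by simp⟩
    · intro x₁ hx₁ x₂ hx₂ he
      simp only [lift, mem_filter, mem_univ, true_and] at hx₁ hx₂
      funext j
      by_cases hj : j = i
      · subst hj; rw [hx₁.2, hx₂.2]
      · have := congrFun he j
        rwa [Function.update_of_ne hj, Function.update_of_ne hj] at this
    · intro y hy
      simp only [sec, mem_filter] at hy
      refine ⟨Function.update y i w, ?_, ?_⟩
      · simp only [lift, mem_filter, mem_univ, true_and]
        constructor
        · rw [Function.update_idem]
          rw [← hy.2, Function.update_eq_self]
          exact hy.1
        · simp
      · rw [Function.update_idem, ← hy.2, Function.update_eq_self]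
  rw [h]
  simp only [h2, Finset.sum_const, card_univ, Fintype.card_fin, smul_eq_mul]

lemma sum_sec (A : Finset (∀ i, Fin (p i))) (i : Fin n) :
    ∑ v : Fin (p i), (sec A i v).card = A.card :=
  (Finset.card_eq_sum_card_fiberwise (fun x _ => mem_univ (x i))).symm

lemma sec_card_le (A : Finset (∀ i, Fin (p i))) (i : Fin n) (v : Fin (p i)) :
    (sec A i v).card ≤ A.card := Finset.card_le_card (filter_subset _ _)

lemma cross_core {r : ℕ} {A B : Finset (∀ i, Fin (p i))} (h : CrossInt r A B)
    {i : Fin n} {s t : Fin (p i)} (hst : s ≠ t) {x y : ∀ j, Fin (p j)}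
    (hx : Function.update x i s ∈ A) (hy : Function.update y i t ∈ B) :
    r ≤ (univ.filter (fun j => x j = y j)).card := by
  refine (h _ hx _ hy).trans (Finset.card_le_card ?_)
  intro j hj
  simp only [mem_filter, mem_univ, true_and] at hj ⊢
  by_cases hji : j = i
  · subst hji
    simp only [Function.update_self] at hj
    exact absurd hj hst
  · rwa [Function.update_of_ne hji, Function.update_of_ne hji] at hj

lemma cross_liftU {r : ℕ} {A B : Finset (∀ i, Fin (p i))} (h : CrossInt r A B)
    (i : Fin n) (t : Fin (p i)) : CrossInt r (liftU A i t) (lift B i t) := by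
  intro x hx y hy
  simp only [liftU, mem_filter, mem_univ, true_and] at hx
  simp only [lift, mem_filter, mem_univ, true_and] at hy
  obtain ⟨s, hs, hxs⟩ := hx
  exact cross_core h hs hxs hy

lemma cross_liftU' {r : ℕ} {A B : Finset (∀ i, Fin (p i))} (h : CrossInt r A B)
    (i : Fin n) (s : Fin (p i)) : CrossInt r (lift A i s) (liftU B i s) := by
  intro x hx y hy
  simp only [lift, mem_filter, mem_univ, true_and] at hx
  simp only [liftU, mem_filter, mem_univ, true_and] at hy
  obtain ⟨t, ht, hyt⟩ := hy
  exact cross_core h (Ne.symm ht) hx hyt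

lemma lift_subset_liftU {A : Finset (∀ i, Fin (p i))} {i : Fin n} {s t : Fin (p i)}
    (hst : s ≠ t) : lift A i s ⊆ liftU A i t := by
  intro x hx
  simp only [lift, mem_filter, mem_univ, true_and] at hx
  simp only [liftU, mem_filter, mem_univ, true_and]
  exact ⟨s, hst, hx⟩

lemma cross_lift_lift {r : ℕ} {A B : Finset (∀ i, Fin (p i))} (h : CrossInt r A B)
    {i : Fin n} {s t : Fin (p i)} (hst : s ≠ t) :
    CrossInt r (lift A i s) (lift B i t) := by
  intro x hx y hy
  exact cross_liftU h i t x (lift_subset_liftU hst hx) y hy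

lemma maxpair_pos {r : ℕ} (hrn : r ≤ n) (hp : ∀ i, 2 ≤ p i)
    {A B : Finset (∀ i, Fin (p i))} (hAB : MaxPair r A B) :
    0 < A.card ∧ 0 < B.card := by
  have hpos : ∀ i, 0 < p i := fun i => by have := hp i; omega
  set x0 : ∀ i, Fin (p i) := fun i => ⟨0, hpos i⟩ with hx0
  have hcross : CrossInt r ({x0} : Finset (∀ i, Fin (p i))) {x0} := by
    intro x hx y hy
    simp only [mem_singleton] at hx hy
    subst hx; subst hy
    have : (univ.filter (fun j => x0 j = x0 j)) = univ := by
      apply Finset.filter_true_of_mem; intro j _; rfl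
    rw [this, card_univ, Fintype.card_fin]
    exact hrn
  have h := hAB.2 _ _ hcross
  simp only [card_singleton, mul_one] at h
  constructor
  · by_contra h0
    push_neg at h0
    interval_cases hA : A.card
    · simp at h
  · by_contra h0
    push_neg at h0
    interval_cases hB : B.card
    · simp at h

set_option maxHeartbeats 1000000 in
lemma numeric (P a b az bz : ℝ) (hP : 3 ≤ P) (ha : 1 ≤ a) (hb : 1 ≤ b)
    (h1 : a ≤ P * az) (h2 : b ≤ P * bz) (h3 : az ≤ a) (h4 : bz ≤ b)
    (n1 : P ^ 2 * (az * (b - bz)) ≤ (P - 1) * (a * b))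
    (n2 : P ^ 2 * (bz * (a - az)) ≤ (P - 1) * (a * b)) :
    ((P - 1) * a ≤ P * az ∧ (P - 1) * b ≤ P * bz) ∨ (P * az = a ∧ P * bz = b) := by
  have hP0 : (0:ℝ) < P := by linarith
  have ha0 : (0:ℝ) < a := by linarith
  have hb0 : (0:ℝ) < b := by linarith
  have haz : (0:ℝ) < az := by nlinarith
  have hbz : (0:ℝ) < bz := by nlinarith
  by_cases hx : (P - 1) * a ≤ P * az
  · left
    refine ⟨hx, ?_⟩
    by_contra hy
    push_neg at hy
    have e1 : (P - 1) * a * (b - bz) ≤ P * az * (b - bz) :=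
      mul_le_mul_of_nonneg_right hx (by linarith)
    nlinarith [mul_le_mul_of_nonneg_left e1 hP0.le,
      mul_lt_mul_of_pos_left hy (show (0:ℝ) < (P-1)*a by nlinarith)]
  · by_cases hy : (P - 1) * b ≤ P * bz
    · exfalso
      push_neg at hx
      have e1 : (P - 1) * b * (a - az) ≤ P * bz * (a - az) :=
        mul_le_mul_of_nonneg_right hy (by linarith)
      nlinarith [mul_le_mul_of_nonneg_left e1 hP0.le,
        mul_lt_mul_of_pos_left hx (show (0:ℝ) < (P-1)*b by nlinarith)]
    · push_neg at hx hy
      right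
      have e3 : (P - 1) * a ^ 2 ≤ P ^ 2 * (az * (a - az)) := by
        nlinarith [mul_nonneg (sub_nonneg.2 h1) (le_of_lt (sub_pos.2 hx))]
      have e4 : (P - 1) * b ^ 2 ≤ P ^ 2 * (bz * (b - bz)) := by
        nlinarith [mul_nonneg (sub_nonneg.2 h2) (le_of_lt (sub_pos.2 hy))]
      have claim1 : az * b ≤ bz * a := by
        have X1 : P ^ 2 * (az * (b - bz)) * a ≤ (P - 1) * (a * b) * a :=
          mul_le_mul_of_nonneg_right n1 ha0.le
        have X2 : (P - 1) * a ^ 2 * b ≤ P ^ 2 * (az * (a - az)) * b :=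
          mul_le_mul_of_nonneg_right e3 hb0.le
        have h5 : P ^ 2 * az * (a * (b - bz)) ≤ P ^ 2 * az * (b * (a - az)) := by
          nlinarith [X1, X2]
        have h6 : (0:ℝ) < P ^ 2 * az := by positivity
        have h7 : a * (b - bz) ≤ b * (a - az) := le_of_mul_le_mul_left h5 h6
        nlinarith [h7]
      have claim2 : bz * a ≤ az * b := by
        have X1 : P ^ 2 * (bz * (a - az)) * b ≤ (P - 1) * (a * b) * b :=
          mul_le_mul_of_nonneg_right n2 hb0.le
        have X2 : (P - 1) * b ^ 2 * a ≤ P ^ 2 * (bz * (b - bz)) * a :=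
          mul_le_mul_of_nonneg_right e4 ha0.le
        have h5 : P ^ 2 * bz * (b * (a - az)) ≤ P ^ 2 * bz * (a * (b - bz)) := by
          nlinarith [X1, X2]
        have h6 : (0:ℝ) < P ^ 2 * bz := by positivity
        have h7 : b * (a - az) ≤ a * (b - bz) := le_of_mul_le_mul_left h5 h6
        nlinarith [h7]
      have heq : az * b = bz * a := le_antisymm claim1 claim2
      have e5 : P ^ 2 * (az * (a - az)) * b ≤ (P - 1) * a ^ 2 * b := by
        nlinarith [n2, heq]
      have e6 : P ^ 2 * (az * (a - az)) ≤ (P - 1) * a ^ 2 :=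
        le_of_mul_le_mul_right e5 hb0
      have e7 : (P * az - a) * ((P - 1) * a - P * az) = 0 := by nlinarith [e3, e6]
      have e8 : (0:ℝ) < (P - 1) * a - P * az := by linarith
      have e9 : P * az = a := by
        rcases mul_eq_zero.1 e7 with h | h
        · linarith
        · linarith
      refine ⟨e9, ?_⟩
      have f1 : a * b = bz * a * P := by nlinarith [heq, e9]
      have f2 : P * bz * a = b * a := by nlinarith [f1]
      have f3 := mul_right_cancel₀ (ne_of_gt ha0) f2
      linarith [f3]

lemma balanced_irrel {r : ℕ} {A B : Finset (∀ i, Fin (p i))} (hAB : MaxPair r A B)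
    (i : Fin n) (hpi : 3 ≤ p i)
    (ha0 : 0 < A.card) (hb0 : 0 < B.card)
    (hbA : ∀ v : Fin (p i), p i * (sec A i v).card = A.card)
    (hbB : ∀ v : Fin (p i), p i * (sec B i v).card = B.card) :
    ¬ Relevant A i ∧ ¬ Relevant B i := by
  -- lift A i s = liftU A i t for s ≠ t, and same for B
  have hAeq : ∀ s t : Fin (p i), s ≠ t → lift A i s = liftU A i t := by
    intro s t hst
    refine (Finset.eq_of_subset_of_card_le (lift_subset_liftU hst) ?_)
    have hc := hAB.2 _ _ (cross_liftU hAB.1 i t)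
    rw [card_lift, hbB t] at hc
    have h := Nat.le_of_mul_le_mul_right hc hb0
    rw [card_lift, hbA s]
    exact h
  have hBeq : ∀ s t : Fin (p i), s ≠ t → lift B i t = liftU B i s := by
    intro s t hst
    refine (Finset.eq_of_subset_of_card_le (lift_subset_liftU (Ne.symm hst)) ?_)
    have hc := hAB.2 _ _ (cross_liftU' hAB.1 i s)
    rw [card_lift, hbA s] at hc
    have h := Nat.le_of_mul_le_mul_left hc ha0
    rw [card_lift, hbB t]
    exact h
  -- exists a third value
  have hthird : ∀ s s' : Fin (p i), ∃ t : Fin (p i), t ≠ s ∧ t ≠ s' := by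
    intro s s'
    have hcard : (({s, s'} : Finset (Fin (p i)))).card ≤ 2 := by
      refine (Finset.card_insert_le _ _).trans ?_
      simp
    have hsd : 0 < ((univ : Finset (Fin (p i))) \ {s, s'}).card := by
      rw [Finset.card_sdiff_of_subset (subset_univ _), card_univ, Fintype.card_fin]
      omega
    obtain ⟨t, ht⟩ := Finset.card_pos.1 hsd
    simp only [mem_sdiff, mem_univ, true_and, mem_insert, mem_singleton, not_or] at ht
    exact ⟨t, ht.1, ht.2⟩
  have invA : ∀ (x : ∀ j, Fin (p j)) (s s' : Fin (p i)),
      Function.update x i s ∈ A → Function.update x i s' ∈ A := by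
    intro x s s' hs
    rcases eq_or_ne s s' with rfl | hss
    · exact hs
    obtain ⟨t, hts, hts'⟩ := hthird s s'
    have h1 : x ∈ lift A i s := by
      simp only [lift, mem_filter, mem_univ, true_and]; exact hs
    rw [hAeq s t (Ne.symm hts), ← hAeq s' t (Ne.symm hts')] at h1
    simpa only [lift, mem_filter, mem_univ, true_and] using h1
  have invB : ∀ (x : ∀ j, Fin (p j)) (s s' : Fin (p i)),
      Function.update x i s ∈ B → Function.update x i s' ∈ B := by
    intro x s s' hs
    rcases eq_or_ne s s' with rfl | hss
    · exact hs
    obtain ⟨t, hts, hts'⟩ := hthird s s'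
    have h1 : x ∈ lift B i s := by
      simp only [lift, mem_filter, mem_univ, true_and]; exact hs
    rw [hBeq t s hts, ← hBeq t s' hts'] at h1
    simpa only [lift, mem_filter, mem_univ, true_and] using h1
  have notrel : ∀ (C : Finset (∀ i, Fin (p i))),
      (∀ (x : ∀ j, Fin (p j)) (s s' : Fin (p i)),
        Function.update x i s ∈ C → Function.update x i s' ∈ C) → ¬ Relevant C i := by
    intro C hinv hrel
    obtain ⟨x, y, hxy, hxC, hyC⟩ := hrel
    have hx : Function.update x i (x i) ∈ C := by rwa [Function.update_eq_self]
    have hy := hinv x (x i) (y i) hx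
    have hupd : Function.update x i (y i) = y := by
      funext j
      by_cases hj : j = i
      · subst hj; rw [Function.update_self]
      · rw [Function.update_of_ne hj]; exact hxy j hj
    rw [hupd] at hy
    exact hyC hy
  exact ⟨notrel A invA, notrel B invB⟩

set_option maxHeartbeats 1000000 in
lemma concentration {r : ℕ} (hrn : r ≤ n) (hp : ∀ i, 2 ≤ p i)
    {A B : Finset (∀ i, Fin (p i))} (hAB : MaxPair r A B)
    (i : Fin n) (hpi : 3 ≤ p i) (hrel : Relevant A i ∨ Relevant B i) :
    ∃ z : Fin (p i),
      (p i - 1) * A.card ≤ p i * (sec A i z).card ∧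
      (p i - 1) * B.card ≤ p i * (sec B i z).card := by
  obtain ⟨ha0, hb0⟩ := maxpair_pos hrn hp hAB
  have keyI : ∀ s t : Fin (p i), s ≠ t →
      (p i * (sec A i s).card) * (p i * (sec B i t).card) ≤ A.card * B.card := by
    intro s t hst
    have h := hAB.2 _ _ (cross_lift_lift hAB.1 hst)
    rwa [card_lift, card_lift] at h
  have hne : (univ : Finset (Fin (p i))).Nonempty := ⟨⟨0, by omega⟩, mem_univ _⟩
  obtain ⟨zA, _, hzA⟩ := Finset.exists_max_image univ (fun v => (sec A i v).card) hne
  obtain ⟨zB, _, hzB⟩ := Finset.exists_max_image univ (fun v => (sec B i v).card) hne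
  have pA : A.card ≤ p i * (sec A i zA).card := by
    calc A.card = ∑ v : Fin (p i), (sec A i v).card := (sum_sec A i).symm
    _ ≤ ∑ _v : Fin (p i), (sec A i zA).card :=
        Finset.sum_le_sum (fun v _ => hzA v (mem_univ v))
    _ = p i * (sec A i zA).card := by
        rw [Finset.sum_const, card_univ, Fintype.card_fin, smul_eq_mul]
  have pB : B.card ≤ p i * (sec B i zB).card := by
    calc B.card = ∑ v : Fin (p i), (sec B i v).card := (sum_sec B i).symm
    _ ≤ ∑ _v : Fin (p i), (sec B i zB).card :=
        Finset.sum_le_sum (fun v _ => hzB v (mem_univ v))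
    _ = p i * (sec B i zB).card := by
        rw [Finset.sum_const, card_univ, Fintype.card_fin, smul_eq_mul]
  have hbalco : (∀ v : Fin (p i), p i * (sec A i v).card = A.card) →
      (∀ v : Fin (p i), p i * (sec B i v).card = B.card) → False := by
    intro h1 h2
    obtain ⟨nA, nB⟩ := balanced_irrel hAB i hpi ha0 hb0 h1 h2
    rcases hrel with h | h
    · exact nA h
    · exact nB h
  have allbal : ∀ (C : Finset (∀ i, Fin (p i))) (zC : Fin (p i)),
      (∀ v : Fin (p i), (sec C i v).card ≤ (sec C i zC).card) →
      p i * (sec C i zC).card = C.card →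
      ∀ v : Fin (p i), p i * (sec C i v).card = C.card := by
    intro C zC hmax he v
    have hall : ∀ v : Fin (p i), (sec C i v).card = (sec C i zC).card := by
      intro w
      by_contra hw
      have hlt : (sec C i w).card < (sec C i zC).card := lt_of_le_of_ne (hmax w) hw
      have hsum : ∑ v : Fin (p i), (sec C i v).card
          < ∑ _v : Fin (p i), (sec C i zC).card :=
        Finset.sum_lt_sum (fun v _ => hmax v) ⟨w, mem_univ w, hlt⟩
      rw [sum_sec, Finset.sum_const, card_univ, Fintype.card_fin, smul_eq_mul, he] at hsum
      exact lt_irrefl _ hsum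
    rw [hall v, he]
  by_cases hzz : zA = zB
  · -- aligned case: use numeric lemma
    subst hzz
    -- nat versions of n1, n2
    have hsumB : ∑ t ∈ univ.erase zA, (sec B i t).card + (sec B i zA).card = B.card := by
      rw [Finset.sum_erase_add _ _ (mem_univ zA), sum_sec]
    have hsumA : ∑ t ∈ univ.erase zA, (sec A i t).card + (sec A i zA).card = A.card := by
      rw [Finset.sum_erase_add _ _ (mem_univ zA), sum_sec]
    have n1nat : (p i)^2 * ((sec A i zA).card * (B.card - (sec B i zA).card))
        ≤ (p i - 1) * (A.card * B.card) := by
      have e1 : B.card - (sec B i zA).card = ∑ t ∈ univ.erase zA, (sec B i t).card := by omega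
      rw [e1, Finset.mul_sum, Finset.mul_sum]
      have e2 : ∀ t ∈ univ.erase zA,
          (p i)^2 * ((sec A i zA).card * (sec B i t).card) ≤ A.card * B.card := by
        intro t ht
        have hne' : zA ≠ t := (Finset.mem_erase.1 ht).1.symm
        calc (p i)^2 * ((sec A i zA).card * (sec B i t).card)
            = (p i * (sec A i zA).card) * (p i * (sec B i t).card) := by ring
        _ ≤ A.card * B.card := keyI zA t hne'
      calc ∑ t ∈ univ.erase zA, (p i)^2 * ((sec A i zA).card * (sec B i t).card)
          ≤ ∑ _t ∈ univ.erase zA, A.card * B.card := Finset.sum_le_sum e2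
      _ = (p i - 1) * (A.card * B.card) := by
          rw [Finset.sum_const, Finset.card_erase_of_mem (mem_univ _), card_univ,
            Fintype.card_fin, smul_eq_mul]
    have n2nat : (p i)^2 * ((sec B i zA).card * (A.card - (sec A i zA).card))
        ≤ (p i - 1) * (A.card * B.card) := by
      have e1 : A.card - (sec A i zA).card = ∑ t ∈ univ.erase zA, (sec A i t).card := by omega
      rw [e1, Finset.mul_sum, Finset.mul_sum]
      have e2 : ∀ t ∈ univ.erase zA,
          (p i)^2 * ((sec B i zA).card * (sec A i t).card) ≤ A.card * B.card := by
        intro t ht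
        have hne' : t ≠ zA := (Finset.mem_erase.1 ht).1
        calc (p i)^2 * ((sec B i zA).card * (sec A i t).card)
            = (p i * (sec A i t).card) * (p i * (sec B i zA).card) := by ring
        _ ≤ A.card * B.card := keyI t zA hne'
      calc ∑ t ∈ univ.erase zA, (p i)^2 * ((sec B i zA).card * (sec A i t).card)
          ≤ ∑ _t ∈ univ.erase zA, A.card * B.card := Finset.sum_le_sum e2
      _ = (p i - 1) * (A.card * B.card) := by
          rw [Finset.sum_const, Finset.card_erase_of_mem (mem_univ _), card_univ,
            Fintype.card_fin, smul_eq_mul]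
    -- cast to ℝ
    have hble : (sec B i zA).card ≤ B.card := sec_card_le B i zA
    have hale : (sec A i zA).card ≤ A.card := sec_card_le A i zA
    have hple : 1 ≤ p i := by omega
    have n1R : ((p i : ℝ))^2 * (((sec A i zA).card : ℝ) * ((B.card : ℝ) - ((sec B i zA).card : ℝ)))
        ≤ ((p i : ℝ) - 1) * ((A.card : ℝ) * (B.card : ℝ)) := by
      have h := (Nat.cast_le (α := ℝ)).2 n1nat
      push_cast [Nat.cast_sub hble, Nat.cast_sub hple] at h
      convert h using 1 <;> ring
    have n2R : ((p i : ℝ))^2 * (((sec B i zA).card : ℝ) * ((A.card : ℝ) - ((sec A i zA).card : ℝ)))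
        ≤ ((p i : ℝ) - 1) * ((A.card : ℝ) * (B.card : ℝ)) := by
      have h := (Nat.cast_le (α := ℝ)).2 n2nat
      push_cast [Nat.cast_sub hale, Nat.cast_sub hple] at h
      convert h using 1 <;> ring
    have hres := numeric ((p i : ℝ)) (A.card : ℝ) (B.card : ℝ)
      ((sec A i zA).card : ℝ) ((sec B i zA).card : ℝ)
      (by exact_mod_cast hpi) (by exact_mod_cast ha0) (by exact_mod_cast hb0)
      (by exact_mod_cast pA) (by exact_mod_cast pB)
      (by exact_mod_cast hale) (by exact_mod_cast hble) n1R n2R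
    rcases hres with ⟨hca, hcb⟩ | ⟨hea, heb⟩
    · refine ⟨zA, ?_, ?_⟩
      · have : (((p i - 1) * A.card : ℕ) : ℝ) ≤ ((p i * (sec A i zA).card : ℕ) : ℝ) := by
          push_cast [Nat.cast_sub hple]
          exact hca
        exact_mod_cast this
      · have : (((p i - 1) * B.card : ℕ) : ℝ) ≤ ((p i * (sec B i zA).card : ℕ) : ℝ) := by
          push_cast [Nat.cast_sub hple]
          exact hcb
        exact_mod_cast this
    · exfalso
      have eA : p i * (sec A i zA).card = A.card := by exact_mod_cast hea
      have eB : p i * (sec B i zA).card = B.card := by exact_mod_cast heb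
      exact hbalco (allbal A zA (fun v => hzA v (mem_univ v)) eA)
        (allbal B zA (fun v => hzB v (mem_univ v)) eB)
  · -- distinct argmaxes: forced balanced, contradiction
    exfalso
    have k := keyI zA zB hzz
    have hup : A.card * B.card ≤ (p i * (sec A i zA).card) * (p i * (sec B i zB).card) :=
      Nat.mul_le_mul pA pB
    have heq : (p i * (sec A i zA).card) * (p i * (sec B i zB).card) = A.card * B.card :=
      le_antisymm k hup
    have hbzpos : 0 < p i * (sec B i zB).card := lt_of_lt_of_le hb0 pB
    have hazpos : 0 < p i * (sec A i zA).card := lt_of_lt_of_le ha0 pA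
    have eA : p i * (sec A i zA).card = A.card := by
      have h1 : (p i * (sec A i zA).card) * (p i * (sec B i zB).card)
          ≤ A.card * (p i * (sec B i zB).card) := by
        rw [heq]
        exact Nat.mul_le_mul_left A.card pB
      exact le_antisymm (Nat.le_of_mul_le_mul_right h1 hbzpos) pA
    have eB : p i * (sec B i zB).card = B.card := by
      have h1 : (p i * (sec A i zA).card) * (p i * (sec B i zB).card)
          ≤ (p i * (sec A i zA).card) * B.card := by
        rw [heq]
        exact Nat.mul_le_mul_right B.card pA
      exact le_antisymm (Nat.le_of_mul_le_mul_left h1 hazpos) pB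
    exact hbalco (allbal A zA (fun v => hzA v (mem_univ v)) eA)
      (allbal B zB (fun v => hzB v (mem_univ v)) eB)

set_option maxHeartbeats 1000000 in
lemma count_bound {A : Finset (∀ i, Fin (p i))} (hp : ∀ i, 2 ≤ p i) (ha0 : 0 < A.card)
    (T3 : Finset (Fin n)) (hp3 : ∀ i ∈ T3, 3 ≤ p i)
    (z : ∀ i, Fin (p i))
    (hz : ∀ i ∈ T3, (p i - 1) * A.card ≤ p i * (sec A i (z i)).card) :
    (A.card : ℝ) * ∏ i ∈ T3, ((p i : ℝ) - 1) ^ (1 - 2 / (p i : ℝ)) ≤ ∏ i, (p i : ℝ) := by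
  have ha : (0:ℝ) < (A.card : ℝ) := by exact_mod_cast ha0
  set a : ℝ := (A.card : ℝ) with hadef
  set g : ∀ i : Fin n, Fin (p i) → ℝ :=
    fun i v => if i ∈ T3 ∧ v = z i then ((p i : ℝ) - 1)^2 else 1 with hgdef
  have gnn : ∀ (i : Fin n) (v : Fin (p i)), 0 ≤ g i v := by
    intro i v; simp only [hgdef]; split_ifs
    · positivity
    · norm_num
  set f : (∀ i, Fin (p i)) → ℝ := fun x => ∏ i, g i (x i) with hfdef
  have fnn : ∀ x, 0 ≤ f x := fun x => Finset.prod_nonneg (fun i _ => gnn i (x i))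
  have sumg : ∀ i : Fin n, ∑ v : Fin (p i), g i v
      = if i ∈ T3 then (p i : ℝ) * ((p i : ℝ) - 1) else (p i : ℝ) := by
    intro i
    by_cases hi : i ∈ T3
    · rw [if_pos hi]
      have hrw : ∀ v : Fin (p i), g i v
          = (if v = z i then ((p i : ℝ) - 1)^2 - 1 else 0) + 1 := by
        intro v
        simp only [hgdef, hi, true_and]
        split_ifs <;> ring
      rw [Finset.sum_congr rfl (fun v _ => hrw v), Finset.sum_add_distrib,
        Finset.sum_ite_eq' univ (z i) (fun _ => ((p i : ℝ) - 1)^2 - 1),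
        if_pos (mem_univ _), Finset.sum_const, card_univ, Fintype.card_fin,
        nsmul_eq_mul, mul_one]
      ring
    · rw [if_neg hi]
      have hrw : ∀ v : Fin (p i), g i v = 1 := by
        intro v
        simp only [hgdef]
        rw [if_neg (by tauto)]
      rw [Finset.sum_congr rfl (fun v _ => hrw v), Finset.sum_const, card_univ,
        Fintype.card_fin, nsmul_eq_mul, mul_one]
  have total : ∑ x : (∀ i, Fin (p i)), f x
      = (∏ i, (p i : ℝ)) * ∏ i ∈ T3, ((p i : ℝ) - 1) := by
    rw [hfdef]
    rw [← Fintype.prod_sum g]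
    rw [Finset.prod_congr rfl (fun i _ => sumg i)]
    have hsplit : ∀ i ∈ (univ : Finset (Fin n)),
        (if i ∈ T3 then (p i : ℝ) * ((p i : ℝ) - 1) else (p i : ℝ))
          = (p i : ℝ) * (if i ∈ T3 then ((p i : ℝ) - 1) else 1) := by
      intro i _; split_ifs <;> ring
    rw [Finset.prod_congr rfl hsplit, Finset.prod_mul_distrib,
      Finset.prod_ite_mem univ T3 (fun i => ((p i : ℝ) - 1)), univ_inter]
  have prodA : ∏ x ∈ A, f x
      = ∏ i ∈ T3, (((p i : ℝ) - 1)^2) ^ ((sec A i (z i)).card : ℕ) := by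
    rw [hfdef]
    rw [Finset.prod_comm]
    have inner : ∀ i ∈ (univ : Finset (Fin n)), (∏ x ∈ A, g i (x i))
        = (if i ∈ T3 then (((p i : ℝ) - 1)^2) ^ ((sec A i (z i)).card : ℕ) else 1) := by
      intro i _
      by_cases hi : i ∈ T3
      · rw [if_pos hi]
        have hr : ∀ x ∈ A, g i (x i) = if x i = z i then ((p i : ℝ) - 1)^2 else 1 := by
          intro x _; simp only [hgdef, hi, true_and]
        rw [Finset.prod_congr rfl hr, Finset.prod_ite, Finset.prod_const,
          Finset.prod_const, one_pow, mul_one]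
        rfl
      · rw [if_neg hi]
        have hr : ∀ x ∈ A, g i (x i) = 1 := by
          intro x _; simp only [hgdef]; rw [if_neg (by tauto)]
        rw [Finset.prod_congr rfl hr, Finset.prod_const, one_pow]
    rw [Finset.prod_congr rfl inner, Finset.prod_ite_mem univ T3 _, univ_inter]
  -- Jensen / AM-GM
  have hw : ∑ _x ∈ A, (1/a) = 1 := by
    rw [Finset.sum_const, nsmul_eq_mul]
    field_simp
    exact hadef.symm
  have J := Real.geom_mean_le_arith_mean_weighted A (fun _ => 1/a) f
    (fun _ _ => by positivity) hw (fun x _ => fnn x)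
  have Jr : ∑ x ∈ A, (1/a) * f x
      ≤ (1/a) * ((∏ i, (p i : ℝ)) * ∏ i ∈ T3, ((p i : ℝ) - 1)) := by
    rw [← Finset.mul_sum]
    have hsub : ∑ x ∈ A, f x ≤ ∑ x : (∀ i, Fin (p i)), f x :=
      Finset.sum_le_sum_of_subset_of_nonneg (subset_univ A) (fun x _ _ => fnn x)
    exact mul_le_mul_of_nonneg_left (hsub.trans_eq total) (by positivity)
  have Jl : ∏ i ∈ T3, ((p i : ℝ) - 1) ^ ((2 * ((sec A i (z i)).card : ℝ)) / a)
      ≤ ∏ x ∈ A, f x ^ (1/a) := by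
    have h1 : ∏ x ∈ A, f x ^ (1/a) = (∏ x ∈ A, f x) ^ (1/a) :=
      Real.finset_prod_rpow A f (fun x _ => fnn x) (1/a)
    rw [h1, prodA, ← Real.finset_prod_rpow T3 _ (fun i _ => by positivity) (1/a)]
    apply le_of_eq
    apply Finset.prod_congr rfl
    intro i hi
    have hc : (0:ℝ) ≤ (p i : ℝ) - 1 := by
      have h3 := hp3 i hi
      have : (3:ℝ) ≤ (p i : ℝ) := by exact_mod_cast h3
      linarith
    rw [← Real.rpow_natCast (((p i : ℝ) - 1)^2) ((sec A i (z i)).card),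
      ← Real.rpow_mul (by positivity),
      ← Real.rpow_natCast ((p i : ℝ) - 1) 2,
      ← Real.rpow_mul hc]
    congr 1
    push_cast
    ring
  have key : a * ∏ i ∈ T3, ((p i : ℝ) - 1) ^ ((2 * ((sec A i (z i)).card : ℝ)) / a)
      ≤ (∏ i, (p i : ℝ)) * ∏ i ∈ T3, ((p i : ℝ) - 1) := by
    have hchain := (Jl.trans J).trans Jr
    have := mul_le_mul_of_nonneg_left hchain ha.le
    calc a * ∏ i ∈ T3, ((p i : ℝ) - 1) ^ ((2 * ((sec A i (z i)).card : ℝ)) / a)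
        ≤ a * ((1/a) * ((∏ i, (p i : ℝ)) * ∏ i ∈ T3, ((p i : ℝ) - 1))) := this
    _ = (∏ i, (p i : ℝ)) * ∏ i ∈ T3, ((p i : ℝ) - 1) := by
        field_simp
  have step : ∀ i ∈ T3,
      ((p i : ℝ) - 1) ^ (1 - 2 / (p i : ℝ)) * ((p i : ℝ) - 1)
        ≤ ((p i : ℝ) - 1) ^ ((2 * ((sec A i (z i)).card : ℝ)) / a) := by
    intro i hi
    have h3 := hp3 i hi
    have hP : (3:ℝ) ≤ (p i : ℝ) := by exact_mod_cast h3
    have hP0 : (0:ℝ) < (p i : ℝ) := by linarith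
    have hc1 : (1:ℝ) ≤ (p i : ℝ) - 1 := by linarith
    have hc0 : (0:ℝ) < (p i : ℝ) - 1 := by linarith
    have hzi := hz i hi
    have hziR : ((p i : ℝ) - 1) * a ≤ (p i : ℝ) * ((sec A i (z i)).card : ℝ) := by
      have hcast := (Nat.cast_le (α := ℝ)).2 hzi
      push_cast [Nat.cast_sub (show 1 ≤ p i by omega)] at hcast
      convert hcast using 1 <;> push_cast <;> ring
    have hexp : 1 - 2 / (p i : ℝ) + 1 ≤ (2 * ((sec A i (z i)).card : ℝ)) / a := by
      have hrw : 1 - 2 / (p i : ℝ) + 1 = (2 * (p i : ℝ) - 2) / (p i : ℝ) := by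
        field_simp
        ring
      rw [hrw, div_le_div_iff₀ hP0 ha]
      nlinarith [hziR]
    calc ((p i : ℝ) - 1) ^ (1 - 2 / (p i : ℝ)) * ((p i : ℝ) - 1)
        = ((p i : ℝ) - 1) ^ (1 - 2 / (p i : ℝ)) * ((p i : ℝ) - 1) ^ (1:ℝ) := by
          rw [Real.rpow_one]
    _ = ((p i : ℝ) - 1) ^ (1 - 2 / (p i : ℝ) + 1) := by
          rw [← Real.rpow_add hc0]
    _ ≤ ((p i : ℝ) - 1) ^ ((2 * ((sec A i (z i)).card : ℝ)) / a) :=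
          Real.rpow_le_rpow_of_exponent_le hc1 hexp
  have step2 : (∏ i ∈ T3, ((p i : ℝ) - 1) ^ (1 - 2 / (p i : ℝ)))
      * (∏ i ∈ T3, ((p i : ℝ) - 1))
      ≤ ∏ i ∈ T3, ((p i : ℝ) - 1) ^ ((2 * ((sec A i (z i)).card : ℝ)) / a) := by
    rw [← Finset.prod_mul_distrib]
    apply Finset.prod_le_prod
    · intro i hi
      have h3 := hp3 i hi
      have hP : (3:ℝ) ≤ (p i : ℝ) := by exact_mod_cast h3
      have hc0 : (0:ℝ) < (p i : ℝ) - 1 := by linarith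
      positivity
    · exact step
  have hprodc : (0:ℝ) < ∏ i ∈ T3, ((p i : ℝ) - 1) := by
    apply Finset.prod_pos
    intro i hi
    have h3 := hp3 i hi
    have hP : (3:ℝ) ≤ (p i : ℝ) := by exact_mod_cast h3
    linarith
  refine le_of_mul_le_mul_right ?_ hprodc
  calc (a * ∏ i ∈ T3, ((p i : ℝ) - 1) ^ (1 - 2 / (p i : ℝ)))
        * ∏ i ∈ T3, ((p i : ℝ) - 1)
        = a * ((∏ i ∈ T3, ((p i : ℝ) - 1) ^ (1 - 2 / (p i : ℝ)))
            * ∏ i ∈ T3, ((p i : ℝ) - 1)) := by ring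
    _ ≤ a * ∏ i ∈ T3, ((p i : ℝ) - 1) ^ ((2 * ((sec A i (z i)).card : ℝ)) / a) :=
          mul_le_mul_of_nonneg_left step2 ha.le
    _ ≤ (∏ i, (p i : ℝ)) * ∏ i ∈ T3, ((p i : ℝ) - 1) := key

lemma main_half {r : ℕ} (hrn : r ≤ n) (hp : ∀ i, 2 ≤ p i)
    {A B : Finset (∀ i, Fin (p i))} (hAB : MaxPair r A B)
    (T : Finset (Fin n))
    (hT : T = univ.filter (fun i => Relevant A i ∨ Relevant B i)) :
    (A.card : ℝ) ≤ (∏ i, (p i : ℝ)) /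
      ∏ i ∈ T, ((p i : ℝ) - 1) ^ (1 - 2 / (p i : ℝ)) := by
  obtain ⟨ha0, hb0⟩ := maxpair_pos hrn hp hAB
  set T3 : Finset (Fin n) := T.filter (fun i => 3 ≤ p i) with hT3
  have hp3 : ∀ i ∈ T3, 3 ≤ p i := fun i hi => (mem_filter.1 hi).2
  have hrel : ∀ i ∈ T3, Relevant A i ∨ Relevant B i := by
    intro i hi
    have hiT : i ∈ T := (mem_filter.1 hi).1
    rw [hT] at hiT
    exact (mem_filter.1 hiT).2
  have hex : ∀ i ∈ T3, ∃ zz : Fin (p i),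
      (p i - 1) * A.card ≤ p i * (sec A i zz).card ∧
      (p i - 1) * B.card ≤ p i * (sec B i zz).card := fun i hi =>
    concentration hrn hp hAB i (hp3 i hi) (hrel i hi)
  choose zf hzA hzB using hex
  set z : ∀ i, Fin (p i) := fun i =>
    if h : i ∈ T3 then zf i h else ⟨0, by have := hp i; omega⟩ with hzdef
  have hzA' : ∀ i ∈ T3, (p i - 1) * A.card ≤ p i * (sec A i (z i)).card := by
    intro i hi
    have : z i = zf i hi := by rw [hzdef]; simp only [dif_pos hi]
    rw [this]
    exact hzA i hi
  have hcb := count_bound hp ha0 T3 hp3 z hzA'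
  have hone : ∀ i ∈ T, i ∉ T3 → ((p i : ℝ) - 1) ^ (1 - 2 / (p i : ℝ)) = 1 := by
    intro i hiT hiT3
    have h2 : p i = 2 := by
      have hpi := hp i
      by_contra h
      exact hiT3 (mem_filter.2 ⟨hiT, by omega⟩)
    rw [h2]
    norm_num
  have hprod : ∏ i ∈ T3, ((p i : ℝ) - 1) ^ (1 - 2 / (p i : ℝ))
      = ∏ i ∈ T, ((p i : ℝ) - 1) ^ (1 - 2 / (p i : ℝ)) :=
    Finset.prod_subset (filter_subset _ _) hone
  have hQpos : (0:ℝ) < ∏ i ∈ T, ((p i : ℝ) - 1) ^ (1 - 2 / (p i : ℝ)) := by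
    apply Finset.prod_pos
    intro i _
    have hpi := hp i
    have h1 : (0:ℝ) < (p i : ℝ) - 1 := by
      have : (2:ℝ) ≤ (p i : ℝ) := by exact_mod_cast hpi
      linarith
    positivity
  rw [le_div_iff₀ hQpos, ← hprod]
  exact hcb

lemma crossint_symm {r : ℕ} {A B : Finset (∀ i, Fin (p i))} (h : CrossInt r A B) :
    CrossInt r B A := by
  intro x hx y hy
  have h2 := h y hy x hx
  have e : (univ.filter (fun i => y i = x i)) = (univ.filter (fun i => x i = y i)) := by
    apply Finset.filter_congr
    intro i _
    exact eq_comm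
  rwa [e] at h2

lemma maxpair_symm {r : ℕ} {A B : Finset (∀ i, Fin (p i))} (h : MaxPair r A B) :
    MaxPair r B A := by
  refine ⟨crossint_symm h.1, ?_⟩
  intro A' B' h'
  calc A'.card * B'.card = B'.card * A'.card := mul_comm _ _
  _ ≤ A.card * B.card := h.2 B' A' (crossint_symm h')
  _ = B.card * A.card := mul_comm _ _

end Thm5Aux


open scoped Classical in
/-- Theorem 5: for a maximal `r`-cross-intersecting pair `(A, B)` with `T` the
set of coordinates relevant for `A` or `B`, both `|A|` and `|B|` are at most
`|S_p| / ∏_{i ∈ T} (p_i - 1)^{1 - 2/p_i}` (with real exponents). -/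
theorem theorem5 {n : ℕ} (r : ℕ) (hr : 1 ≤ r) (hrn : r ≤ n)
    (p : Fin n → ℕ) (hp : ∀ i, 2 ≤ p i)
    (A B : Finset (∀ i, Fin (p i))) (hAB : MaxPair r A B)
    (T : Finset (Fin n))
    (hT : T = univ.filter (fun i => Relevant A i ∨ Relevant B i)) :
    (A.card : ℝ) ≤ (∏ i, (p i : ℝ)) /
        ∏ i ∈ T, ((p i : ℝ) - 1) ^ (1 - 2 / (p i : ℝ)) ∧
    (B.card : ℝ) ≤ (∏ i, (p i : ℝ)) /
        ∏ i ∈ T, ((p i : ℝ) - 1) ^ (1 - 2 / (p i : ℝ)) := by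
  constructor
  · exact Thm5Aux.main_half hrn hp hAB T hT
  · have hT' : T = univ.filter (fun i => Relevant B i ∨ Relevant A i) := by
      rw [hT]
      apply Finset.filter_congr
      intro i _
      exact or_comm
    exact Thm5Aux.main_half hrn hp (Thm5Aux.maxpair_symm hAB) T hT'
end

section
/- Let 1 ≤ r ≤ n, let p = (p_1,…,p_n) be a size vector, let (A, B) be a maximal pair of r-cross-intersecting families in S_p, and let T be the set of coordinates that are relevant for A or for B. Then Π_{i=1}^{r} p_i ≥ Π_{i∈T} (p_i − 1)^{1 − 2/p_i}, where the exponents 1 − 2/p_i are real numbers. -/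
open Finset

namespace Thm6

variable {n : ℕ} {p : Fin n → ℕ} {r : ℕ}

/-- fiber of `A` at coordinate `i`, value `v` -/
def fib (A : Finset (∀ i, Fin (p i))) (i : Fin n) (v : Fin (p i)) :
    Finset (∀ i, Fin (p i)) := A.filter (fun x => x i = v)

/-- cylinder over the fiber at `(i,v)` -/
def cyl (i : Fin n) (v : Fin (p i)) (A : Finset (∀ i, Fin (p i))) :
    Finset (∀ i, Fin (p i)) := univ.filter (fun x => Function.update x i v ∈ A)

lemma sum_fib_card (A : Finset (∀ i, Fin (p i))) (i : Fin n) :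
    ∑ v, (fib A i v).card = A.card := by
  rw [Finset.card_eq_sum_card_fiberwise (f := fun x => x i) (t := univ) (fun x _ => mem_univ _)]
  rfl

lemma cyl_card (i : Fin n) (v : Fin (p i)) (A : Finset (∀ i, Fin (p i))) :
    (cyl i v A).card = p i * (fib A i v).card := by
  rw [Finset.card_eq_sum_card_fiberwise (f := fun x => x i) (t := univ) (fun x _ => mem_univ _)]
  have hterm : ∀ u : Fin (p i),
      ((cyl i v A).filter (fun x => x i = u)).card = (fib A i v).card := by
    intro u
    refine Finset.card_bij' (fun x _ => Function.update x i v)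
      (fun y _ => Function.update y i u) ?_ ?_ ?_ ?_
    · intro x hx
      simp only [cyl, mem_filter, mem_univ, true_and] at hx
      simp only [fib, mem_filter]
      exact ⟨hx.1, Function.update_self _ _ _⟩
    · intro y hy
      simp only [fib, mem_filter] at hy
      simp only [cyl, mem_filter, mem_univ, true_and]
      rw [Function.update_idem]
      have h2 : Function.update y i v = y := by
        rw [← hy.2]; exact Function.update_eq_self _ _
      rw [h2]; exact ⟨hy.1, Function.update_self _ _ _⟩
    · intro x hx
      simp only [cyl, mem_filter, mem_univ, true_and] at hx
      show Function.update (Function.update x i v) i u = x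
      rw [Function.update_idem, ← hx.2]
      exact Function.update_eq_self _ _
    · intro y hy
      simp only [fib, mem_filter] at hy
      show Function.update (Function.update y i u) i v = y
      rw [Function.update_idem, ← hy.2]
      exact Function.update_eq_self _ _
  rw [Finset.sum_congr rfl (fun u _ => hterm u), Finset.sum_const, card_univ,
    Fintype.card_fin, smul_eq_mul]

lemma crossInt_cyl {A B : Finset (∀ i, Fin (p i))} (h : CrossInt r A B)
    {i : Fin n} {v w : Fin (p i)} (hvw : v ≠ w) :
    CrossInt r (cyl i v A) (cyl i w B) := by
  intro x hx y hy
  simp only [cyl, mem_filter, mem_univ, true_and] at hx hy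
  refine le_trans (h _ hx _ hy) (Finset.card_le_card ?_)
  intro j hj
  simp only [mem_filter, mem_univ, true_and] at hj ⊢
  by_cases hji : j = i
  · subst hji
    rw [Function.update_self, Function.update_self] at hj
    exact absurd hj hvw
  · rwa [Function.update_of_ne hji, Function.update_of_ne hji] at hj

/-- the dual family -/
def dstar (r : ℕ) (B : Finset (∀ i, Fin (p i))) : Finset (∀ i, Fin (p i)) :=
  univ.filter (fun x => ∀ y ∈ B, r ≤ (univ.filter (fun i => x i = y i)).card)

lemma crossInt_dstar (r : ℕ) (B : Finset (∀ i, Fin (p i))) :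
    CrossInt r (dstar r B) B := fun x hx => (mem_filter.1 hx).2

lemma crossInt_symm {A B : Finset (∀ i, Fin (p i))} (h : CrossInt r A B) :
    CrossInt r B A := by
  intro y hy x hx
  refine le_trans (h x hx y hy) (le_of_eq ?_)
  congr 1
  apply Finset.filter_congr
  intro i _
  simp [eq_comm]

lemma maxPair_symm {A B : Finset (∀ i, Fin (p i))} (h : MaxPair r A B) :
    MaxPair r B A := by
  refine ⟨crossInt_symm h.1, fun A' B' h' => ?_⟩
  rw [mul_comm, mul_comm B.card]
  exact h.2 B' A' (crossInt_symm h')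

lemma one_le_card_mul (hp : ∀ i, 2 ≤ p i) (hrn : r ≤ n)
    {A B : Finset (∀ i, Fin (p i))} (hAB : MaxPair r A B) :
    1 ≤ A.card * B.card := by
  set x0 : ∀ i, Fin (p i) := fun i => ⟨0, by have := hp i; omega⟩ with hx0
  have hc : CrossInt r {x0} {x0} := by
    intro x hx y hy
    simp only [Finset.mem_singleton] at hx hy
    subst hx; subst hy
    have : (univ.filter (fun i => x0 i = x0 i)) = univ := by
      apply Finset.filter_true_of_mem; intro i _; rfl
    rw [this, card_univ, Fintype.card_fin]
    exact hrn
  have := hAB.2 {x0} {x0} hc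
  simpa using this

lemma card_pos_left (hp : ∀ i, 2 ≤ p i) (hrn : r ≤ n)
    {A B : Finset (∀ i, Fin (p i))} (hAB : MaxPair r A B) : 0 < A.card := by
  have := one_le_card_mul hp hrn hAB
  by_contra h
  push_neg at h
  interval_cases h' : A.card <;> omega

lemma card_pos_right (hp : ∀ i, 2 ≤ p i) (hrn : r ≤ n)
    {A B : Finset (∀ i, Fin (p i))} (hAB : MaxPair r A B) : 0 < B.card :=
  card_pos_left hp hrn (maxPair_symm hAB)

lemma maxPair_eq_dstar {A B : Finset (∀ i, Fin (p i))} (hAB : MaxPair r A B)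
    (hB : 0 < B.card) : A = dstar r B := by
  have hsub : A ⊆ dstar r B := by
    intro x hx
    exact mem_filter.2 ⟨mem_univ _, fun y hy => hAB.1 x hx y hy⟩
  have hcard : (dstar r B).card ≤ A.card := by
    have := hAB.2 (dstar r B) B (crossInt_dstar r B)
    exact Nat.le_of_mul_le_mul_right this hB
  exact (Finset.eq_of_subset_of_card_le hsub hcard)

lemma exists_third {m : ℕ} (hm : 3 ≤ m) (v v' : Fin m) :
    ∃ w : Fin m, w ≠ v ∧ w ≠ v' := by
  have hns : ¬ (univ : Finset (Fin m)) ⊆ {v, v'} := by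
    intro hsub
    have h1 := Finset.card_le_card hsub
    have h2 : ({v, v'} : Finset (Fin m)).card ≤ 2 :=
      le_trans (Finset.card_insert_le _ _) (by simp)
    rw [card_univ, Fintype.card_fin] at h1
    omega
  obtain ⟨w, -, hw⟩ := Finset.not_subset.1 hns
  simp only [Finset.mem_insert, Finset.mem_singleton, not_or] at hw
  exact ⟨w, hw.1, hw.2⟩

lemma mem_cyl_iff {A : Finset (∀ i, Fin (p i))} {i : Fin n} {v : Fin (p i)}
    {x : ∀ i, Fin (p i)} : x ∈ cyl i v A ↔ Function.update x i v ∈ A := by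
  simp [cyl]

lemma uniform_irrelevant (hp : ∀ i, 2 ≤ p i) (hrn : r ≤ n)
    {A B : Finset (∀ i, Fin (p i))} (hAB : MaxPair r A B)
    (i : Fin n) (h3 : 3 ≤ p i)
    (hu : ∀ v, p i * (fib A i v).card = A.card ∧ p i * (fib B i v).card = B.card) :
    ¬ Relevant A i ∧ ¬ Relevant B i := by
  have hb : 0 < B.card := card_pos_right hp hrn hAB
  have ha : 0 < A.card := card_pos_left hp hrn hAB
  have hcA : ∀ v, (cyl i v A).card = A.card := fun v => by rw [cyl_card, (hu v).1]
  have hcB : ∀ v, (cyl i v B).card = B.card := fun v => by rw [cyl_card, (hu v).2]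
  have key : ∀ v w : Fin (p i), v ≠ w → MaxPair r (cyl i v A) (cyl i w B) := by
    intro v w hvw
    refine ⟨crossInt_cyl hAB.1 hvw, fun A' B' h' => ?_⟩
    rw [hcA, hcB]
    exact hAB.2 A' B' h'
  have keyB : ∀ v w : Fin (p i), v ≠ w → MaxPair r (cyl i w B) (cyl i v A) :=
    fun v w hvw => maxPair_symm (key v w hvw)
  have cylA_eq : ∀ v v' : Fin (p i), cyl i v A = cyl i v' A := by
    intro v v'
    obtain ⟨w, hwv, hwv'⟩ := exists_third h3 v v'
    have h1 := maxPair_eq_dstar (key v w (Ne.symm hwv)) (by rw [hcB]; exact hb)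
    have h2 := maxPair_eq_dstar (key v' w (Ne.symm hwv')) (by rw [hcB]; exact hb)
    rw [h1, h2]
  have cylB_eq : ∀ w w' : Fin (p i), cyl i w B = cyl i w' B := by
    intro w w'
    obtain ⟨v, hv, hv'⟩ := exists_third h3 w w'
    have h1 := maxPair_eq_dstar (keyB v w hv) (by rw [hcA]; exact ha)
    have h2 := maxPair_eq_dstar (keyB v w' hv') (by rw [hcA]; exact ha)
    rw [h1, h2]
  have gen : ∀ (C : Finset (∀ i, Fin (p i))),
      (∀ v v' : Fin (p i), cyl i v C = cyl i v' C) → ¬ Relevant C i := by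
    intro C hC
    rintro ⟨x, y, hdiff, hxC, hyC⟩
    have hyx : y = Function.update x i (y i) := by
      funext j
      by_cases hji : j = i
      · subst hji; rw [Function.update_self]
      · rw [Function.update_of_ne hji]; exact (hdiff j hji).symm
    have hx' : x ∈ cyl i (x i) C := by
      rw [mem_cyl_iff, Function.update_eq_self]; exact hxC
    rw [hC (x i) (y i), mem_cyl_iff] at hx'
    rw [← hyx] at hx'
    exact hyC hx'
  exact ⟨gen A cylA_eq, gen B cylB_eq⟩

lemma dichotomy_aux {m : ℕ} (hm : 3 ≤ m) (α β : Fin m → ℝ)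
    (hα0 : ∀ v, 0 ≤ α v) (hβ0 : ∀ v, 0 ≤ β v)
    (hαs : ∑ v, α v = 1) (hβs : ∑ v, β v = 1)
    (hc : ∀ v w, v ≠ w → α v * β w ≤ 1 / (m : ℝ)^2)
    (v0 : Fin m) (hv0 : 1/(m:ℝ) < α v0) :
    ((m:ℝ)-1)/m ≤ α v0 ∧ ((m:ℝ)-1)/m ≤ β v0 := by
  have hm0 : (0:ℝ) < m := by positivity
  have hm3 : (3:ℝ) ≤ (m:ℝ) := by exact_mod_cast hm
  have hαv0 : 0 < α v0 := lt_trans (by positivity) hv0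
  have sum_erase : ∀ γ : Fin m → ℝ, (∑ v, γ v = 1) →
      γ v0 = 1 - ∑ w ∈ univ.erase v0, γ w := by
    intro γ hγ
    have h := Finset.add_sum_erase univ γ (mem_univ v0)
    rw [hγ] at h
    linarith
  have cast_card : ((univ.erase v0 : Finset (Fin m)).card : ℝ) = (m:ℝ) - 1 := by
    rw [Finset.card_erase_of_mem (mem_univ v0), card_univ, Fintype.card_fin]
    have : 1 ≤ m := by omega
    push_cast [this]
    ring
  have step : ∀ (γ : Fin m → ℝ), (∀ v, 0 ≤ γ v) → (∑ v, γ v = 1) →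
      ∀ (c : ℝ), 0 < c → (∀ w, w ≠ v0 → γ w * c ≤ 1 / (m:ℝ)^2) →
      1 - ((m:ℝ)-1)/((m:ℝ)^2 * c) ≤ γ v0 := by
    intro γ hγ0 hγs c hcpos hbd
    have hsum : ∑ w ∈ univ.erase v0, γ w ≤ ((m:ℝ)-1) * (1/((m:ℝ)^2 * c)) := by
      have h1 : ∀ w ∈ univ.erase v0, γ w ≤ 1/((m:ℝ)^2 * c) := by
        intro w hw
        have hwne : w ≠ v0 := Finset.ne_of_mem_erase hw
        have h2 := hbd w hwne
        rw [← div_div]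
        rw [le_div_iff₀ hcpos]
        exact h2
      calc ∑ w ∈ univ.erase v0, γ w ≤ ∑ _w ∈ univ.erase v0, 1/((m:ℝ)^2 * c) :=
            Finset.sum_le_sum h1
        _ = ((m:ℝ)-1) * (1/((m:ℝ)^2 * c)) := by
            rw [Finset.sum_const, nsmul_eq_mul, cast_card]
    have h3 := sum_erase γ hγs
    rw [mul_one_div] at hsum
    linarith
  -- introduce s, t
  set s : ℝ := (m:ℝ) * α v0 with hs_def
  have hs1 : 1 < s := by
    rw [hs_def]
    calc (1:ℝ) = (m:ℝ) * (1/(m:ℝ)) := by field_simp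
      _ < (m:ℝ) * α v0 := by exact mul_lt_mul_of_pos_left hv0 hm0
  have hspos : (0:ℝ) < s := by linarith
  -- t lower bound via step applied to β with c = α v0
  have hβlb : 1 - ((m:ℝ)-1)/((m:ℝ)^2 * α v0) ≤ β v0 := by
    refine step β hβ0 hβs (α v0) hαv0 (fun w hw => ?_)
    rw [mul_comm]
    exact hc v0 w (Ne.symm hw)
  have hms : (m:ℝ)^2 * α v0 = (m:ℝ) * s := by rw [hs_def]; ring
  set t : ℝ := (m:ℝ) * β v0 with ht_def
  have hmulkey : ∀ x : ℝ, 0 < x → (m:ℝ) * (1 - ((m:ℝ)-1)/((m:ℝ)*x)) = (m:ℝ) - ((m:ℝ)-1)/x := by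
    intro x hx
    rw [mul_sub, mul_one, mul_div_assoc', mul_div_mul_left _ _ (ne_of_gt hm0)]
  have hts : (m:ℝ) - ((m:ℝ)-1)/s ≤ t := by
    rw [hms] at hβlb
    rw [ht_def]
    have h6 := mul_le_mul_of_nonneg_left hβlb (le_of_lt hm0)
    rw [hmulkey s hspos] at h6
    exact h6
  have ht1 : 1 < t := by
    have h5 : ((m:ℝ)-1)/s < (m:ℝ)-1 := div_lt_self (by linarith) hs1
    linarith
  have htpos : (0:ℝ) < t := by linarith
  have hβv0 : 0 < β v0 := by
    have : t = (m:ℝ) * β v0 := ht_def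
    nlinarith
  -- s lower bound via step applied to α with c = β v0
  have hαlb : 1 - ((m:ℝ)-1)/((m:ℝ)^2 * β v0) ≤ α v0 := by
    refine step α hα0 hαs (β v0) hβv0 (fun w hw => ?_)
    exact hc w v0 hw
  have hmt : (m:ℝ)^2 * β v0 = (m:ℝ) * t := by rw [ht_def]; ring
  have hst : (m:ℝ) - ((m:ℝ)-1)/t ≤ s := by
    rw [hmt] at hαlb
    rw [hs_def]
    have h6 := mul_le_mul_of_nonneg_left hαlb (le_of_lt hm0)
    rw [hmulkey t htpos] at h6
    exact h6
  -- products
  have hts' : (m:ℝ)*s - ((m:ℝ)-1) ≤ t*s := by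
    have h6 := mul_le_mul_of_nonneg_right hts (le_of_lt hspos)
    have h7 : (((m:ℝ)) - ((m:ℝ)-1)/s) * s = (m:ℝ)*s - ((m:ℝ)-1) := by
      rw [sub_mul, div_mul_cancel₀ _ (ne_of_gt hspos)]
    linarith [h6, h7.symm.le]
  have hst' : (m:ℝ)*t - ((m:ℝ)-1) ≤ s*t := by
    have h6 := mul_le_mul_of_nonneg_right hst (le_of_lt htpos)
    have h7 : (((m:ℝ)) - ((m:ℝ)-1)/t) * t = (m:ℝ)*t - ((m:ℝ)-1) := by
      rw [sub_mul, div_mul_cancel₀ _ (ne_of_gt htpos)]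
    linarith [h6, h7.symm.le]
  -- main dichotomy: s ≥ m-1 or t ≥ m-1
  have hdich : (m:ℝ)-1 ≤ s ∨ (m:ℝ)-1 ≤ t := by
    by_contra hcon
    push_neg at hcon
    obtain ⟨hsl, htl⟩ := hcon
    nlinarith [mul_pos (sub_pos.2 hs1) (sub_pos.2 hsl),
      mul_pos (sub_pos.2 ht1) (sub_pos.2 htl), sq_nonneg (s - t)]
  -- bootstrap: both are ≥ m-1
  have hboth : (m:ℝ)-1 ≤ s ∧ (m:ℝ)-1 ≤ t := by
    rcases hdich with h | h
    · refine ⟨h, ?_⟩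
      have h8 : ((m:ℝ)-1)/s ≤ 1 := by
        rw [div_le_one hspos]; exact h
      linarith
    · refine ⟨?_, h⟩
      have h8 : ((m:ℝ)-1)/t ≤ 1 := by
        rw [div_le_one htpos]; exact h
      linarith
  constructor
  · rw [div_le_iff₀ hm0, mul_comm]
    exact hboth.1
  · rw [div_le_iff₀ hm0, mul_comm]
    exact hboth.2

lemma dichotomy {m : ℕ} (hm : 3 ≤ m) (α β : Fin m → ℝ)
    (hα0 : ∀ v, 0 ≤ α v) (hβ0 : ∀ v, 0 ≤ β v)
    (hαs : ∑ v, α v = 1) (hβs : ∑ v, β v = 1)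
    (hc : ∀ v w, v ≠ w → α v * β w ≤ 1 / (m : ℝ)^2)
    (hnu : ∃ v0, 1/(m:ℝ) < α v0 ∨ 1/(m:ℝ) < β v0) :
    ∃ u, ((m:ℝ)-1)/m ≤ α u ∧ ((m:ℝ)-1)/m ≤ β u := by
  obtain ⟨v0, hv0 | hv0⟩ := hnu
  · exact ⟨v0, dichotomy_aux hm α β hα0 hβ0 hαs hβs hc v0 hv0⟩
  · have hc' : ∀ v w, v ≠ w → β v * α w ≤ 1 / (m : ℝ)^2 := by
      intro v w hvw
      rw [mul_comm]
      exact hc w v (Ne.symm hvw)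
    obtain ⟨h1, h2⟩ := dichotomy_aux hm β α hβ0 hα0 hβs hαs hc' v0 hv0
    exact ⟨v0, h2, h1⟩

lemma concentration (hp : ∀ i, 2 ≤ p i) (hrn : r ≤ n)
    {A B : Finset (∀ i, Fin (p i))} (hAB : MaxPair r A B)
    {i : Fin n} (h3 : 3 ≤ p i) (hrel : Relevant A i ∨ Relevant B i) :
    ∃ v0 : Fin (p i),
      ((p i : ℝ) - 1) * A.card ≤ (p i : ℝ) * ((fib A i v0).card : ℝ) ∧
      ((p i : ℝ) - 1) * B.card ≤ (p i : ℝ) * ((fib B i v0).card : ℝ) := by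
  have ha : 0 < A.card := card_pos_left hp hrn hAB
  have hb : 0 < B.card := card_pos_right hp hrn hAB
  have ha' : (0:ℝ) < A.card := by exact_mod_cast ha
  have hb' : (0:ℝ) < B.card := by exact_mod_cast hb
  have hpi0 : (0:ℝ) < (p i : ℝ) := by
    have := hp i; positivity
  have hexch : ∀ v w : Fin (p i), v ≠ w →
      p i * (fib A i v).card * (p i * (fib B i w).card) ≤ A.card * B.card := by
    intro v w hvw
    have h := hAB.2 (cyl i v A) (cyl i w B) (crossInt_cyl hAB.1 hvw)
    rwa [cyl_card, cyl_card] at h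
  by_cases huni : ∀ v, p i * (fib A i v).card = A.card ∧ p i * (fib B i v).card = B.card
  · exfalso
    obtain ⟨h1, h2⟩ := uniform_irrelevant hp hrn hAB i h3 huni
    rcases hrel with h | h
    · exact h1 h
    · exact h2 h
  · -- find a strictly large fiber
    have hsumA : ∑ v, p i * (fib A i v).card = p i * A.card := by
      rw [← Finset.mul_sum, sum_fib_card]
    have hsumB : ∑ v, p i * (fib B i v).card = p i * B.card := by
      rw [← Finset.mul_sum, sum_fib_card]
    have hcardu : (univ : Finset (Fin (p i))).card = p i := by
      rw [card_univ, Fintype.card_fin]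
    have hex : ∃ v, A.card < p i * (fib A i v).card ∨ B.card < p i * (fib B i v).card := by
      by_contra hno
      push_neg at hno
      apply huni
      intro v
      constructor
      · by_contra hne
        have hlt : p i * (fib A i v).card < A.card := lt_of_le_of_ne ((hno v).1) hne
        have hstrict : ∑ u, p i * (fib A i u).card < ∑ _u : Fin (p i), A.card := by
          apply Finset.sum_lt_sum (fun u _ => (hno u).1) ⟨v, mem_univ v, hlt⟩
        rw [hsumA, Finset.sum_const, hcardu, smul_eq_mul] at hstrict
        omega
      · by_contra hne
        have hlt : p i * (fib B i v).card < B.card := lt_of_le_of_ne ((hno v).2) hne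
        have hstrict : ∑ u, p i * (fib B i u).card < ∑ _u : Fin (p i), B.card := by
          apply Finset.sum_lt_sum (fun u _ => (hno u).2) ⟨v, mem_univ v, hlt⟩
        rw [hsumB, Finset.sum_const, hcardu, smul_eq_mul] at hstrict
        omega
    -- apply the dichotomy to normalized fibers
    set α : Fin (p i) → ℝ := fun v => ((fib A i v).card : ℝ) / A.card with hα_def
    set β : Fin (p i) → ℝ := fun v => ((fib B i v).card : ℝ) / B.card with hβ_def
    have hα0 : ∀ v, 0 ≤ α v := fun v => by positivity
    have hβ0 : ∀ v, 0 ≤ β v := fun v => by positivity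
    have hαs : ∑ v, α v = 1 := by
      rw [hα_def, ← Finset.sum_div]
      rw [show ∑ v, ((fib A i v).card : ℝ) = ((∑ v, (fib A i v).card : ℕ) : ℝ) by push_cast; rfl]
      rw [sum_fib_card]
      exact div_self (ne_of_gt ha')
    have hβs : ∑ v, β v = 1 := by
      rw [hβ_def, ← Finset.sum_div]
      rw [show ∑ v, ((fib B i v).card : ℝ) = ((∑ v, (fib B i v).card : ℕ) : ℝ) by push_cast; rfl]
      rw [sum_fib_card]
      exact div_self (ne_of_gt hb')
    have hc : ∀ v w, v ≠ w → α v * β w ≤ 1 / (p i : ℝ)^2 := by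
      intro v w hvw
      have h := hexch v w hvw
      have h' : ((p i : ℝ) * (fib A i v).card) * ((p i : ℝ) * (fib B i w).card)
          ≤ (A.card : ℝ) * B.card := by exact_mod_cast h
      rw [hα_def, hβ_def, div_mul_div_comm, div_le_div_iff₀ (by positivity) (by positivity)]
      nlinarith [h']
    have hnu : ∃ v0, 1/(p i:ℝ) < α v0 ∨ 1/(p i:ℝ) < β v0 := by
      obtain ⟨v, hv | hv⟩ := hex
      · refine ⟨v, Or.inl ?_⟩
        rw [hα_def, div_lt_div_iff₀ hpi0 ha']
        have : (A.card : ℝ) < (p i : ℝ) * (fib A i v).card := by exact_mod_cast hv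
        linarith
      · refine ⟨v, Or.inr ?_⟩
        rw [hβ_def, div_lt_div_iff₀ hpi0 hb']
        have : (B.card : ℝ) < (p i : ℝ) * (fib B i v).card := by exact_mod_cast hv
        linarith
    obtain ⟨u, hu1, hu2⟩ := dichotomy h3 α β hα0 hβ0 hαs hβs hc hnu
    refine ⟨u, ?_, ?_⟩
    · rw [hα_def, div_le_div_iff₀ hpi0 ha'] at hu1
      linarith
    · rw [hβ_def, div_le_div_iff₀ hpi0 hb'] at hu2
      linarith

lemma subadd {A : Finset (∀ i, Fin (p i))} (hA : 0 < A.card) :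
    (A.card : ℝ) * Real.log A.card ≤
      ∑ i, ∑ v, ((fib A i v).card : ℝ) *
        Real.log ((A.card : ℝ) / ((fib A i v).card : ℝ)) := by
  set a : ℝ := (A.card : ℝ) with ha_def
  have ha : 0 < a := by rw [ha_def]; exact_mod_cast hA
  set q : (i : Fin n) → Fin (p i) → ℝ := fun i v => ((fib A i v).card : ℝ) / a with hq_def
  have hqnn : ∀ (i : Fin n) (v : Fin (p i)), 0 ≤ q i v := by
    intro i v; rw [hq_def]; positivity
  have hqsum : ∀ i, ∑ v, q i v = 1 := by
    intro i
    rw [hq_def]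
    simp only
    rw [← Finset.sum_div]
    rw [show ∑ v, ((fib A i v).card : ℝ) = ((∑ v, (fib A i v).card : ℕ) : ℝ) by
      push_cast; rfl]
    rw [sum_fib_card]
    exact div_self (ne_of_gt ha)
  have hqpos : ∀ x ∈ A, ∀ (i : Fin n), 0 < q i (x i) := by
    intro x hx i
    have hmem : x ∈ fib A i (x i) := Finset.mem_filter.2 ⟨hx, rfl⟩
    have hpos : 0 < (fib A i (x i)).card := Finset.card_pos.2 ⟨x, hmem⟩
    have : (0:ℝ) < ((fib A i (x i)).card : ℝ) := by exact_mod_cast hpos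
    rw [hq_def]
    positivity
  have hppos : ∀ x ∈ A, 0 < ∏ i, q i (x i) :=
    fun x hx => Finset.prod_pos (fun i _ => hqpos x hx i)
  have key1 : ∑ x ∈ A, (∏ i, q i (x i)) ≤ 1 := by
    have h1 : ∑ x ∈ A, (∏ i, q i (x i)) ≤
        ∑ x : (∀ i, Fin (p i)), ∏ i, q i (x i) :=
      Finset.sum_le_sum_of_subset_of_nonneg (Finset.subset_univ A)
        (fun x _ _ => Finset.prod_nonneg (fun i _ => hqnn i (x i)))
    have h2 : ∏ i, ∑ v, q i v = ∑ x : (∀ i, Fin (p i)), ∏ i, q i (x i) := by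
      rw [Finset.prod_univ_sum, Fintype.piFinset_univ]
    have h3 : ∏ i, ∑ v, q i v = 1 := by
      rw [Finset.prod_congr rfl (fun i _ => hqsum i), Finset.prod_const_one]
    calc ∑ x ∈ A, (∏ i, q i (x i)) ≤ ∑ x : (∀ i, Fin (p i)), ∏ i, q i (x i) := h1
      _ = 1 := by rw [← h2, h3]
  have key2 : ∑ x ∈ A, Real.log (a * ∏ i, q i (x i)) ≤ 0 := by
    have hb : ∀ x ∈ A, Real.log (a * ∏ i, q i (x i)) ≤ a * (∏ i, q i (x i)) - 1 :=
      fun x hx => Real.log_le_sub_one_of_pos (mul_pos ha (hppos x hx))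
    calc ∑ x ∈ A, Real.log (a * ∏ i, q i (x i))
        ≤ ∑ x ∈ A, (a * (∏ i, q i (x i)) - 1) := Finset.sum_le_sum hb
      _ = a * (∑ x ∈ A, ∏ i, q i (x i)) - a := by
          rw [Finset.sum_sub_distrib, ← Finset.mul_sum, Finset.sum_const,
            nsmul_eq_mul, mul_one, ha_def]
      _ ≤ a * 1 - a := by
          have := mul_le_mul_of_nonneg_left key1 (le_of_lt ha)
          linarith
      _ = 0 := by ring
  have expand : ∀ x ∈ A, Real.log (a * ∏ i, q i (x i)) =
      Real.log a + ∑ i, Real.log (q i (x i)) := by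
    intro x hx
    rw [Real.log_mul (ne_of_gt ha) (ne_of_gt (hppos x hx)),
      Real.log_prod (fun i _ => ne_of_gt (hqpos x hx i))]
  have key3 : a * Real.log a + ∑ x ∈ A, ∑ i, Real.log (q i (x i)) ≤ 0 := by
    have h4 : ∑ x ∈ A, Real.log (a * ∏ i, q i (x i)) =
        ∑ x ∈ A, (Real.log a + ∑ i, Real.log (q i (x i))) :=
      Finset.sum_congr rfl expand
    rw [h4, Finset.sum_add_distrib, Finset.sum_const, nsmul_eq_mul] at key2
    rw [ha_def]
    rw [ha_def] at key2
    linarith [key2]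
  have regroup : ∑ x ∈ A, ∑ i, Real.log (q i (x i)) =
      ∑ i, ∑ v, ((fib A i v).card : ℝ) * Real.log (q i v) := by
    rw [Finset.sum_comm]
    refine Finset.sum_congr rfl (fun i _ => ?_)
    have hcomp := Finset.sum_comp (s := A) (fun v : Fin (p i) => Real.log (q i v))
      (fun x : ∀ j, Fin (p j) => x i)
    rw [hcomp]
    rw [Finset.sum_subset (Finset.subset_univ (A.image fun x => x i))
      (fun v _ hv => ?_)]
    · refine Finset.sum_congr rfl (fun v _ => ?_)
      rw [nsmul_eq_mul]
      rfl
    · have hempty : A.filter (fun x => x i = v) = ∅ := by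
        rw [Finset.filter_eq_empty_iff]
        intro x hx hxv
        exact hv (Finset.mem_image.2 ⟨x, hx, hxv⟩)
      rw [hempty]
      simp
  have final : ∀ (i : Fin n) (v : Fin (p i)),
      ((fib A i v).card : ℝ) * Real.log (a / ((fib A i v).card : ℝ)) =
      - (((fib A i v).card : ℝ) * Real.log (q i v)) := by
    intro i v
    by_cases h : (fib A i v).card = 0
    · simp [h]
    · have hpos : (0:ℝ) < ((fib A i v).card : ℝ) := by
        have : 0 < (fib A i v).card := Nat.pos_of_ne_zero h
        exact_mod_cast this
      have h6 : a / ((fib A i v).card : ℝ) = (q i v)⁻¹ := by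
        rw [hq_def]
        simp only
        rw [inv_div]
      rw [h6, Real.log_inv]
      ring
  have hgoal : ∑ i, ∑ v, ((fib A i v).card : ℝ) *
      Real.log ((A.card : ℝ) / ((fib A i v).card : ℝ)) =
      - ∑ i, ∑ v, ((fib A i v).card : ℝ) * Real.log (q i v) := by
    rw [← Finset.sum_neg_distrib]
    refine Finset.sum_congr rfl (fun i _ => ?_)
    rw [← Finset.sum_neg_distrib]
    exact Finset.sum_congr rfl (fun v _ => by rw [← ha_def]; exact final i v)
  rw [hgoal, ← regroup]
  linarith [key3]

/-- Gibbs-type inequality: entropy-like sums are bounded using any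
reference "distribution" `q`. -/
lemma gibbs {m : ℕ} (c : Fin m → ℕ) (a : ℕ) (hsum : ∑ v, c v = a) (ha : 0 < a)
    (q : Fin m → ℝ) (hq : ∀ v, 0 < q v) (hq1 : ∑ v, q v ≤ 1) :
    ∑ v, (c v : ℝ) * Real.log ((a:ℝ) / (c v : ℝ)) ≤
      ∑ v, (c v : ℝ) * Real.log (1 / q v) := by
  have ha' : (0:ℝ) < (a:ℝ) := by exact_mod_cast ha
  have hterm : ∀ v, (c v : ℝ) * Real.log ((a:ℝ) / (c v : ℝ)) ≤
      (c v : ℝ) * Real.log (1 / q v) + ((a:ℝ) * q v - (c v : ℝ)) := by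
    intro v
    by_cases hc : c v = 0
    · rw [hc]
      push_cast
      simp only [zero_mul, zero_add, zero_mul, sub_zero]
      exact mul_nonneg (le_of_lt ha') (le_of_lt (hq v))
    · have hc' : (0:ℝ) < (c v : ℝ) := by
        exact_mod_cast Nat.pos_of_ne_zero hc
      have hlog : Real.log ((a:ℝ) * q v / (c v : ℝ)) ≤ (a:ℝ) * q v / (c v : ℝ) - 1 :=
        Real.log_le_sub_one_of_pos (div_pos (mul_pos ha' (hq v)) hc')
      have e1 : Real.log ((a:ℝ) * q v / (c v : ℝ)) =
          Real.log (a:ℝ) + Real.log (q v) - Real.log (c v : ℝ) := by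
        rw [Real.log_div (ne_of_gt (mul_pos ha' (hq v))) (ne_of_gt hc'),
          Real.log_mul (ne_of_gt ha') (ne_of_gt (hq v))]
      have e2 : Real.log ((a:ℝ) / (c v : ℝ)) = Real.log (a:ℝ) - Real.log (c v : ℝ) :=
        Real.log_div (ne_of_gt ha') (ne_of_gt hc')
      have e3 : Real.log (1 / q v) = - Real.log (q v) := by
        rw [one_div, Real.log_inv]
      rw [e1] at hlog
      have h2 := mul_le_mul_of_nonneg_left hlog (le_of_lt hc')
      have h3 : (c v : ℝ) * ((a:ℝ) * q v / (c v : ℝ) - 1) = (a:ℝ) * q v - (c v : ℝ) := by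
        field_simp
      rw [h3] at h2
      rw [e2, e3]
      nlinarith [h2]
  calc ∑ v, (c v : ℝ) * Real.log ((a:ℝ) / (c v : ℝ))
      ≤ ∑ v, ((c v : ℝ) * Real.log (1 / q v) + ((a:ℝ) * q v - (c v : ℝ))) :=
        Finset.sum_le_sum (fun v _ => hterm v)
    _ = ∑ v, (c v : ℝ) * Real.log (1 / q v) + ((a:ℝ) * ∑ v, q v - (a:ℝ)) := by
        rw [Finset.sum_add_distrib, Finset.sum_sub_distrib, ← Finset.mul_sum]
        congr 2
        rw [show ∑ v, ((c v : ℝ)) = ((∑ v, c v : ℕ) : ℝ) by push_cast; rfl, hsum]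
    _ ≤ ∑ v, (c v : ℝ) * Real.log (1 / q v) := by
        have := mul_le_mul_of_nonneg_left hq1 (le_of_lt ha')
        linarith

/-- entropy is at most `log m` -/
lemma ent_le_log {m : ℕ} (hm : 0 < m) (c : Fin m → ℕ) (a : ℕ)
    (hsum : ∑ v, c v = a) (ha : 0 < a) :
    ∑ v, (c v : ℝ) * Real.log ((a:ℝ) / (c v : ℝ)) ≤ (a:ℝ) * Real.log m := by
  have hm' : (0:ℝ) < (m:ℝ) := by exact_mod_cast hm
  have h := gibbs c a hsum ha (fun _ => 1/(m:ℝ)) (fun _ => by positivity)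
    (by rw [Finset.sum_const, card_univ, Fintype.card_fin, nsmul_eq_mul]
        rw [mul_one_div, div_self (ne_of_gt hm')])
  refine le_trans h (le_of_eq ?_)
  have hid : ∀ v : Fin m, (c v : ℝ) * Real.log (1 / (1/(m:ℝ))) =
      (c v : ℝ) * Real.log m := by
    intro v
    rw [one_div_one_div]
  rw [Finset.sum_congr rfl (fun v _ => hid v), ← Finset.sum_mul]
  rw [show ∑ v, ((c v : ℝ)) = ((∑ v, c v : ℕ) : ℝ) by push_cast; rfl, hsum]

/-- entropy bound under concentration -/
lemma ent_concentrated {m : ℕ} (hm : 2 ≤ m) (c : Fin m → ℕ) (a : ℕ)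
    (hsum : ∑ v, c v = a) (ha : 0 < a) (v0 : Fin m)
    (hconc : ((m:ℝ)-1) * (a:ℝ) ≤ (m:ℝ) * (c v0 : ℝ)) :
    ∑ v, (c v : ℝ) * Real.log ((a:ℝ) / (c v : ℝ)) ≤
      (a:ℝ) * (Real.log m - (1 - 2/(m:ℝ)) * Real.log ((m:ℝ)-1)) := by
  have hm' : (0:ℝ) < (m:ℝ) := by positivity
  have hm2 : (2:ℝ) ≤ (m:ℝ) := by exact_mod_cast hm
  have hm1 : (0:ℝ) < (m:ℝ) - 1 := by linarith
  have ha' : (0:ℝ) < (a:ℝ) := by exact_mod_cast ha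
  set q : Fin m → ℝ := fun v => if v = v0 then ((m:ℝ)-1)/m else 1/((m:ℝ)*((m:ℝ)-1))
    with hq_def
  have hqpos : ∀ v, 0 < q v := by
    intro v
    rw [hq_def]
    by_cases h : v = v0 <;> simp [h] <;> positivity
  have hq0 : q v0 = ((m:ℝ)-1)/m := by rw [hq_def]; simp
  have herase : ∀ v ∈ univ.erase v0, q v = 1/((m:ℝ)*((m:ℝ)-1)) := by
    intro v hv
    rw [hq_def]
    simp [Finset.ne_of_mem_erase hv]
  have hcard : (((univ.erase v0) : Finset (Fin m)).card : ℝ) = (m:ℝ) - 1 := by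
    rw [Finset.card_erase_of_mem (mem_univ v0), card_univ, Fintype.card_fin]
    have h1 : 1 ≤ m := by omega
    push_cast [h1]
    ring
  have hqsum : ∑ v, q v ≤ 1 := by
    have hsplit := Finset.add_sum_erase univ q (mem_univ v0)
    have hsum_er : ∑ v ∈ univ.erase v0, q v = ((m:ℝ)-1) * (1/((m:ℝ)*((m:ℝ)-1))) := by
      rw [Finset.sum_congr rfl herase, Finset.sum_const, nsmul_eq_mul, hcard]
    have heq : ((m:ℝ)-1)/m + ((m:ℝ)-1) * (1/((m:ℝ)*((m:ℝ)-1))) = 1 := by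
      field_simp
      ring
    rw [← hsplit, hq0, hsum_er, heq]
  have h := gibbs c a hsum ha q hqpos hqsum
  refine le_trans h ?_
  -- compute the cross entropy
  have hlogm1 : 0 ≤ Real.log ((m:ℝ)-1) := Real.log_nonneg (by linarith)
  have hl1 : Real.log (1 / q v0) = Real.log (m:ℝ) - Real.log ((m:ℝ)-1) := by
    rw [hq0, one_div_div, Real.log_div (ne_of_gt hm') (ne_of_gt hm1)]
  have hl2 : ∀ v ∈ univ.erase v0, (c v : ℝ) * Real.log (1 / q v) =
      (c v : ℝ) * (Real.log (m:ℝ) + Real.log ((m:ℝ)-1)) := by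
    intro v hv
    rw [herase v hv, one_div_one_div, Real.log_mul (ne_of_gt hm') (ne_of_gt hm1)]
  have hsum_er_c : ∑ v ∈ univ.erase v0, (c v : ℝ) = (a:ℝ) - (c v0 : ℝ) := by
    have hsplit := Finset.add_sum_erase univ (fun v => ((c v : ℕ) : ℝ)) (mem_univ v0)
    have hcast : ∑ v, ((c v : ℕ) : ℝ) = (a:ℝ) := by
      rw [show ∑ v, ((c v : ℕ) : ℝ) = ((∑ v, c v : ℕ) : ℝ) by push_cast; rfl, hsum]
    rw [hcast] at hsplit
    linarith
  have hsplit2 := Finset.add_sum_erase univ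
    (fun v => (c v : ℝ) * Real.log (1 / q v)) (mem_univ v0)
  rw [← hsplit2]
  rw [hl1, Finset.sum_congr rfl hl2, ← Finset.sum_mul, hsum_er_c]
  -- now pure algebra and the concentration inequality
  have hc0 : (a:ℝ) - 2*(c v0 : ℝ) ≤ -(a:ℝ)*(1-2/(m:ℝ)) := by
    rw [← sub_nonneg]
    have key : -(a:ℝ)*(1-2/(m:ℝ)) - ((a:ℝ) - 2*(c v0:ℝ)) =
        (2/(m:ℝ)) * ((m:ℝ)*(c v0:ℝ) - ((m:ℝ)-1)*(a:ℝ)) := by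
      field_simp
      ring
    rw [key]
    apply mul_nonneg (by positivity) (by linarith)
  have hfin := mul_le_mul_of_nonneg_right hc0 hlogm1
  nlinarith [hfin]

lemma card_filter_lt (hrn : r ≤ n) :
    ((univ : Finset (Fin n)).filter (fun j : Fin n => (j:ℕ) < r)).card = r := by
  have himg : (univ : Finset (Fin n)).filter (fun j : Fin n => (j:ℕ) < r) =
      (univ : Finset (Fin r)).image (Fin.castLE hrn) := by
    ext j
    simp only [mem_filter, mem_univ, true_and, mem_image]
    constructor
    · intro hj
      exact ⟨⟨(j:ℕ), hj⟩, rfl⟩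
    · rintro ⟨k, rfl⟩
      exact k.2
  rw [himg, Finset.card_image_of_injective _ (Fin.castLE_injective hrn),
    card_univ, Fintype.card_fin]

lemma lower_bound (hp : ∀ i, 2 ≤ p i) (hrn : r ≤ n)
    {A B : Finset (∀ i, Fin (p i))} (hAB : MaxPair r A B) :
    (∏ j ∈ univ.filter (fun j : Fin n => ¬ ((j:ℕ) < r)), p j) ^ 2 ≤
      A.card * B.card := by
  set t : ∀ j : Fin n, Finset (Fin (p j)) :=
    fun j => if (j:ℕ) < r then {(⟨0, by have := hp j; omega⟩ : Fin (p j))} else univ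
    with ht_def
  set C : Finset (∀ i, Fin (p i)) := Fintype.piFinset t with hC
  have hcard : C.card = ∏ j ∈ univ.filter (fun j : Fin n => ¬ ((j:ℕ) < r)), p j := by
    rw [hC, Fintype.card_piFinset]
    rw [← Finset.prod_filter_mul_prod_filter_not univ (fun j : Fin n => (j:ℕ) < r)]
    have h1 : ∀ j ∈ univ.filter (fun j : Fin n => (j:ℕ) < r), (t j).card = 1 := by
      intro j hj
      rw [ht_def]
      simp only
      rw [if_pos (mem_filter.1 hj).2]
      exact Finset.card_singleton _
    have h2 : ∀ j ∈ univ.filter (fun j : Fin n => ¬ ((j:ℕ) < r)), (t j).card = p j := by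
      intro j hj
      rw [ht_def]
      simp only
      rw [if_neg (mem_filter.1 hj).2, card_univ, Fintype.card_fin]
    rw [Finset.prod_congr rfl h1, Finset.prod_congr rfl h2, Finset.prod_const_one,
      one_mul]
  have hcross : CrossInt r C C := by
    intro x hx y hy
    rw [hC, Fintype.mem_piFinset] at hx hy
    have hsub : univ.filter (fun j : Fin n => (j:ℕ) < r) ⊆
        univ.filter (fun j => x j = y j) := by
      intro j hj
      have hjr := (mem_filter.1 hj).2
      have hxj := hx j
      have hyj := hy j
      rw [ht_def] at hxj hyj
      simp only at hxj hyj
      rw [if_pos hjr, Finset.mem_singleton] at hxj hyj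
      exact mem_filter.2 ⟨mem_univ _, hxj.trans hyj.symm⟩
    calc r = (univ.filter (fun j : Fin n => (j:ℕ) < r)).card := (card_filter_lt hrn).symm
      _ ≤ _ := Finset.card_le_card hsub
  have h := hAB.2 C C hcross
  rw [hcard] at h
  rw [sq]
  exact h

end Thm6

open scoped Classical in
/-- Theorem 6 (inequality): for a maximal `r`-cross-intersecting pair `(A, B)`
with `T` the set of coordinates relevant for `A` or `B`, one has
`∏_{i=1}^{r} p_i ≥ ∏_{i ∈ T} (p_i - 1)^{1 - 2/p_i}` (with real exponents;
in 0-based indexing the left product runs over the coordinates `i < r`). -/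
theorem theorem6_ineq {n : ℕ} (r : ℕ) (hr : 1 ≤ r) (hrn : r ≤ n)
    (p : Fin n → ℕ) (hp : ∀ i, 2 ≤ p i)
    (A B : Finset (∀ i, Fin (p i))) (hAB : MaxPair r A B)
    (T : Finset (Fin n))
    (hT : T = univ.filter (fun i => Relevant A i ∨ Relevant B i)) :
    ∏ i ∈ T, ((p i : ℝ) - 1) ^ (1 - 2 / (p i : ℝ)) ≤
      ∏ i ∈ univ.filter (fun i : Fin n => (i : ℕ) < r), (p i : ℝ) := by
  have haN : 0 < A.card := Thm6.card_pos_left hp hrn hAB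
  have hbN : 0 < B.card := Thm6.card_pos_right hp hrn hAB
  set a : ℝ := (A.card : ℝ) with ha_def
  set b : ℝ := (B.card : ℝ) with hb_def
  have ha : 0 < a := by rw [ha_def]; exact_mod_cast haN
  have hb : 0 < b := by rw [hb_def]; exact_mod_cast hbN
  have hppos : ∀ i, (0:ℝ) < (p i : ℝ) := fun i => by
    have := hp i; positivity
  have hp1 : ∀ i, (0:ℝ) < (p i : ℝ) - 1 := fun i => by
    have h2 : (2:ℝ) ≤ (p i : ℝ) := by exact_mod_cast hp i
    linarith
  -- deficit function
  set c : Fin n → ℝ := fun i => (1 - 2/(p i : ℝ)) * Real.log ((p i : ℝ) - 1) with hc_def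
  set D : Fin n → ℝ := fun i => if i ∈ T then c i else 0 with hD_def
  set LA : Fin n → ℝ := fun i =>
    ∑ v, ((Thm6.fib A i v).card : ℝ) * Real.log (a / ((Thm6.fib A i v).card : ℝ))
    with hLA_def
  set LB : Fin n → ℝ := fun i =>
    ∑ v, ((Thm6.fib B i v).card : ℝ) * Real.log (b / ((Thm6.fib B i v).card : ℝ))
    with hLB_def
  -- per-coordinate bounds
  have hbound : ∀ i, LA i ≤ a * (Real.log (p i : ℝ) - D i) ∧
      LB i ≤ b * (Real.log (p i : ℝ) - D i) := by
    intro i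
    by_cases hiT : i ∈ T
    · rw [hD_def]
      simp only [if_pos hiT]
      have hrel : Relevant A i ∨ Relevant B i := by
        rw [hT] at hiT
        exact (mem_filter.1 hiT).2
      by_cases h3 : 3 ≤ p i
      · obtain ⟨v0, hv1, hv2⟩ := Thm6.concentration hp hrn hAB h3 hrel
        constructor
        · have := Thm6.ent_concentrated (hp i) (fun v => (Thm6.fib A i v).card)
            A.card (Thm6.sum_fib_card A i) haN v0 hv1
          rw [hLA_def]
          simp only
          rw [hc_def]
          exact this
        · have := Thm6.ent_concentrated (hp i) (fun v => (Thm6.fib B i v).card)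
            B.card (Thm6.sum_fib_card B i) hbN v0 hv2
          rw [hLB_def]
          simp only
          rw [hc_def]
          exact this
      · have hp2 : p i = 2 := by have := hp i; omega
        have hczero : c i = 0 := by
          rw [hc_def]
          simp only [hp2]
          norm_num
        rw [hczero]
        constructor
        · have := Thm6.ent_le_log (by omega : 0 < p i)
            (fun v => (Thm6.fib A i v).card) A.card (Thm6.sum_fib_card A i) haN
          rw [hLA_def]; simp only
          calc _ ≤ a * Real.log (p i : ℝ) := this
            _ = a * (Real.log (p i : ℝ) - 0) := by ring
        · have := Thm6.ent_le_log (by omega : 0 < p i)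
            (fun v => (Thm6.fib B i v).card) B.card (Thm6.sum_fib_card B i) hbN
          rw [hLB_def]; simp only
          calc _ ≤ b * Real.log (p i : ℝ) := this
            _ = b * (Real.log (p i : ℝ) - 0) := by ring
    · rw [hD_def]
      simp only [if_neg hiT]
      constructor
      · have := Thm6.ent_le_log (by have := hp i; omega : 0 < p i)
          (fun v => (Thm6.fib A i v).card) A.card (Thm6.sum_fib_card A i) haN
        rw [hLA_def]; simp only
        calc _ ≤ a * Real.log (p i : ℝ) := this
          _ = a * (Real.log (p i : ℝ) - 0) := by ring
      · have := Thm6.ent_le_log (by have := hp i; omega : 0 < p i)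
          (fun v => (Thm6.fib B i v).card) B.card (Thm6.sum_fib_card B i) hbN
        rw [hLB_def]; simp only
        calc _ ≤ b * Real.log (p i : ℝ) := this
          _ = b * (Real.log (p i : ℝ) - 0) := by ring
  -- subadditivity
  have hsubA : a * Real.log a ≤ ∑ i, LA i := Thm6.subadd haN
  have hsubB : b * Real.log b ≤ ∑ i, LB i := Thm6.subadd hbN
  set S : ℝ := ∑ i, Real.log (p i : ℝ) with hS_def
  set DS : ℝ := ∑ i, D i with hDS_def
  have hlogA : Real.log a ≤ S - DS := by
    have h1 : ∑ i, LA i ≤ ∑ i, a * (Real.log (p i : ℝ) - D i) :=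
      Finset.sum_le_sum (fun i _ => (hbound i).1)
    have h2 : ∑ i, a * (Real.log (p i : ℝ) - D i) = a * (S - DS) := by
      rw [← Finset.mul_sum, Finset.sum_sub_distrib, hS_def, hDS_def]
    have h3 : a * Real.log a ≤ a * (S - DS) := by
      calc a * Real.log a ≤ ∑ i, LA i := hsubA
        _ ≤ _ := h1
        _ = _ := h2
    exact (mul_le_mul_iff_right₀ ha).1 h3
  have hlogB : Real.log b ≤ S - DS := by
    have h1 : ∑ i, LB i ≤ ∑ i, b * (Real.log (p i : ℝ) - D i) :=
      Finset.sum_le_sum (fun i _ => (hbound i).2)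
    have h2 : ∑ i, b * (Real.log (p i : ℝ) - D i) = b * (S - DS) := by
      rw [← Finset.mul_sum, Finset.sum_sub_distrib, hS_def, hDS_def]
    have h3 : b * Real.log b ≤ b * (S - DS) := by
      calc b * Real.log b ≤ ∑ i, LB i := hsubB
        _ ≤ _ := h1
        _ = _ := h2
    exact (mul_le_mul_iff_right₀ hb).1 h3
  -- lower bound from the trivial construction
  have hlow := Thm6.lower_bound hp hrn hAB
  have hlowR : ((∏ j ∈ univ.filter (fun j : Fin n => ¬ ((j:ℕ) < r)), p j : ℕ) : ℝ)^2
      ≤ a * b := by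
    rw [ha_def, hb_def]
    exact_mod_cast hlow
  have hprodpos : (0:ℝ) < ((∏ j ∈ univ.filter (fun j : Fin n => ¬ ((j:ℕ) < r)), p j : ℕ) : ℝ) := by
    have : 0 < ∏ j ∈ univ.filter (fun j : Fin n => ¬ ((j:ℕ) < r)), p j :=
      Finset.prod_pos (fun j _ => by have := hp j; omega)
    exact_mod_cast this
  have hloglow : 2 * ∑ j ∈ univ.filter (fun j : Fin n => ¬ ((j:ℕ) < r)),
      Real.log (p j : ℝ) ≤ Real.log a + Real.log b := by
    have h1 := Real.log_le_log (by positivity) hlowR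
    rw [Real.log_pow] at h1
    have h2 : Real.log ((∏ j ∈ univ.filter (fun j : Fin n => ¬ ((j:ℕ) < r)), p j : ℕ) : ℝ)
        = ∑ j ∈ univ.filter (fun j : Fin n => ¬ ((j:ℕ) < r)), Real.log (p j : ℝ) := by
      rw [Nat.cast_prod]
      exact Real.log_prod (fun j _ => ne_of_gt (hppos j))
    rw [h2] at h1
    rw [Real.log_mul (ne_of_gt ha) (ne_of_gt hb)] at h1
    calc 2 * ∑ j ∈ univ.filter (fun j : Fin n => ¬ ((j:ℕ) < r)), Real.log (p j : ℝ)
        = (2:ℕ) * ∑ j ∈ univ.filter (fun j : Fin n => ¬ ((j:ℕ) < r)), Real.log (p j : ℝ) := by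
          norm_num
      _ ≤ _ := h1
  -- combine
  have hsplit : S = (∑ j ∈ univ.filter (fun j : Fin n => (j:ℕ) < r), Real.log (p j : ℝ)) +
      ∑ j ∈ univ.filter (fun j : Fin n => ¬ ((j:ℕ) < r)), Real.log (p j : ℝ) := by
    rw [hS_def, ← Finset.sum_filter_add_sum_filter_not univ (fun j : Fin n => (j:ℕ) < r)]
  have hDT : DS = ∑ i ∈ T, c i := by
    rw [hDS_def, hD_def]
    rw [Finset.sum_ite_mem univ T c, Finset.univ_inter]
  have hkey : ∑ i ∈ T, c i ≤ ∑ j ∈ univ.filter (fun j : Fin n => (j:ℕ) < r),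
      Real.log (p j : ℝ) := by
    have := add_le_add hlogA hlogB
    rw [← hDT]
    linarith [hloglow, hsplit]
  -- exponentiate
  have hLHS : ∏ i ∈ T, ((p i : ℝ) - 1) ^ (1 - 2 / (p i : ℝ)) =
      Real.exp (∑ i ∈ T, c i) := by
    rw [Real.exp_sum]
    refine Finset.prod_congr rfl (fun i _ => ?_)
    rw [Real.rpow_def_of_pos (hp1 i), hc_def]
    simp only
    rw [mul_comm]
  have hRHS : ∏ i ∈ univ.filter (fun i : Fin n => (i:ℕ) < r), (p i : ℝ) =
      Real.exp (∑ j ∈ univ.filter (fun j : Fin n => (j:ℕ) < r), Real.log (p j : ℝ)) := by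
    rw [Real.exp_sum]
    exact Finset.prod_congr rfl (fun i _ => (Real.exp_log (hppos i)).symm)
  rw [hLHS, hRHS]
  exact Real.exp_le_exp.2 hkey
end
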